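/- arXiv:2104.06280 — 9 statements merged into one kernel-verified Lean document; each statement's English description precedes it below -/
import Mathlib

section
/- For any simple graph G = (M, E) on a finite item set M and any number of agents n with Δ(G) ≥ n (where Δ(G) is the maximum degree of G), there exist additive valuation functions v_1, ..., v_n : M → ℝ≥0 (in fact, taking only the values 0 and 1) such that the resulting problem instance admits no feasible EF1 allocation. -/
open Finset

/-- `A` is a (complete) allocation of all items among `n` agents:
the bundles are pairwise disjoint and together cover all items. -/
def IsAllocation {M : Type*} [Fintype M] [DecidableEq M] {n : ℕ}
    (A : Fin n → Finset M) : Prop :=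
  (∀ i i' : Fin n, i ≠ i' → Disjoint (A i) (A i')) ∧
    Finset.univ.biUnion A = (Finset.univ : Finset M)

/-- An allocation is feasible if every bundle is an independent set of the
conflict graph `G`, i.e., no bundle contains two adjacent items. -/
def FeasibleAlloc {M : Type*} {n : ℕ} (G : SimpleGraph M)
    (A : Fin n → Finset M) : Prop :=
  ∀ i : Fin n, ∀ j ∈ A i, ∀ j' ∈ A i, ¬ G.Adj j j'

/-- Envy-freeness up to one good: every agent `i` values its own bundle at
least as much as any other agent's bundle after removing the item of that
bundle that `i` values most. -/
def EF1 {M : Type*} {n : ℕ} (v : Fin n → M → ℝ) (A : Fin n → Finset M) : Prop :=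
  ∀ i i' : Fin n, ∀ h : (A i').Nonempty,
    ∑ j ∈ A i, v i j ≥ (∑ j ∈ A i', v i j) - (A i').sup' h (v i)

/-- For any simple graph `G` on a finite item set and any number `n` of agents
with `Δ(G) ≥ n`, there are 0/1-valued additive valuations for the `n` agents
such that the resulting instance admits no feasible EF1 allocation. -/
theorem no_ef1_of_maxDegree_ge {M : Type*} [Fintype M] [DecidableEq M]
    (G : SimpleGraph M) [DecidableRel G.Adj] (n : ℕ) (hn : 0 < n)
    (hΔ : n ≤ G.maxDegree) :
    ∃ v : Fin n → M → ℝ, (∀ i j, v i j = 0 ∨ v i j = 1) ∧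
      ∀ A : Fin n → Finset M, IsAllocation A → FeasibleAlloc G A → ¬ EF1 v A := by
  classical
  have hM : Nonempty M := by
    by_contra h
    rw [not_nonempty_iff] at h
    have h0 : G.maxDegree = 0 := by
      simp [SimpleGraph.maxDegree, Finset.univ_eq_empty]
    omega
  obtain ⟨x, hx⟩ := G.exists_maximal_degree_vertex
  set S := G.neighborFinset x with hS
  have hScard : n ≤ S.card := by
    rw [hS, SimpleGraph.card_neighborFinset_eq_degree]
    omega
  refine ⟨fun _ j => if j ∈ S then 1 else 0, fun i j => by by_cases h : j ∈ S <;> simp [h], ?_⟩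
  intro A hA hF hEF1
  obtain ⟨hdisj, hcover⟩ := hA
  have hx' : x ∈ Finset.univ.biUnion A := by rw [hcover]; exact mem_univ x
  obtain ⟨i0, -, hxi0⟩ := Finset.mem_biUnion.mp hx'
  have hi0S : A i0 ∩ S = ∅ := by
    by_contra h
    obtain ⟨j, hj⟩ := Finset.nonempty_iff_ne_empty.mpr h
    exact hF i0 x hxi0 j (mem_inter.mp hj).1
      ((SimpleGraph.mem_neighborFinset _ _ _).mp (mem_inter.mp hj).2)
  have hsub : S ⊆ (Finset.univ.erase i0).biUnion (fun i => A i ∩ S) := by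
    intro j hj
    have hj2 : j ∈ Finset.univ.biUnion A := by rw [hcover]; exact mem_univ j
    obtain ⟨i, -, hji⟩ := Finset.mem_biUnion.mp hj2
    have hne : i ≠ i0 := by
      rintro rfl
      exact hF i x hxi0 j hji ((SimpleGraph.mem_neighborFinset _ _ _).mp hj)
    exact mem_biUnion.mpr ⟨i, mem_erase.mpr ⟨hne, mem_univ i⟩, mem_inter.mpr ⟨hji, hj⟩⟩
  have hsum : n ≤ ∑ i ∈ Finset.univ.erase i0, (A i ∩ S).card :=
    le_trans (le_trans hScard (card_le_card hsub)) card_biUnion_le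
  have hex : ∃ i' ∈ Finset.univ.erase i0, 2 ≤ (A i' ∩ S).card := by
    by_contra h
    push_neg at h
    have hle : ∑ i ∈ Finset.univ.erase i0, (A i ∩ S).card ≤
        ∑ _i ∈ Finset.univ.erase i0, 1 :=
      Finset.sum_le_sum fun i hi => by have := h i hi; omega
    rw [Finset.sum_const, smul_eq_mul, mul_one,
      card_erase_of_mem (mem_univ i0), card_univ, Fintype.card_fin] at hle
    omega
  obtain ⟨i', hi'erase, hi'2⟩ := hex
  have hneAS : (A i' ∩ S).Nonempty := Finset.card_pos.mp (by omega)
  have hne : (A i').Nonempty := by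
    obtain ⟨j, hj⟩ := hneAS
    exact ⟨j, (mem_inter.mp hj).1⟩
  have hEF := hEF1 i0 i' hne
  have hL : ∑ j ∈ A i0, (if j ∈ S then (1 : ℝ) else 0) = 0 := by
    rw [Finset.sum_ite_mem, hi0S, Finset.sum_empty]
  have hR : ∑ j ∈ A i', (if j ∈ S then (1 : ℝ) else 0) = ((A i' ∩ S).card : ℝ) := by
    rw [Finset.sum_ite_mem, Finset.sum_const, nsmul_eq_mul, mul_one]
  have hsup : (A i').sup' hne (fun j => if j ∈ S then (1 : ℝ) else 0) ≤ 1 :=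
    Finset.sup'_le _ _ fun j _ => by by_cases h : j ∈ S <;> simp [h]
  have h2 : (2 : ℝ) ≤ ((A i' ∩ S).card : ℝ) := by exact_mod_cast hi'2
  simp only [ge_iff_le] at hEF
  rw [hL, hR] at hEF
  linarith
end

section
/- For any simple graph G = (M, E) in which every connected component has at most n vertices, every problem instance with n agents, item set M, additive valuations, and conflict graph G admits a feasible EF1 allocation. -/
open Finset

section Aux

variable {M : Type*} [Fintype M] [DecidableEq M] {n : ℕ}

/-- Any EF1 allocation can be permuted (as a family of bundles) so that the
resulting EF1 allocation has an unenvied agent in every nonempty set of agents. -/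
private lemma ef1_aux_perm (v : Fin n → M → ℝ) (B : Fin n → Finset M) (hB : EF1 v B) :
    ∃ σ : Fin n → Fin n, Function.Bijective σ ∧ EF1 v (fun i => B (σ i)) ∧
      ∀ T : Finset (Fin n), T.Nonempty →
        ∃ i ∈ T, ∀ j ∈ T, ∑ x ∈ B (σ i), v j x ≤ ∑ x ∈ B (σ j), v j x := by
  classical
  set F : (Fin n → Fin n) → ℝ := fun σ => ∑ i, ∑ x ∈ B (σ i), v i x with hF
  set D : Finset (Fin n → Fin n) :=
    univ.filter (fun σ => Function.Bijective σ ∧ EF1 v (fun i => B (σ i))) with hD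
  have hid : (id : Fin n → Fin n) ∈ D := by
    refine mem_filter.mpr ⟨mem_univ _, Function.bijective_id, ?_⟩
    exact hB
  obtain ⟨σ, hσD, hσmax⟩ := D.exists_max_image F ⟨id, hid⟩
  obtain ⟨-, hσbij, hσEF1⟩ := mem_filter.mp hσD
  refine ⟨σ, hσbij, hσEF1, ?_⟩
  by_contra hcon
  push_neg at hcon
  obtain ⟨T, hTne, hT⟩ := hcon
  -- for each i ∈ T choose an agent in T envying i
  choose f hfT hf using hT
  set g : Fin n → Fin n := fun i => if h : i ∈ T then f i h else i with hg
  have hg1 : ∀ i ∈ T, g i ∈ T := by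
    intro i hi; simp only [hg, dif_pos hi]; exact hfT i hi
  have hg2 : ∀ i ∈ T, ∑ x ∈ B (σ (g i)), v (g i) x < ∑ x ∈ B (σ i), v (g i) x := by
    intro i hi; simp only [hg, dif_pos hi]; exact hf i hi
  obtain ⟨x0, hx0⟩ := hTne
  have hiter : ∀ k, g^[k] x0 ∈ T := by
    intro k
    induction k with
    | zero => simpa using hx0
    | succ k ihk => rw [Function.iterate_succ_apply']; exact hg1 _ ihk
  obtain ⟨a, b, hab, heq⟩ := Finite.exists_ne_map_eq_of_infinite (fun k : ℕ => g^[k] x0)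
  -- wlog a < b
  rcases hab.lt_or_gt with hlt | hlt
  case _ => ?_
  all_goals
    first
      | (set y := g^[a] x0 with hy
         set m := b - a with hm
         have hm0 : 0 < m := Nat.sub_pos_of_lt hlt
         have hper : g^[m] y = y := by
           rw [hy, ← Function.iterate_add_apply, hm, Nat.sub_add_cancel hlt.le]
           exact heq.symm
         skip)
      | (set y := g^[b] x0 with hy
         set m := a - b with hm
         have hm0 : 0 < m := Nat.sub_pos_of_lt hlt
         have hper : g^[m] y = y := by
           rw [hy, ← Function.iterate_add_apply, hm, Nat.sub_add_cancel hlt.le]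
           exact heq
         skip)
  all_goals {
  have hyT : y ∈ T := hiter _
  set O : Fin n → Prop := fun z => ∃ k, g^[k] y = z with hO
  have hyO : O y := ⟨0, rfl⟩
  have hOT : ∀ z, O z → z ∈ T := by
    rintro z ⟨k, rfl⟩
    rw [hy, ← Function.iterate_add_apply]; exact hiter _
  have hOg : ∀ z, O z → O (g z) := by
    rintro z ⟨k, rfl⟩; exact ⟨k + 1, by rw [Function.iterate_succ_apply']⟩
  have hOper : ∀ z, O z → g^[m] z = z := by
    rintro z ⟨k, rfl⟩
    rw [← Function.iterate_add_apply, Nat.add_comm, Function.iterate_add_apply, hper]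
  have hOiter : ∀ (j : ℕ) z, O z → O (g^[j] z) := by
    intro j
    induction j with
    | zero => intro z hz; simpa using hz
    | succ j ihj => intro z hz; rw [Function.iterate_succ_apply']; exact hOg _ (ihj z hz)
  have hm1 : m - 1 + 1 = m := by omega
  set c : Fin n → Fin n := fun i => if O i then g^[m - 1] i else i with hc
  have hcO : ∀ z, O z → O (c z) := by
    intro z hz; simp only [hc, if_pos hz]; exact hOiter _ _ hz
  have hgc : ∀ z, O z → g (c z) = z := by
    intro z hz
    simp only [hc, if_pos hz]
    rw [← Function.iterate_succ_apply' g (m - 1) z, Nat.succ_eq_add_one, hm1]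
    exact hOper z hz
  set c' : Fin n → Fin n := fun i => if O i then g i else i with hc'
  have hcbij : Function.Bijective c := by
    apply Function.bijective_iff_has_inverse.mpr
    refine ⟨c', ?_, ?_⟩
    · intro i
      by_cases hi : O i
      · have : O (c i) := hcO i hi
        simp only [hc', if_pos this]
        exact hgc i hi
      · simp only [hc, hc', if_neg hi]
    · intro i
      by_cases hi : O i
      · have hgi : O (g i) := hOg i hi
        simp only [hc', if_pos hi, hc, if_pos hgi]
        rw [← Function.iterate_succ_apply g (m - 1) i, Nat.succ_eq_add_one, hm1]
        exact hOper i hi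
      · simp only [hc, hc', if_neg hi]
  have hkey : ∀ i, ∑ x ∈ B (σ i), v i x ≤ ∑ x ∈ B (σ (c i)), v i x := by
    intro i
    by_cases hi : O i
    · have h1 := hg2 (c i) (hOT _ (hcO i hi))
      rw [hgc i hi] at h1
      exact h1.le
    · simp only [hc, if_neg hi]; exact le_refl _
  have hkeys : ∑ x ∈ B (σ y), v y x < ∑ x ∈ B (σ (c y)), v y x := by
    have h1 := hg2 (c y) (hOT _ (hcO y hyO))
    rwa [hgc y hyO] at h1
  have hEF1' : EF1 v (fun i => B (σ (c i))) := by
    intro i i' h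
    have h2 := hσEF1 i (c i') h
    exact le_trans h2 (by linarith [hkey i])
  have hmem : (fun i => σ (c i)) ∈ D := by
    refine mem_filter.mpr ⟨mem_univ _, hσbij.comp hcbij, hEF1'⟩
  have hle := hσmax _ hmem
  have hlt2 : F σ < F (fun i => σ (c i)) := by
    apply Finset.sum_lt_sum
    · intro i _; exact hkey i
    · exact ⟨y, mem_univ y, hkeys⟩
  exact absurd hle (not_le.mpr hlt2) }

/-- Greedily allocate one component `C` (with `|C| ≤ |S|`) among agents,
one item per agent, following a "source-first" order for the envy relation of
the existing allocation `B`. -/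
private lemma ef1_aux_step (v : Fin n → M → ℝ) (B : Fin n → Finset M) (C : Finset M) :
    ∀ S : Finset (Fin n), C.card ≤ S.card →
      (∀ T ⊆ S, T.Nonempty → ∃ i ∈ T, ∀ j ∈ T,
        ∑ x ∈ B i, v j x ≤ ∑ x ∈ B j, v j x) →
      ∃ g : Fin n → Finset M,
        (∀ i, g i ⊆ C) ∧ (∀ i, (g i).card ≤ 1) ∧
        (∀ i ∉ S, g i = ∅) ∧
        (∀ i i', i ≠ i' → Disjoint (g i) (g i')) ∧
        univ.biUnion g = C ∧
        (∀ i ∈ S, ∀ i' y, g i' = {y} →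
          (∃ x, g i = {x} ∧ v i y ≤ v i x) ∨
            ∑ x ∈ B i', v i x ≤ ∑ x ∈ B i, v i x) := by
  classical
  induction C using Finset.strongInduction with
  | _ C ih =>
    intro S hcard hsrc
    rcases C.eq_empty_or_nonempty with rfl | hC
    · refine ⟨fun _ => ∅, by simp, by simp, by simp, by simp, by ext a; simp, ?_⟩
      intro i _ i' y h
      exact absurd h.symm (Finset.singleton_ne_empty y)
    · have hSne : S.Nonempty := card_pos.mp (lt_of_lt_of_le hC.card_pos hcard)
      obtain ⟨i0, hi0S, hi0⟩ := hsrc S Finset.Subset.rfl hSne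
      obtain ⟨x0, hx0C, hx0⟩ := C.exists_max_image (v i0) hC
      have hssub : C.erase x0 ⊂ C := Finset.erase_ssubset hx0C
      have hcard' : (C.erase x0).card ≤ (S.erase i0).card := by
        rw [Finset.card_erase_of_mem hx0C, Finset.card_erase_of_mem hi0S]
        exact Nat.sub_le_sub_right hcard 1
      have hsrc' : ∀ T ⊆ S.erase i0, T.Nonempty → ∃ i ∈ T, ∀ j ∈ T,
          ∑ x ∈ B i, v j x ≤ ∑ x ∈ B j, v j x := by
        intro T hT hTne
        exact hsrc T (hT.trans (Finset.erase_subset _ _)) hTne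
      obtain ⟨g', hg'C, hg'1, hg'S, hg'disj, hg'union, hg'P⟩ :=
        ih (C.erase x0) hssub (S.erase i0) hcard' hsrc'
      have hg'i0 : g' i0 = ∅ := hg'S i0 (Finset.notMem_erase i0 S)
      set g : Fin n → Finset M := fun i => if i = i0 then {x0} else g' i with hgdef
      have hgsub : ∀ i, g i ⊆ C := by
        intro i
        by_cases hi : i = i0
        · simp only [hgdef, if_pos hi]
          exact Finset.singleton_subset_iff.mpr hx0C
        · simp only [hgdef, if_neg hi]
          exact (hg'C i).trans (Finset.erase_subset _ _)
      refine ⟨g, hgsub, ?_, ?_, ?_, ?_, ?_⟩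
      · intro i
        by_cases hi : i = i0
        · simp [hgdef, hi]
        · simp only [hgdef, if_neg hi]; exact hg'1 i
      · intro i hiS
        have hi : i ≠ i0 := fun h => hiS (h ▸ hi0S)
        simp only [hgdef, if_neg hi]
        exact hg'S i (fun h => hiS (Finset.mem_of_mem_erase h))
      · intro i i' hne
        by_cases hi : i = i0
        · subst hi
          have hi' : i' ≠ i := fun h => hne h.symm
          simp only [hgdef, if_pos rfl, if_neg hi']
          refine Finset.disjoint_singleton_left.mpr ?_
          intro hmem
          exact Finset.notMem_erase x0 C (hg'C i' hmem)
        · by_cases hi' : i' = i0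
          · subst hi'
            simp only [hgdef, if_neg hi, if_pos rfl]
            refine Finset.disjoint_singleton_right.mpr ?_
            intro hmem
            exact Finset.notMem_erase x0 C (hg'C i hmem)
          · simp only [hgdef, if_neg hi, if_neg hi']
            exact hg'disj i i' hne
      · ext a
        simp only [mem_biUnion, mem_univ, true_and]
        constructor
        · rintro ⟨i, hai⟩
          by_cases hi : i = i0
          · rw [hgdef] at hai; simp only [if_pos hi] at hai
            rwa [Finset.mem_singleton.mp hai]
          · rw [hgdef] at hai; simp only [if_neg hi] at hai
            exact Finset.mem_of_mem_erase (hg'C i hai)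
        · intro ha
          by_cases hax : a = x0
          · exact ⟨i0, by simp [hgdef, hax]⟩
          · have : a ∈ C.erase x0 := Finset.mem_erase.mpr ⟨hax, ha⟩
            rw [← hg'union] at this
            obtain ⟨i, -, hai⟩ := mem_biUnion.mp this
            have hi : i ≠ i0 := by
              intro h; rw [h, hg'i0] at hai; exact absurd hai (Finset.notMem_empty a)
            exact ⟨i, by simp only [hgdef, if_neg hi]; exact hai⟩
      · intro i hiS i' y hgy
        have hyg : y ∈ g i' := by rw [hgy]; exact Finset.mem_singleton_self y
        by_cases hi : i = i0
        · have hyC : y ∈ C := hgsub i' hyg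
          exact Or.inl ⟨x0, by simp [hgdef, hi], by rw [hi]; exact hx0 y hyC⟩
        · by_cases hi' : i' = i0
          · refine Or.inr ?_
            rw [hi']
            exact hi0 i hiS
          · rw [hgdef] at hgy; simp only [if_neg hi'] at hgy
            have hiS' : i ∈ S.erase i0 := Finset.mem_erase.mpr ⟨hi, hiS⟩
            rcases hg'P i hiS' i' y hgy with ⟨x, hx, hxy⟩ | hle
            · exact Or.inl ⟨x, by simp only [hgdef, if_neg hi]; exact hx, hxy⟩
            · exact Or.inr hle

/-- Main induction: every reachability-closed finset of items can be fully
allocated, EF1, with no two distinct items of a bundle in the same component. -/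
private lemma ef1_aux_main (G : SimpleGraph M)
    (hCC : ∀ j : M, {w : M | G.Reachable j w}.ncard ≤ n)
    (v : Fin n → M → ℝ) (hv : ∀ i j, 0 ≤ v i j) :
    ∀ s : Finset M, (∀ j ∈ s, ∀ w, G.Reachable j w → w ∈ s) →
    ∃ A : Fin n → Finset M,
      (∀ i i', i ≠ i' → Disjoint (A i) (A i')) ∧
      univ.biUnion A = s ∧
      (∀ i, ∀ j ∈ A i, ∀ j' ∈ A i, j ≠ j' → ¬ G.Reachable j j') ∧
      EF1 v A := by
  classical
  intro s
  induction s using Finset.strongInduction with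
  | _ s ih =>
    intro hs
    rcases s.eq_empty_or_nonempty with rfl | ⟨j0, hj0⟩
    · refine ⟨fun _ => ∅, fun i i' _ => Finset.disjoint_empty_left ∅, by ext a; simp, ?_, ?_⟩
      · intro i j hj
        exact absurd hj (Finset.notMem_empty j)
      · intro i i' h
        exact absurd h (by simp)
    · set C : Finset M := s.filter (fun w => G.Reachable j0 w) with hCdef
      have hj0C : j0 ∈ C := by
        simp only [hCdef, mem_filter]
        exact ⟨hj0, SimpleGraph.Reachable.refl j0⟩
      have hCsub : C ⊆ s := Finset.filter_subset _ s
      have hCcard : C.card ≤ n := by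
        have h1 : (↑C : Set M) ⊆ {w | G.Reachable j0 w} := by
          intro w hw
          exact (mem_filter.mp hw).2
        calc C.card = (↑C : Set M).ncard := (Set.ncard_coe_finset C).symm
          _ ≤ {w | G.Reachable j0 w}.ncard := Set.ncard_le_ncard h1 (Set.toFinite _)
          _ ≤ n := hCC j0
      have hssub : s \ C ⊂ s := Finset.sdiff_ssubset hCsub ⟨j0, hj0C⟩
      have hs' : ∀ j ∈ s \ C, ∀ w, G.Reachable j w → w ∈ s \ C := by
        intro j hj w hr
        obtain ⟨hjs, hjC⟩ := Finset.mem_sdiff.mp hj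
        refine Finset.mem_sdiff.mpr ⟨hs j hjs w hr, ?_⟩
        intro hwC
        have h2 : G.Reachable j0 w := (mem_filter.mp hwC).2
        exact hjC (mem_filter.mpr ⟨hjs, h2.trans hr.symm⟩)
      obtain ⟨A, hAdisj, hAunion, hAreach, hAEF1⟩ := ih (s \ C) hssub hs'
      obtain ⟨σ, hσbij, hBEF1, hsrc⟩ := ef1_aux_perm v A hAEF1
      have hBsub : ∀ i, A (σ i) ⊆ s \ C := by
        intro i
        rw [← hAunion]
        exact Finset.subset_biUnion_of_mem A (mem_univ (σ i))
      have hcardn : C.card ≤ (univ : Finset (Fin n)).card := by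
        rwa [card_univ, Fintype.card_fin]
      obtain ⟨g, hgC, hg1, -, hgdisj, hgunion, hgP⟩ :=
        ef1_aux_step v (fun i => A (σ i)) C univ hcardn
          (fun T _ hT => hsrc T hT)
      set A'' : Fin n → Finset M := fun i => A (σ i) ∪ g i with hA''
      have hdisjBg : ∀ i i', Disjoint (A (σ i)) (g i') := by
        intro i i'
        exact Finset.disjoint_of_subset_left (hBsub i)
          (Finset.disjoint_of_subset_right (hgC i') Finset.sdiff_disjoint)
      refine ⟨A'', ?_, ?_, ?_, ?_⟩
      · intro i i' hne
        have hσne : σ i ≠ σ i' := fun h => hne (hσbij.injective h)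
        simp only [hA'']
        rw [Finset.disjoint_union_left]
        constructor
        · rw [Finset.disjoint_union_right]
          exact ⟨hAdisj (σ i) (σ i') hσne, hdisjBg i i'⟩
        · rw [Finset.disjoint_union_right]
          exact ⟨(hdisjBg i' i).symm, hgdisj i i' hne⟩
      · ext a
        simp only [hA'', mem_biUnion, mem_univ, true_and, Finset.mem_union]
        constructor
        · rintro ⟨i, hai | hai⟩
          · exact (Finset.mem_sdiff.mp (hBsub i hai)).1
          · exact hCsub (hgC i hai)
        · intro ha
          by_cases haC : a ∈ C
          · rw [← hgunion] at haC
            obtain ⟨i, -, hai⟩ := mem_biUnion.mp haC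
            exact ⟨i, Or.inr hai⟩
          · have : a ∈ s \ C := Finset.mem_sdiff.mpr ⟨ha, haC⟩
            rw [← hAunion] at this
            obtain ⟨i', -, hai⟩ := mem_biUnion.mp this
            obtain ⟨i, rfl⟩ := hσbij.surjective i'
            exact ⟨i, Or.inl hai⟩
      · intro i j hj j' hj' hne hr
        simp only [hA'', Finset.mem_union] at hj hj'
        rcases hj with hj | hj <;> rcases hj' with hj' | hj'
        · exact hAreach (σ i) j hj j' hj' hne hr
        · have hjC : j ∉ C := (Finset.mem_sdiff.mp (hBsub i hj)).2
          have hjs : j ∈ s := (Finset.mem_sdiff.mp (hBsub i hj)).1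
          have hj'C : j' ∈ C := hgC i hj'
          have h2 : G.Reachable j0 j' := (mem_filter.mp hj'C).2
          exact hjC (mem_filter.mpr ⟨hjs, h2.trans hr.symm⟩)
        · have hj'C : j' ∉ C := (Finset.mem_sdiff.mp (hBsub i hj')).2
          have hj's : j' ∈ s := (Finset.mem_sdiff.mp (hBsub i hj')).1
          have hjC : j ∈ C := hgC i hj
          have h2 : G.Reachable j0 j := (mem_filter.mp hjC).2
          exact hj'C (mem_filter.mpr ⟨hj's, h2.trans hr⟩)
        · exact absurd (Finset.one_lt_card.mpr ⟨j, hj, j', hj', hne⟩)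
            (not_lt.mpr (hg1 i))
      · -- EF1
        intro i i' h
        have hsum : ∀ k, ∑ x ∈ A'' k, v i x = ∑ x ∈ A (σ k), v i x + ∑ x ∈ g k, v i x := by
          intro k
          simp only [hA'']
          exact Finset.sum_union (hdisjBg k k)
        have hgnn : ∀ k, (0:ℝ) ≤ ∑ x ∈ g k, v i x :=
          fun k => Finset.sum_nonneg (fun x _ => hv i x)
        rcases (g i').eq_empty_or_nonempty with hgi' | hgi'
        · have hA''i' : A'' i' = A (σ i') := by
            simp only [hA'', hgi', Finset.union_empty]
          have h' : (A (σ i')).Nonempty := hA''i' ▸ h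
          have hold := hBEF1 i i' h'
          simp only [ge_iff_le] at hold ⊢
          have hsupeq : (A'' i').sup' h (v i) = (A (σ i')).sup' h' (v i) := by
            congr 1 <;> rw [hA''i']
          rw [hsum i, hsupeq]
          have hsumi' : ∑ x ∈ A'' i', v i x = ∑ x ∈ A (σ i'), v i x := by rw [hA''i']
          rw [hsumi']
          linarith [hgnn i]
        · obtain ⟨y, hy⟩ := Finset.card_eq_one.mp (le_antisymm (hg1 i') hgi'.card_pos)
          have hyA'' : y ∈ A'' i' := by
            simp only [hA'', Finset.mem_union]
            exact Or.inr (hy ▸ Finset.mem_singleton_self y)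
          have hsupy : v i y ≤ (A'' i').sup' h (v i) := Finset.le_sup' (v i) hyA''
          have hsumgi' : ∑ x ∈ g i', v i x = v i y := by rw [hy, Finset.sum_singleton]
          rcases hgP i (mem_univ i) i' y hy with ⟨x, hgx, hxy⟩ | hle
          · have hsumgi : ∑ x' ∈ g i, v i x' = v i x := by rw [hgx, Finset.sum_singleton]
            rcases (A (σ i')).eq_empty_or_nonempty with hBi' | hBi'
            · have hsumi' : ∑ x ∈ A'' i', v i x = v i y := by
                rw [hsum i', hBi', hsumgi']
                simp
              simp only [ge_iff_le]
              rw [hsum i, hsumgi, hsumi']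
              have h1 : (0:ℝ) ≤ ∑ x ∈ A (σ i), v i x :=
                Finset.sum_nonneg (fun x _ => hv i x)
              linarith [hv i x]
            · have hold := hBEF1 i i' hBi'
              simp only [ge_iff_le] at hold ⊢
              have hsupmono : (A (σ i')).sup' hBi' (v i) ≤ (A'' i').sup' h (v i) := by
                have hsub : A (σ i') ⊆ A'' i' := by
                  simp only [hA'']; exact Finset.subset_union_left
                exact Finset.sup'_mono (v i) hsub hBi'
              rw [hsum i, hsum i', hsumgi, hsumgi']
              linarith
          · simp only [ge_iff_le] at hle ⊢
            rw [hsum i, hsum i', hsumgi']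
            linarith [hgnn i]

end Aux

/-- If every connected component of the conflict graph `G` has at most `n`
vertices, then every instance with `n` agents, additive (nonnegative)
valuations and conflict graph `G` admits a feasible EF1 allocation. -/
theorem ef1_of_components_le {M : Type*} [Fintype M] [DecidableEq M]
    (G : SimpleGraph M) (n : ℕ)
    (hCC : ∀ j : M, {w : M | G.Reachable j w}.ncard ≤ n)
    (v : Fin n → M → ℝ) (hv : ∀ i j, 0 ≤ v i j) :
    ∃ A : Fin n → Finset M, IsAllocation A ∧ FeasibleAlloc G A ∧ EF1 v A := by
  classical
  obtain ⟨A, hdisj, hunion, hreach, hEF1⟩ :=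
    ef1_aux_main G hCC v hv univ (fun j _ w _ => mem_univ w)
  refine ⟨A, ⟨hdisj, hunion⟩, ?_, hEF1⟩
  intro i j hj j' hj' hadj
  exact hreach i j hj j' hj' hadj.ne hadj.reachable
end

section
/- Let G be the complete bipartite graph K_{3,3} on items {1,2,3,4,5,6} with parts {1,2,3} and {4,5,6}, and let there be 4 agents, each of whom values each of the items 1, 2, 3 at 2 and each of the items 4, 5, 6 at 3. Then this problem instance admits no feasible EF1 allocation (even though Δ(G) = 3 < 4 = n). -/
open Finset

/-- The complete bipartite graph `K_{3,3}` on items `{0,…,5}`, with parts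
`{0,1,2}` and `{3,4,5}`. -/
def K33 : SimpleGraph (Fin 6) where
  Adj j k := decide (j.val < 3) ≠ decide (k.val < 3)
  symm := ⟨fun _ _ h => h.symm⟩
  loopless := ⟨fun _ h => h rfl⟩

instance : DecidableRel K33.Adj :=
  fun j k => inferInstanceAs (Decidable (decide (j.val < 3) ≠ decide (k.val < 3)))


def wNat : Fin 6 → ℕ := fun j => if j.val < 3 then 2 else 3

def Bad (f : Fin 6 → Fin 4) : Prop :=
  (∀ j j' : Fin 6, f j = f j' → ¬ K33.Adj j j') →
  ∃ i i' : Fin 4, ∃ h : (Finset.univ.filter (f · = i')).Nonempty,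
    (∑ j ∈ Finset.univ.filter (f · = i), wNat j)
      + (Finset.univ.filter (f · = i')).sup' h wNat
      < ∑ j ∈ Finset.univ.filter (f · = i'), wNat j

set_option maxRecDepth 10000 in
set_option maxHeartbeats 4000000 in
lemma all_bad' : ∀ a b c d e g : Fin 4, Bad ![a, b, c, d, e, g] := by
  unfold Bad; decide

lemma all_bad : ∀ f : Fin 6 → Fin 4, Bad f := by
  intro f
  have : f = ![f 0, f 1, f 2, f 3, f 4, f 5] := by
    funext j; fin_cases j <;> rfl
  rw [this]
  exact all_bad' _ _ _ _ _ _

/-- With 4 agents, each valuing items `0,1,2` at `2` and items `3,4,5` at `3`,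
the instance with conflict graph `K_{3,3}` admits no feasible EF1 allocation,
even though `Δ(K_{3,3}) = 3 < 4 = n`. -/
theorem K33_no_ef1 :
    K33.maxDegree = 3 ∧
    ∀ A : Fin 4 → Finset (Fin 6), IsAllocation A → FeasibleAlloc K33 A →
      ¬ EF1 (fun (_ : Fin 4) (j : Fin 6) => if j.val < 3 then (2 : ℝ) else 3) A := by
  constructor
  · rfl
  intro A hAlloc hFeas hEF1
  obtain ⟨hdisj, hcover⟩ := hAlloc
  have hex : ∀ j : Fin 6, ∃ i, j ∈ A i := by
    intro j
    have : j ∈ Finset.univ.biUnion A := by rw [hcover]; exact Finset.mem_univ j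
    simpa using this
  choose f hf using hex
  have hAeq : ∀ i, A i = Finset.univ.filter (f · = i) := by
    intro i
    ext j
    simp only [Finset.mem_filter, Finset.mem_univ, true_and]
    constructor
    · intro hj
      by_contra hne
      exact Finset.disjoint_left.1 (hdisj (f j) i hne) (hf j) hj
    · rintro rfl; exact hf j
  have hfeas' : ∀ j j' : Fin 6, f j = f j' → ¬ K33.Adj j j' := by
    intro j j' hjj'
    exact hFeas (f j) j (hf j) j' (hjj' ▸ hf j')
  obtain ⟨i, i', h, hlt⟩ := all_bad f hfeas'
  have hA' : Finset.univ.filter (f · = i') = A i' := (hAeq i').symm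
  have h' : (A i').Nonempty := hA' ▸ h
  have hsupeq : (Finset.univ.filter (f · = i')).sup' h wNat = (A i').sup' h' wNat :=
    Finset.sup'_congr h hA' (fun _ _ => rfl)
  have hlt' : (∑ j ∈ A i, wNat j) + (A i').sup' h' wNat < ∑ j ∈ A i', wNat j := by
    rw [hsupeq] at hlt
    rwa [← hAeq i, ← hAeq i'] at hlt
  have hE := hEF1 i i' h'
  have hv : ∀ (i₀ : Fin 4) (j : Fin 6),
      (fun (_ : Fin 4) (j : Fin 6) => if j.val < 3 then (2 : ℝ) else 3) i₀ j
        = (wNat j : ℝ) := by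
    intro i₀ j
    simp only [wNat]
    split_ifs <;> norm_num
  have hsum : ∀ s : Finset (Fin 6),
      (∑ j ∈ s, (fun (_ : Fin 4) (j : Fin 6) => if j.val < 3 then (2 : ℝ) else 3) i j)
        = ((∑ j ∈ s, wNat j : ℕ) : ℝ) := by
    intro s
    rw [Nat.cast_sum]
    exact Finset.sum_congr rfl fun j _ => hv i j
  have hsup : (A i').sup' h' ((fun (_ : Fin 4) (j : Fin 6) => if j.val < 3 then (2 : ℝ) else 3) i)
      = (((A i').sup' h' wNat : ℕ) : ℝ) := by
    rw [Nat.cast_finsetSup']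
    exact Finset.sup'_congr h' rfl fun j _ => hv i j
  rw [hsum, hsum, hsup] at hE
  have hcast : ((∑ j ∈ A i, wNat j : ℕ) : ℝ) + (((A i').sup' h' wNat : ℕ) : ℝ)
      < ((∑ j ∈ A i', wNat j : ℕ) : ℝ) := by exact_mod_cast hlt'
  linarith
end

section
/- For every problem instance with n agents, m items, additive valuations, and conflict graph G such that n > Δ(G) and m ≤ n + 1, a feasible EF1 allocation exists. -/
open Finset

section Aux

variable {M : Type*}

/-- An element of `S` maximizing `w` (junk if `S` is empty). -/
noncomputable def argmaxOn [Nonempty M] (w : M → ℝ) (S : Finset M) : M :=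
  if h : S.Nonempty then (S.exists_max_image w h).choose else Classical.arbitrary M

lemma argmaxOn_mem [Nonempty M] {w : M → ℝ} {S : Finset M} (h : S.Nonempty) :
    argmaxOn w S ∈ S := by
  rw [argmaxOn, dif_pos h]
  exact (S.exists_max_image w h).choose_spec.1

lemma le_argmaxOn [Nonempty M] {w : M → ℝ} {S : Finset M} (h : S.Nonempty)
    {x : M} (hx : x ∈ S) : w x ≤ w (argmaxOn w S) := by
  rw [argmaxOn, dif_pos h]
  exact (S.exists_max_image w h).choose_spec.2 x hx

variable [Fintype M] [DecidableEq M] [Nonempty M]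

/-- Remaining items after `i` rounds of greedy picking. -/
noncomputable def pickR (V : ℕ → M → ℝ) : ℕ → Finset M
  | 0 => Finset.univ
  | i + 1 => (pickR V i).erase (argmaxOn (V i) (pickR V i))

/-- The item picked at round `i`. -/
noncomputable def pickX (V : ℕ → M → ℝ) (i : ℕ) : M :=
  argmaxOn (V i) (pickR V i)

lemma pickR_succ (V : ℕ → M → ℝ) (i : ℕ) :
    pickR V (i + 1) = (pickR V i).erase (pickX V i) := rfl

lemma pickR_subset_of_le (V : ℕ → M → ℝ) {i j : ℕ} (hij : i ≤ j) :
    pickR V j ⊆ pickR V i := by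
  induction j, hij using Nat.le_induction with
  | base => exact Finset.Subset.refl _
  | succ j hij ih =>
      exact (pickR_succ V j ▸ Finset.erase_subset _ _).trans ih

lemma pickR_card (V : ℕ → M → ℝ) (i : ℕ) :
    (pickR V i).card = Fintype.card M - i := by
  induction i with
  | zero => simp [pickR]
  | succ i ih =>
      rw [pickR_succ]
      by_cases h : (pickR V i).Nonempty
      · have hmem : pickX V i ∈ pickR V i := argmaxOn_mem h
        rw [Finset.card_erase_of_mem hmem, ih]
        omega
      · rw [Finset.not_nonempty_iff_eq_empty] at h
        rw [h] at ih ⊢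
        simp at ih ⊢
        omega

lemma pickX_notMem_succ (V : ℕ → M → ℝ) (i : ℕ) :
    pickX V i ∉ pickR V (i + 1) := by
  rw [pickR_succ]; exact Finset.notMem_erase _ _

end Aux

/-- For every instance with `n` agents, at most `n + 1` items, nonnegative
additive valuations and conflict graph `G` with `n > Δ(G)`, a feasible EF1
allocation exists. -/
theorem ef1_of_few_items {M : Type*} [Fintype M] [DecidableEq M]
    (G : SimpleGraph M) [DecidableRel G.Adj] (n : ℕ)
    (hΔ : G.maxDegree < n) (hm : Fintype.card M ≤ n + 1)
    (v : Fin n → M → ℝ) (hv : ∀ i j, 0 ≤ v i j) :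
    ∃ A : Fin n → Finset M, IsAllocation A ∧ FeasibleAlloc G A ∧ EF1 v A := by
  classical
  rcases Nat.lt_or_ge (Fintype.card M) (n + 1) with hlt | hge
  · -- Case `card M ≤ n` : give each item to a distinct agent.
    have hle : Fintype.card M ≤ n := by omega
    obtain ⟨g⟩ : Nonempty (M ↪ Fin n) :=
      Function.Embedding.nonempty_of_card_le (by simpa using hle)
    refine ⟨fun i => Finset.univ.filter (fun j => g j = i), ?_, ?_, ?_⟩
    · constructor
      · intro i i' hne
        rw [Finset.disjoint_left]
        intro a ha ha'
        simp only [Finset.mem_filter] at ha ha'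
        exact hne (ha.2 ▸ ha'.2 ▸ rfl)
      · apply Finset.eq_univ_of_forall
        intro j
        exact Finset.mem_biUnion.mpr ⟨g j, Finset.mem_univ _, by simp⟩
    · intro i j hj j' hj' hadj
      simp only [Finset.mem_filter] at hj hj'
      have : j = j' := g.injective (hj.2.trans hj'.2.symm)
      exact G.irrefl (this ▸ hadj)
    · intro i i' h
      dsimp only
      obtain ⟨y, hy⟩ := id h
      dsimp only at hy
      have hsing : Finset.univ.filter (fun j => g j = i') = {y} := by
        apply Finset.eq_singleton_iff_unique_mem.mpr
        refine ⟨hy, fun z hz => ?_⟩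
        simp only [Finset.mem_filter] at hz hy
        exact g.injective (hz.2.trans hy.2.symm)
      have hsum : ∑ j ∈ Finset.univ.filter (fun j => g j = i'), v i j = v i y := by
        rw [hsing, Finset.sum_singleton]
      have hsup : v i y ≤ (Finset.univ.filter (fun j => g j = i')).sup' h (v i) :=
        Finset.le_sup' _ hy
      rw [hsum]
      have : (0:ℝ) ≤ ∑ j ∈ Finset.univ.filter (fun j => g j = i), v i j :=
        Finset.sum_nonneg fun j _ => hv i j
      linarith
  · -- Case `card M = n + 1` : greedy picking, leftover to a compatible agent.
    have hcard : Fintype.card M = n + 1 := le_antisymm hm hge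
    have hn : 0 < n := lt_of_le_of_lt (Nat.zero_le _) hΔ
    haveI : Nonempty M := Fintype.card_pos_iff.mp (by omega)
    set V : ℕ → M → ℝ := fun i j => v ⟨i % n, Nat.mod_lt i hn⟩ j with hVdef
    have hV : ∀ i : Fin n, V i.val = v i := by
      intro i
      have : (i : ℕ) % n = (i : ℕ) := Nat.mod_eq_of_lt i.isLt
      simp [hVdef, this]
    -- basic facts about the remaining sets
    have hRne : ∀ i ≤ n, (pickR V i).Nonempty := by
      intro i hi
      rw [← Finset.card_pos, pickR_card, hcard]
      omega
    obtain ⟨c, hc⟩ := Finset.card_eq_one.mp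
      (by rw [pickR_card V n, hcard]; omega : (pickR V n).card = 1)
    have hcmem : ∀ i ≤ n, c ∈ pickR V i := by
      intro i hi
      exact pickR_subset_of_le V hi (hc ▸ Finset.mem_singleton_self c)
    set x : Fin n → M := fun i => pickX V i.val with hxdef
    have hx_mem : ∀ i : Fin n, x i ∈ pickR V i.val :=
      fun i => argmaxOn_mem (hRne i.val (le_of_lt i.isLt))
    have hx_best : ∀ i : Fin n, ∀ y ∈ pickR V i.val, v i y ≤ v i (x i) := by
      intro i y hy
      have key := le_argmaxOn (hRne i.val (le_of_lt i.isLt)) hy (w := V i.val)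
      have hVi := (hV i).symm
      rw [show v i = V i.val from hVi]
      exact key
    have hx_lt : ∀ i j : Fin n, (i : ℕ) < j → x i ≠ x j := by
      intro i j hij heq
      have hmem : x j ∈ pickR V ((i : ℕ) + 1) :=
        pickR_subset_of_le V hij (hx_mem j)
      rw [← heq] at hmem
      exact pickX_notMem_succ V i.val hmem
    have hx_inj : Function.Injective x := by
      intro i j hij
      by_contra hne
      rcases lt_trichotomy (i : ℕ) (j : ℕ) with h | h | h
      · exact hx_lt i j h hij
      · exact hne (Fin.ext h)
      · exact hx_lt j i h hij.symm
    have hxc : ∀ i : Fin n, x i ≠ c := by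
      intro i heq
      have hmem : c ∈ pickR V ((i : ℕ) + 1) := hcmem _ i.isLt
      rw [← heq] at hmem
      exact pickX_notMem_succ V i.val hmem
    have hvxc : ∀ i : Fin n, v i c ≤ v i (x i) :=
      fun i => hx_best i c (hcmem i.val (le_of_lt i.isLt))
    -- all items are accounted for
    have hSuniv : insert c (Finset.univ.image x) = (Finset.univ : Finset M) := by
      apply Finset.eq_univ_of_card
      rw [Finset.card_insert_of_notMem, Finset.card_image_of_injective _ hx_inj,
        Finset.card_univ, Fintype.card_fin, hcard]
      intro hmem
      obtain ⟨i, _, hi⟩ := Finset.mem_image.mp hmem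
      exact hxc i hi
    -- find an agent whose item is not adjacent to the leftover `c`
    have : ∃ k : Fin n, ¬ G.Adj c (x k) := by
      by_contra hall
      push_neg at hall
      have hsub : Finset.univ.image x ⊆ G.neighborFinset c := by
        intro a ha
        obtain ⟨i, _, rfl⟩ := Finset.mem_image.mp ha
        exact (G.mem_neighborFinset c _).mpr (hall i)
      have h1 : n ≤ (G.neighborFinset c).card := by
        calc n = (Finset.univ.image x).card := by
              rw [Finset.card_image_of_injective _ hx_inj, Finset.card_univ,
                Fintype.card_fin]
          _ ≤ _ := Finset.card_le_card hsub
      have h2 := G.degree_le_maxDegree c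
      rw [← SimpleGraph.card_neighborFinset_eq_degree] at h2
      omega
    obtain ⟨k, hk⟩ := this
    -- the allocation
    set A : Fin n → Finset M :=
      fun i => if i = k then ({x k, c} : Finset M) else {x i} with hAdef
    have hAk : A k = {x k, c} := by simp [hAdef]
    have hAi : ∀ i : Fin n, i ≠ k → A i = {x i} := fun i hi => by simp [hAdef, hi]
    refine ⟨A, ⟨?_, ?_⟩, ?_, ?_⟩
    · -- pairwise disjoint
      intro i i' hne
      rw [Finset.disjoint_left]
      intro a ha ha'
      by_cases hik : i = k
      · subst hik
        rw [hAk] at ha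
        rw [hAi i' (Ne.symm hne)] at ha'
        rw [Finset.mem_singleton] at ha'
        subst ha'
        rcases Finset.mem_insert.mp ha with h | h
        · exact hne (hx_inj h).symm
        · rw [Finset.mem_singleton] at h
          exact hxc i' h
      · rw [hAi i hik, Finset.mem_singleton] at ha
        subst ha
        by_cases hik' : i' = k
        · subst hik'
          rw [hAk] at ha'
          rcases Finset.mem_insert.mp ha' with h | h
          · exact hne (hx_inj h)
          · rw [Finset.mem_singleton] at h
            exact hxc i h
        · rw [hAi i' hik', Finset.mem_singleton] at ha'
          exact hne (hx_inj ha')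
    · -- covers everything
      apply Finset.eq_univ_of_forall
      intro y
      have hy : y ∈ insert c (Finset.univ.image x) := hSuniv ▸ Finset.mem_univ y
      rcases Finset.mem_insert.mp hy with rfl | hy
      · exact Finset.mem_biUnion.mpr ⟨k, Finset.mem_univ _,
          by rw [hAk]; exact Finset.mem_insert_of_mem (Finset.mem_singleton_self _)⟩
      · obtain ⟨i, _, rfl⟩ := Finset.mem_image.mp hy
        refine Finset.mem_biUnion.mpr ⟨i, Finset.mem_univ _, ?_⟩
        by_cases hik : i = k
        · subst hik; rw [hAk]; exact Finset.mem_insert_self _ _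
        · rw [hAi i hik]; exact Finset.mem_singleton_self _
    · -- feasible
      intro i j hj j' hj' hadj
      by_cases hik : i = k
      · subst hik
        rw [hAk] at hj hj'
        rcases Finset.mem_insert.mp hj with rfl | hj <;>
          rcases Finset.mem_insert.mp hj' with rfl | hj'
        · exact G.irrefl hadj
        · rw [Finset.mem_singleton] at hj'; subst hj'
          exact hk hadj.symm
        · rw [Finset.mem_singleton] at hj; subst hj
          exact hk hadj
        · rw [Finset.mem_singleton] at hj hj'; subst hj; subst hj'
          exact G.irrefl hadj
      · rw [hAi i hik, Finset.mem_singleton] at hj hj'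
        subst hj; subst hj'
        exact G.irrefl hadj
    · -- EF1
      intro i i' h
      by_cases hii : i = i'
      · subst hii
        obtain ⟨y, hy⟩ := id h
        have h1 : (0:ℝ) ≤ (A i).sup' h (v i) :=
          le_trans (hv i y) (Finset.le_sup' (v i) hy)
        linarith
      by_cases hik' : i' = k
      · have hne : x k ≠ c := hxc k
        have hA' : A i' = {x k, c} := by rw [hik', hAk]
        have hsum : ∑ j ∈ A i', v i j = v i (x k) + v i c := by
          rw [hA', Finset.sum_pair hne]
        have hsup : v i (x k) ≤ (A i').sup' h (v i) := by
          apply Finset.le_sup'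
          rw [hA']; exact Finset.mem_insert_self _ _
        have hikne : i ≠ k := fun he => hii (he.trans hik'.symm)
        have hsumA : ∑ j ∈ A i, v i j = v i (x i) := by
          rw [hAi i hikne, Finset.sum_singleton]
        rw [hsumA, hsum]
        have := hvxc i
        linarith
      · -- i' owns a singleton
        have hA' : A i' = {x i'} := hAi i' hik'
        have hy : x i' ∈ A i' := by rw [hA']; exact Finset.mem_singleton_self _
        have hsum : ∑ j ∈ A i', v i j = v i (x i') := by
          rw [hA', Finset.sum_singleton]
        have hsup : v i (x i') ≤ (A i').sup' h (v i) := Finset.le_sup' _ hy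
        rw [hsum]
        have : (0:ℝ) ≤ ∑ j ∈ A i, v i j := Finset.sum_nonneg fun j _ => hv i j
        linarith
end

section
/- For every integer n ≥ 4 there exists a simple graph G with n > Δ(G) and additive valuations v_1, ..., v_n such that the resulting problem instance admits no feasible EF1 allocation. Concretely, one may take G to be the complete bipartite graph K_{n−1,n−1} and let every agent value each item of one part at 2 and each item of the other part at 2n − 5. -/
open Finset

/-- The complete bipartite graph `K_{n-1,n-1}` on `2(n-1)` items, with parts
the first `n - 1` and the last `n - 1` items. -/
def Kbip (n : ℕ) : SimpleGraph (Fin (2 * (n - 1))) where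
  Adj j k := decide (j.val < n - 1) ≠ decide (k.val < n - 1)
  symm := ⟨fun _ _ h => h.symm⟩
  loopless := ⟨fun _ h => h rfl⟩

instance (n : ℕ) : DecidableRel (Kbip n).Adj :=
  fun j k => inferInstanceAs (Decidable (decide (j.val < n - 1) ≠ decide (k.val < n - 1)))

lemma cardLow (m : ℕ) (hm : 0 < m) :
    (univ.filter (fun j : Fin (2*m) => j.val < m)).card = m := by
  have hlt : m < 2*m := by omega
  have : (univ.filter (fun j : Fin (2*m) => j.val < m)) = Iio (⟨m, hlt⟩ : Fin (2*m)) := by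
    ext j; simp [Fin.lt_def]
  rw [this, Fin.card_Iio]

lemma cardHigh (m : ℕ) (hm : 0 < m) :
    (univ.filter (fun j : Fin (2*m) => ¬ j.val < m)).card = m := by
  have := Finset.card_filter_add_card_filter_not (s := (univ : Finset (Fin (2*m))))
    (p := fun j => j.val < m)
  rw [cardLow m hm] at this
  rw [Finset.card_univ, Fintype.card_fin] at this
  omega

lemma main_part (n : ℕ) (hn : 4 ≤ n) (A : Fin n → Finset (Fin (2 * (n - 1))))
    (hA : IsAllocation A) (hF : FeasibleAlloc (Kbip n) A) :
    ¬ EF1 (fun (_ : Fin n) j => if j.val < n - 1 then (2 : ℝ) else 2 * n - 5) A := by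
  intro hef
  obtain ⟨hdisj, hcov⟩ := hA
  set v : Fin (2*(n-1)) → ℝ := fun j => if j.val < n-1 then (2:ℝ) else 2*(n:ℝ)-5 with hv
  have hnR : (4:ℝ) ≤ (n:ℝ) := by exact_mod_cast hn
  have hn1R : ((n-1:ℕ):ℝ) = (n:ℝ) - 1 := by
    rw [Nat.cast_sub (by omega)]; norm_num
  -- purity of bundles
  have pure : ∀ i : Fin n, (∀ j ∈ A i, j.val < n-1) ∨ (∀ j ∈ A i, ¬ j.val < n-1) := by
    intro i
    by_contra h
    push_neg at h
    obtain ⟨⟨j, hj, hjP⟩, j', hj', hj'P⟩ := h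
    exact hF i j hj j' hj' (by simp [Kbip, hjP, hj'P])
  -- the key EF1 consequence for constant-valued bundles
  have key : ∀ i i' : Fin n, (A i').Nonempty → ∀ ci ci' : ℝ,
      (∀ j ∈ A i, v j = ci) → (∀ j ∈ A i', v j = ci') →
      ci * (A i).card ≥ ci' * (A i').card - ci' := by
    intro i i' h' ci ci' hi hi'
    have H := hef i i' h'
    dsimp only at H
    rw [show (∑ j ∈ A i, v j) = ci * (A i).card by
          rw [Finset.sum_congr rfl hi, Finset.sum_const, nsmul_eq_mul, mul_comm]] at H
    rw [show (∑ j ∈ A i', v j) = ci' * (A i').card by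
          rw [Finset.sum_congr rfl hi', Finset.sum_const, nsmul_eq_mul, mul_comm]] at H
    rwa [Finset.sup'_congr h' rfl hi', Finset.sup'_const] at H
  have vL : ∀ i : Fin n, (∀ j ∈ A i, j.val < n-1) → ∀ j ∈ A i, v j = 2 := by
    intro i h j hj; simp [hv, h j hj]
  have vR : ∀ i : Fin n, (∀ j ∈ A i, ¬ j.val < n-1) → ∀ j ∈ A i, v j = 2*(n:ℝ)-5 := by
    intro i h j hj; simp [hv, h j hj]
  -- total card
  have hcardsum : ∑ i : Fin n, (A i).card = 2*(n-1) := by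
    have := Finset.card_biUnion (s := (univ : Finset (Fin n))) (t := A)
      (fun i _ j _ hij => hdisj i j hij)
    rw [hcov, Finset.card_univ, Fintype.card_fin] at this
    omega
  by_cases hemp : ∃ i0, A i0 = ∅
  · -- some empty bundle forces all bundles to be singletons
    obtain ⟨i0, hi0⟩ := hemp
    have hle1 : ∀ i, (A i).card ≤ 1 := by
      intro i
      rcases (A i).eq_empty_or_nonempty with he | hne
      · simp [he]
      · have hv0 : ∀ j ∈ A i0, v j = (2:ℝ) := by simp [hi0]
        rcases pure i with hp | hp
        · have := key i0 i hne 2 2 hv0 (vL i hp)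
          rw [hi0] at this; simp at this
          by_contra hgt
          have h2 : (2:ℝ) ≤ ((A i).card : ℝ) := by exact_mod_cast (by omega : 2 ≤ (A i).card)
          linarith
        · have := key i0 i hne 2 (2*(n:ℝ)-5) hv0 (vR i hp)
          rw [hi0] at this; simp at this
          by_contra hgt
          have h2 : (2:ℝ) ≤ ((A i).card : ℝ) := by exact_mod_cast (by omega : 2 ≤ (A i).card)
          nlinarith
    have : ∑ i : Fin n, (A i).card ≤ n := by
      calc ∑ i : Fin n, (A i).card ≤ ∑ _i : Fin n, 1 := Finset.sum_le_sum (fun i _ => hle1 i)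
      _ = n := by simp
    omega
  · -- all bundles nonempty
    push_neg at hemp
    have hne : ∀ i, (A i).Nonempty := fun i => hemp i
    set IL : Finset (Fin n) := univ.filter (fun i => ∀ j ∈ A i, j.val < n-1) with hIL
    have hILmem : ∀ i, i ∈ IL ↔ ∀ j ∈ A i, j.val < n-1 := by
      intro i; simp [hIL]
    have hIRmem : ∀ i, i ∉ IL → ∀ j ∈ A i, ¬ j.val < n-1 := by
      intro i hi
      rcases pure i with hp | hp
      · exact absurd ((hILmem i).2 hp) hi
      · exact hp
    -- L covered by IL bundles
    have hLset : (univ.filter (fun j : Fin (2*(n-1)) => j.val < n-1)) = IL.biUnion A := by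
      ext j
      simp only [Finset.mem_filter, Finset.mem_univ, true_and, Finset.mem_biUnion]
      constructor
      · intro hjP
        have : j ∈ univ.biUnion A := by rw [hcov]; exact Finset.mem_univ j
        obtain ⟨i, _, hji⟩ := Finset.mem_biUnion.1 this
        refine ⟨i, ?_, hji⟩
        rcases pure i with hp | hp
        · exact (hILmem i).2 hp
        · exact absurd hjP (hp j hji)
      · rintro ⟨i, hi, hji⟩
        exact (hILmem i).1 hi j hji
    have hRset : (univ.filter (fun j : Fin (2*(n-1)) => ¬ j.val < n-1)) = (univ \ IL).biUnion A := by
      ext j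
      simp only [Finset.mem_filter, Finset.mem_univ, true_and, Finset.mem_biUnion,
        Finset.mem_sdiff]
      constructor
      · intro hjP
        have : j ∈ univ.biUnion A := by rw [hcov]; exact Finset.mem_univ j
        obtain ⟨i, _, hji⟩ := Finset.mem_biUnion.1 this
        refine ⟨i, ?_, hji⟩
        intro hiIL
        exact hjP ((hILmem i).1 hiIL j hji)
      · rintro ⟨i, hi, hji⟩
        exact hIRmem i hi j hji
    have hm : 0 < n - 1 := by omega
    have hLsum : ∑ i ∈ IL, (A i).card = n - 1 := by
      have h1 := Finset.card_biUnion (s := IL) (t := A) (fun i _ j _ hij => hdisj i j hij)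
      rw [← hLset, cardLow _ hm] at h1
      omega
    have hRsum : ∑ i ∈ univ \ IL, (A i).card = n - 1 := by
      have h1 := Finset.card_biUnion (s := univ \ IL) (t := A) (fun i _ j _ hij => hdisj i j hij)
      rw [← hRset, cardHigh _ hm] at h1
      omega
    have hILcard_le : IL.card ≤ n := by
      simpa using Finset.card_le_card (Finset.subset_univ IL)
    have hbcard : (univ \ IL).card = n - IL.card := by
      rw [Finset.card_sdiff_of_subset (Finset.subset_univ IL), Finset.card_univ, Fintype.card_fin]
    have ha1 : 1 ≤ IL.card := by
      rcases Nat.eq_zero_or_pos IL.card with h0 | h; swap; · exact h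
      rw [Finset.card_eq_zero] at h0
      rw [h0] at hLsum; simp at hLsum; omega
    have hb1 : 1 ≤ (univ \ IL).card := by
      rcases Nat.eq_zero_or_pos (univ \ IL).card with h0 | h; swap; · exact h
      rw [Finset.card_eq_zero] at h0
      rw [h0] at hRsum; simp at hRsum; omega
    rcases Nat.lt_or_ge IL.card 2 with ha | ha
    · -- a = 1 : single big L bundle, all n-1 R bundles must have ≥ 2 items
      have ha1' : IL.card = 1 := by omega
      obtain ⟨i0, hi0⟩ := Finset.card_eq_one.1 ha1'
      have hSi0 : (A i0).card = n - 1 := by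
        rw [hi0, Finset.sum_singleton] at hLsum; exact hLsum
      have hi0IL : i0 ∈ IL := by rw [hi0]; exact Finset.mem_singleton_self i0
      have hbig : ∀ i ∈ univ \ IL, 2 ≤ (A i).card := by
        intro i hi
        have hiR := hIRmem i (Finset.mem_sdiff.1 hi).2
        have := key i i0 (hne i0) (2*(n:ℝ)-5) 2 (vR i hiR) (vL i0 ((hILmem i0).1 hi0IL))
        rw [hSi0, hn1R] at this
        by_contra hgt
        have h1 : ((A i).card : ℝ) ≤ 1 := by exact_mod_cast (by omega : (A i).card ≤ 1)
        have h0 : (0:ℝ) ≤ ((A i).card : ℝ) := by positivity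
        nlinarith
      have : (univ \ IL).card * 2 ≤ ∑ i ∈ univ \ IL, (A i).card := by
        calc (univ \ IL).card * 2 = ∑ _i ∈ univ \ IL, 2 := by rw [Finset.sum_const, smul_eq_mul]
        _ ≤ ∑ i ∈ univ \ IL, (A i).card := Finset.sum_le_sum hbig
      omega
    · -- a ≥ 2 : pigeonhole gives a big R bundle, forcing all L bundles huge
      have hble : (univ \ IL).card ≤ n - 2 := by omega
      have hex : ∃ i1 ∈ univ \ IL, 2 ≤ (A i1).card := by
        by_contra h
        push_neg at h
        have : ∑ i ∈ univ \ IL, (A i).card ≤ (univ \ IL).card * 1 := by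
          calc ∑ i ∈ univ \ IL, (A i).card ≤ ∑ _i ∈ univ \ IL, 1 :=
            Finset.sum_le_sum (fun i hi => by have := h i hi; omega)
          _ = (univ \ IL).card * 1 := by rw [Finset.sum_const, smul_eq_mul]
        omega
      obtain ⟨i1, hi1, hSi1⟩ := hex
      have hi1R := hIRmem i1 (Finset.mem_sdiff.1 hi1).2
      have hbigL : ∀ i ∈ IL, n - 2 ≤ (A i).card := by
        intro i hi
        have := key i i1 (hne i1) 2 (2*(n:ℝ)-5) (vL i ((hILmem i).1 hi)) (vR i1 hi1R)
        have hS1 : (2:ℝ) ≤ ((A i1).card : ℝ) := by exact_mod_cast hSi1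
        by_contra hgt
        have h1 : ((A i).card : ℝ) ≤ (n:ℝ) - 3 := by
          have : (A i).card ≤ n - 3 := by omega
          calc ((A i).card : ℝ) ≤ ((n-3:ℕ):ℝ) := by exact_mod_cast this
          _ = (n:ℝ) - 3 := by rw [Nat.cast_sub (by omega)]; norm_num
        nlinarith
      have : IL.card * (n-2) ≤ ∑ i ∈ IL, (A i).card := by
        calc IL.card * (n-2) = ∑ _i ∈ IL, (n-2) := by rw [Finset.sum_const, smul_eq_mul]
        _ ≤ ∑ i ∈ IL, (A i).card := Finset.sum_le_sum hbigL
      rw [hLsum] at this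
      have : 2 * (n-2) ≤ n - 1 := le_trans (by nlinarith) this
      omega

lemma maxdeg (n : ℕ) (hn : 4 ≤ n) : (Kbip n).maxDegree < n := by
  have h1 : (Kbip n).maxDegree ≤ n - 1 := by
    apply SimpleGraph.maxDegree_le_of_forall_degree_le
    intro v
    rw [← SimpleGraph.card_neighborFinset_eq_degree]
    have hm : 0 < n - 1 := by omega
    by_cases hv : v.val < n - 1
    · have : (Kbip n).neighborFinset v = univ.filter (fun j : Fin (2*(n-1)) => ¬ j.val < n-1) := by
        ext k
        rw [SimpleGraph.mem_neighborFinset]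
        simp [SimpleGraph.mem_neighborFinset, Kbip, hv]
      rw [this, cardHigh _ hm]
    · have : (Kbip n).neighborFinset v = univ.filter (fun j : Fin (2*(n-1)) => j.val < n-1) := by
        ext k
        rw [SimpleGraph.mem_neighborFinset]
        simp [SimpleGraph.mem_neighborFinset, Kbip, hv]
        omega
      rw [this, cardLow _ hm]
  omega


/-- For every `n ≥ 4`, the complete bipartite graph `K_{n-1,n-1}` satisfies
`Δ(G) < n`, yet when every agent values each item of one part at `2` and each
item of the other part at `2n − 5`, the resulting instance with `n` agents
admits no feasible EF1 allocation. -/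
theorem no_ef1_Kbip (n : ℕ) (hn : 4 ≤ n) :
    (Kbip n).maxDegree < n ∧
    ∀ A : Fin n → Finset (Fin (2 * (n - 1))),
      IsAllocation A → FeasibleAlloc (Kbip n) A →
      ¬ EF1 (fun (_ : Fin n) j => if j.val < n - 1 then (2 : ℝ) else 2 * n - 5) A := by
  exact ⟨maxdeg n hn, fun A hA hF => main_part n hn A hA hF⟩
end

section
/- If the conflict graph G = (M, E) is neither complete nor edgeless, then there exist a number of agents n with n ≥ Δ(G) and additive valuations v_1, ..., v_n such that the resulting problem instance has at least one feasible EF1 allocation, but no maximum Nash welfare (MNW) allocation of the instance is EF1. -/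
open Finset

/-- The Nash welfare of an allocation: the geometric mean of the agents'
bundle values. -/
noncomputable def NashWelfare {M : Type*} {n : ℕ} (v : Fin n → M → ℝ)
    (A : Fin n → Finset M) : ℝ :=
  (∏ i : Fin n, ∑ j ∈ A i, v i j) ^ ((1 : ℝ) / n)

/-- `A` is a maximum Nash welfare (MNW) allocation: it is a feasible allocation
and no feasible allocation has higher Nash welfare. -/
def IsMNW {M : Type*} [Fintype M] [DecidableEq M] {n : ℕ} (G : SimpleGraph M)
    (v : Fin n → M → ℝ) (A : Fin n → Finset M) : Prop :=
  IsAllocation A ∧ FeasibleAlloc G A ∧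
    ∀ B : Fin n → Finset M, IsAllocation B → FeasibleAlloc G B →
      NashWelfare v B ≤ NashWelfare v A


namespace MNWAux

variable {M : Type*} [Fintype M] [DecidableEq M]

lemma sum_single (w : M) (c : ℝ) (A : Finset M) :
    (∑ m ∈ A, if m = w then c else 0) = if w ∈ A then c else 0 :=
  Finset.sum_ite_eq' A w fun _ => c

lemma sum_triple (x y z : M) (hxy : x ≠ y) (hxz : x ≠ z) (hyz : y ≠ z)
    (a b c : ℝ) (A : Finset M) :
    (∑ m ∈ A, if m = x then a else if m = y then b else if m = z then c else 0)
      = (if x ∈ A then a else 0) + (if y ∈ A then b else 0) + (if z ∈ A then c else 0) := by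
  have h : ∀ m ∈ A, (if m = x then a else if m = y then b else if m = z then c else (0:ℝ))
      = (if m = x then a else 0) + ((if m = y then b else 0) + (if m = z then c else 0)) := by
    intro m _
    by_cases h1 : m = x
    · subst h1; simp [hxy, hxz]
    · by_cases h2 : m = y
      · subst h2; simp [h1, hyz]
      · simp [h1, h2]
  rw [Finset.sum_congr rfl h, Finset.sum_add_distrib, Finset.sum_add_distrib,
    sum_single, sum_single, sum_single]
  ring

/-- the item assigned to dummy agent `i` (agents `0`, `1` are special). -/
def gmap (x : M) {k : ℕ} (f : Fin k → M) (i : Fin (k + 2)) : M :=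
  if h : 2 ≤ (i : ℕ) then f ⟨(i : ℕ) - 2, by have := i.isLt; omega⟩ else x

lemma two_le_val {k : ℕ} {i : Fin (k + 2)} (h0 : i ≠ 0) (h1 : i ≠ 1) : 2 ≤ (i : ℕ) := by
  have h0' : (i : ℕ) ≠ 0 := fun h => h0 (Fin.ext (by simp [h]))
  have h1' : (i : ℕ) ≠ 1 := fun h => h1 (Fin.ext (by simp [h]))
  omega

lemma gmap_eq (x : M) {k : ℕ} (f : Fin k → M) (i : Fin (k + 2)) (h : 2 ≤ (i : ℕ)) :
    gmap x f i = f ⟨(i : ℕ) - 2, by have := i.isLt; omega⟩ := dif_pos h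

lemma gmap_mem (x : M) {k : ℕ} (f : Fin k → M) {P : M → Prop} (hP : ∀ j, P (f j))
    (i : Fin (k + 2)) (h : 2 ≤ (i : ℕ)) : P (gmap x f i) := by
  rw [gmap_eq x f i h]; exact hP _

lemma gmap_inj (x : M) {k : ℕ} {f : Fin k → M} (hf : Function.Injective f)
    {i i' : Fin (k + 2)} (h : 2 ≤ (i : ℕ)) (h' : 2 ≤ (i' : ℕ))
    (he : gmap x f i = gmap x f i') : i = i' := by
  rw [gmap_eq x f i h, gmap_eq x f i' h'] at he
  have := hf he
  have := congrArg Fin.val this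
  simp at this
  exact Fin.ext (by omega)

end MNWAux

namespace MNWAux

variable {M : Type*} [Fintype M] [DecidableEq M]

/-- allocation giving `T0` to agent 0, `T1` to agent 1, and `{gmap x f i}` to dummy `i`. -/
def allocOf (x : M) {k : ℕ} (f : Fin k → M) (T0 T1 : Finset M) (i : Fin (k + 2)) : Finset M :=
  if i = 0 then T0 else if i = 1 then T1 else {gmap x f i}

lemma zero_ne_one' {k : ℕ} : (0 : Fin (k + 2)) ≠ 1 := by
  intro h; have := congrArg Fin.val h; simp at this

lemma allocOf_zero (x : M) {k : ℕ} (f : Fin k → M) (T0 T1 : Finset M) :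
    allocOf x f T0 T1 0 = T0 := by simp [allocOf]

lemma allocOf_one (x : M) {k : ℕ} (f : Fin k → M) (T0 T1 : Finset M) :
    allocOf x f T0 T1 1 = T1 := by simp [allocOf, zero_ne_one'.symm]

lemma allocOf_dummy (x : M) {k : ℕ} (f : Fin k → M) (T0 T1 : Finset M)
    {i : Fin (k + 2)} (h0 : i ≠ 0) (h1 : i ≠ 1) :
    allocOf x f T0 T1 i = {gmap x f i} := by simp [allocOf, h0, h1]

lemma mem_allocOf (x : M) {k : ℕ} {f : Fin k → M} {T0 T1 : Finset M}
    {m : M} {i : Fin (k + 2)} (h : m ∈ allocOf x f T0 T1 i) :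
    (i = 0 ∧ m ∈ T0) ∨ (i = 1 ∧ m ∈ T1) ∨ (i ≠ 0 ∧ i ≠ 1 ∧ m = gmap x f i) := by
  by_cases e0 : i = 0
  · subst e0; rw [allocOf_zero] at h; exact Or.inl ⟨rfl, h⟩
  by_cases e1 : i = 1
  · subst e1; rw [allocOf_one] at h; exact Or.inr (Or.inl ⟨rfl, h⟩)
  · rw [allocOf_dummy x f T0 T1 e0 e1, Finset.mem_singleton] at h
    exact Or.inr (Or.inr ⟨e0, e1, h⟩)

lemma isAllocation_allocOf (x : M) {k : ℕ} {f : Fin k → M} (hf : Function.Injective f)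
    (T0 T1 : Finset M) (h0 : ∀ j, f j ∉ T0) (h1 : ∀ j, f j ∉ T1) (hd : Disjoint T0 T1)
    (hcov : ∀ m, m ∉ T0 → m ∉ T1 → ∃ j, f j = m) :
    IsAllocation (allocOf x f T0 T1) := by
  have hg0 : ∀ (i : Fin (k+2)), i ≠ 0 → i ≠ 1 → gmap x f i ∉ T0 := by
    intro i e0 e1
    exact gmap_mem x f (P := fun m => m ∉ T0) h0 i (two_le_val e0 e1)
  have hg1 : ∀ (i : Fin (k+2)), i ≠ 0 → i ≠ 1 → gmap x f i ∉ T1 := by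
    intro i e0 e1
    exact gmap_mem x f (P := fun m => m ∉ T1) h1 i (two_le_val e0 e1)
  have key : ∀ (m : M) (i i' : Fin (k+2)), m ∈ allocOf x f T0 T1 i →
      m ∈ allocOf x f T0 T1 i' → i = i' := by
    intro m i i' hi hi'
    rcases mem_allocOf x hi with ⟨e, hm⟩ | ⟨e, hm⟩ | ⟨e0, e1, hm⟩ <;>
      rcases mem_allocOf x hi' with ⟨e', hm'⟩ | ⟨e', hm'⟩ | ⟨e0', e1', hm'⟩
    · rw [e, e']
    · exact absurd hm' (Finset.disjoint_left.mp hd hm)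
    · exact absurd (hm' ▸ hm) (hg0 i' e0' e1')
    · exact absurd hm (Finset.disjoint_left.mp hd hm')
    · rw [e, e']
    · exact absurd (hm' ▸ hm) (hg1 i' e0' e1')
    · exact absurd (hm ▸ hm') (hg0 i e0 e1)
    · exact absurd (hm ▸ hm') (hg1 i e0 e1)
    · exact gmap_inj x hf (two_le_val e0 e1) (two_le_val e0' e1') (hm ▸ hm' ▸ rfl)
  constructor
  · intro i i' hne
    rw [Finset.disjoint_left]
    intro m hm hm'
    exact hne (key m i i' hm hm')
  · rw [Finset.eq_univ_iff_forall]
    intro m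
    rw [Finset.mem_biUnion]
    by_cases hm0 : m ∈ T0
    · exact ⟨0, Finset.mem_univ _, by rw [allocOf_zero]; exact hm0⟩
    by_cases hm1 : m ∈ T1
    · exact ⟨1, Finset.mem_univ _, by rw [allocOf_one]; exact hm1⟩
    · obtain ⟨j, hj⟩ := hcov m hm0 hm1
      refine ⟨⟨(j : ℕ) + 2, by have := j.isLt; omega⟩, Finset.mem_univ _, ?_⟩
      have e0 : (⟨(j : ℕ) + 2, by have := j.isLt; omega⟩ : Fin (k+2)) ≠ 0 := by
        intro h; have := congrArg Fin.val h; simp at this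
      have e1 : (⟨(j : ℕ) + 2, by have := j.isLt; omega⟩ : Fin (k+2)) ≠ 1 := by
        intro h; have := congrArg Fin.val h; simp at this
      rw [allocOf_dummy x f T0 T1 e0 e1, Finset.mem_singleton,
        gmap_eq x f _ (by simp)]
      rw [← hj]
      rfl

lemma feasible_allocOf (G : SimpleGraph M) (x : M) {k : ℕ} (f : Fin k → M)
    (T0 T1 : Finset M) (h0 : ∀ a ∈ T0, ∀ b ∈ T0, ¬ G.Adj a b)
    (h1 : ∀ a ∈ T1, ∀ b ∈ T1, ¬ G.Adj a b) :
    FeasibleAlloc G (allocOf x f T0 T1) := by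
  intro i j hj j' hj'
  by_cases e0 : i = 0
  · subst e0; rw [allocOf_zero] at hj hj'; exact h0 j hj j' hj'
  by_cases e1 : i = 1
  · subst e1; rw [allocOf_one] at hj hj'; exact h1 j hj j' hj'
  · rw [allocOf_dummy x f T0 T1 e0 e1, Finset.mem_singleton] at hj hj'
    subst hj; subst hj'
    exact G.loopless.irrefl _

lemma indep_pair (G : SimpleGraph M) {y z : M} (h : ¬ G.Adj y z) :
    ∀ a ∈ ({y, z} : Finset M), ∀ b ∈ ({y, z} : Finset M), ¬ G.Adj a b := by
  intro a ha b hb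
  simp only [Finset.mem_insert, Finset.mem_singleton] at ha hb
  rcases ha with rfl | rfl <;> rcases hb with rfl | rfl
  · exact G.loopless.irrefl _
  · exact h
  · exact fun hadj => h hadj.symm
  · exact G.loopless.irrefl _

lemma indep_single (G : SimpleGraph M) (w : M) :
    ∀ a ∈ ({w} : Finset M), ∀ b ∈ ({w} : Finset M), ¬ G.Adj a b := by
  intro a ha b hb
  simp only [Finset.mem_singleton] at ha hb
  subst ha; subst hb; exact G.loopless.irrefl _

lemma sup'_nonneg_of {n : ℕ} (v : Fin n → M → ℝ) (hv : ∀ i m, 0 ≤ v i m)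
    (i : Fin n) (A : Finset M) (h : A.Nonempty) : 0 ≤ A.sup' h (v i) := by
  obtain ⟨m, hm⟩ := h
  exact le_trans (hv i m) (Finset.le_sup' _ hm)

end MNWAux

namespace MNWAux

variable {M : Type*} [Fintype M] [DecidableEq M]

/-- The valuation profile: agent 0 values `x,y,z` at `4,5,5`; agent 1 values them
at `r,p,q`; dummy agent `i` values only its own item `gmap x f i`, at `1`. -/
def vGen (x y z : M) (r p q : ℝ) {k : ℕ} (f : Fin k → M) : Fin (k + 2) → M → ℝ :=
  fun i => if i = 0 then
      (fun m => if m = x then 4 else if m = y then 5 else if m = z then 5 else 0)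
    else if i = 1 then
      (fun m => if m = x then r else if m = y then p else if m = z then q else 0)
    else (fun m => if m = gmap x f i then 1 else 0)

lemma vGen_zero (x y z : M) (r p q : ℝ) {k : ℕ} (f : Fin k → M) :
    vGen x y z r p q f 0 =
      fun m => if m = x then 4 else if m = y then 5 else if m = z then 5 else 0 := by
  simp [vGen]

lemma vGen_one (x y z : M) (r p q : ℝ) {k : ℕ} (f : Fin k → M) :
    vGen x y z r p q f 1 =
      fun m => if m = x then r else if m = y then p else if m = z then q else 0 := by
  have h10 : (1 : Fin (k+2)) = 0 ↔ False := by
    constructor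
    · exact fun h => zero_ne_one' h.symm
    · exact False.elim
  simp [vGen, h10]

lemma vGen_dummy (x y z : M) (r p q : ℝ) {k : ℕ} (f : Fin k → M)
    {i : Fin (k + 2)} (h0 : i ≠ 0) (h1 : i ≠ 1) :
    vGen x y z r p q f i = fun m => if m = gmap x f i then 1 else 0 := by
  simp [vGen, h0, h1]

lemma vGen_nonneg (x y z : M) {r p q : ℝ} (hr : 0 ≤ r) (hp : 0 ≤ p) (hq : 0 ≤ q)
    {k : ℕ} (f : Fin k → M) : ∀ i m, 0 ≤ vGen x y z r p q f i m := by
  intro i m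
  by_cases h0 : i = 0
  · rw [h0, vGen_zero]; dsimp only; split_ifs <;> norm_num
  by_cases h1 : i = 1
  · rw [h1, vGen_one]; dsimp only; split_ifs <;> simp [hr, hp, hq]
  · rw [vGen_dummy x y z r p q f h0 h1]; dsimp only; split_ifs <;> norm_num

lemma sum_vGen_zero (x y z : M) (hxy : x ≠ y) (hxz : x ≠ z) (hyz : y ≠ z)
    (r p q : ℝ) {k : ℕ} (f : Fin k → M) (A : Finset M) :
    ∑ m ∈ A, vGen x y z r p q f 0 m
      = (if x ∈ A then 4 else 0) + (if y ∈ A then 5 else 0) + (if z ∈ A then 5 else 0) := by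
  rw [vGen_zero]
  exact sum_triple x y z hxy hxz hyz 4 5 5 A

lemma sum_vGen_one (x y z : M) (hxy : x ≠ y) (hxz : x ≠ z) (hyz : y ≠ z)
    (r p q : ℝ) {k : ℕ} (f : Fin k → M) (A : Finset M) :
    ∑ m ∈ A, vGen x y z r p q f 1 m
      = (if x ∈ A then r else 0) + (if y ∈ A then p else 0) + (if z ∈ A then q else 0) := by
  rw [vGen_one]
  exact sum_triple x y z hxy hxz hyz r p q A

lemma sum_vGen_dummy (x y z : M) (r p q : ℝ) {k : ℕ} (f : Fin k → M)
    {i : Fin (k + 2)} (h0 : i ≠ 0) (h1 : i ≠ 1) (A : Finset M) :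
    ∑ m ∈ A, vGen x y z r p q f i m = if gmap x f i ∈ A then 1 else 0 := by
  rw [vGen_dummy x y z r p q f h0 h1]
  exact sum_single _ 1 A

end MNWAux

namespace MNWAux

variable {M : Type*} [Fintype M] [DecidableEq M]

lemma one_mem_erase {k : ℕ} : (1 : Fin (k + 2)) ∈ Finset.univ.erase (0 : Fin (k+2)) :=
  Finset.mem_erase.mpr ⟨fun h => zero_ne_one' h.symm, Finset.mem_univ _⟩

/-- If the product of the two special agents' bundle values is at most `C`, with
`C` smaller than the target welfare `4 * (p + q)`, then `A` cannot be welfare-maximal. -/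
lemma negGen (G : SimpleGraph M) [DecidableRel G.Adj] (x y z : M) {k : ℕ}
    {f : Fin k → M} (hf : Function.Injective f)
    (hfx : ∀ j, f j ≠ x) (hfy : ∀ j, f j ≠ y) (hfz : ∀ j, f j ≠ z)
    (hcov : ∀ m : M, m ≠ x → m ≠ y → m ≠ z → ∃ j, f j = m)
    (hxyne : x ≠ y) (hxzne : x ≠ z) (hyzne : y ≠ z) (hyz : ¬ G.Adj y z)
    (r p q : ℝ) (hnn : ∀ i m, 0 ≤ vGen x y z r p q f i m)
    (A : Fin (k + 2) → Finset M)
    (hmax : ∀ B : Fin (k + 2) → Finset M, IsAllocation B → FeasibleAlloc G B →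
      NashWelfare (vGen x y z r p q f) B ≤ NashWelfare (vGen x y z r p q f) A)
    (C : ℝ) (hC : C < 4 * (p + q))
    (hbnd : (∑ m ∈ A 0, vGen x y z r p q f 0 m) * (∑ m ∈ A 1, vGen x y z r p q f 1 m) ≤ C) :
    False := by
  set v := vGen x y z r p q f with hv
  have hS : ∀ i, 0 ≤ ∑ m ∈ A i, v i m := fun i => Finset.sum_nonneg fun m _ => hnn i m
  have hsplit : ∀ W : Fin (k + 2) → Finset M,
      (∏ i, ∑ m ∈ W i, v i m) = (∑ m ∈ W 0, v 0 m) *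
        ((∑ m ∈ W 1, v 1 m) * ∏ i ∈ (Finset.univ.erase 0).erase 1, ∑ m ∈ W i, v i m) := by
    intro W
    rw [← Finset.mul_prod_erase Finset.univ _ (Finset.mem_univ (0 : Fin (k+2))),
      ← Finset.mul_prod_erase _ _ (one_mem_erase (k := k))]
  have hmem_erase : ∀ i : Fin (k+2), i ∈ (Finset.univ.erase 0).erase 1 → i ≠ 0 ∧ i ≠ 1 := by
    intro i hi
    rw [Finset.mem_erase, Finset.mem_erase] at hi
    exact ⟨hi.2.1, hi.1⟩
  have hrle : ∏ i ∈ (Finset.univ.erase 0).erase 1, (∑ m ∈ A i, v i m) ≤ 1 := by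
    apply Finset.prod_le_one (fun i _ => hS i)
    intro i hi
    obtain ⟨h0, h1⟩ := hmem_erase i hi
    rw [hv, sum_vGen_dummy x y z r p q f h0 h1]
    split_ifs <;> norm_num
  have hPA : (∏ i, ∑ m ∈ A i, v i m) ≤ C := by
    rw [hsplit A, ← mul_assoc]
    calc (∑ m ∈ A 0, v 0 m) * (∑ m ∈ A 1, v 1 m) *
          ∏ i ∈ (Finset.univ.erase 0).erase 1, ∑ m ∈ A i, v i m
        ≤ (∑ m ∈ A 0, v 0 m) * (∑ m ∈ A 1, v 1 m) :=
          mul_le_of_le_one_right (mul_nonneg (hS 0) (hS 1)) hrle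
      _ ≤ C := hbnd
  -- the target allocation
  set B := allocOf x f {x} ({y, z} : Finset M) with hB
  have hBalloc : IsAllocation B := by
    apply isAllocation_allocOf x hf
    · intro j; simp [hfx j]
    · intro j; simp [hfy j, hfz j]
    · simp only [Finset.disjoint_singleton_left, Finset.mem_insert, Finset.mem_singleton]
      push_neg
      exact ⟨hxyne, hxzne⟩
    · intro m h1 h2
      simp only [Finset.mem_singleton, Finset.mem_insert] at h1 h2
      push_neg at h2
      exact hcov m h1 h2.1 h2.2
  have hBfeas : FeasibleAlloc G B := feasible_allocOf G x f _ _ (indep_single G x) (indep_pair G hyz)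
  have hPB : (∏ i, ∑ m ∈ B i, v i m) = 4 * (p + q) := by
    rw [hsplit B]
    have h0 : (∑ m ∈ B 0, v 0 m) = 4 := by
      rw [hB, allocOf_zero, Finset.sum_singleton, hv, vGen_zero]
      simp
    have h1 : (∑ m ∈ B 1, v 1 m) = p + q := by
      rw [hB, allocOf_one, Finset.sum_pair hyzne, hv, vGen_one]
      simp [Ne.symm hxyne, Ne.symm hxzne, hyzne, Ne.symm hyzne]
    have h2 : (∏ i ∈ (Finset.univ.erase 0).erase 1, ∑ m ∈ B i, v i m) = 1 := by
      apply Finset.prod_eq_one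
      intro i hi
      obtain ⟨e0, e1⟩ := hmem_erase i hi
      rw [hB, allocOf_dummy x f _ _ e0 e1, Finset.sum_singleton, hv, vGen_dummy x y z r p q f e0 e1]
      simp
    rw [h0, h1, h2]
    ring
  have h1 := hmax B hBalloc hBfeas
  rw [hv] at h1
  simp only [NashWelfare] at h1
  rw [← hv] at h1
  rw [hPB] at h1
  have hk2 : (0:ℝ) < ((k + 2 : ℕ) : ℝ) := by exact_mod_cast Nat.succ_pos (k + 1)
  have hexp : (0:ℝ) < 1 / ((k + 2 : ℕ) : ℝ) := by positivity
  have h2 : (∏ i, ∑ m ∈ A i, v i m) ^ ((1:ℝ) / ((k + 2 : ℕ) : ℝ))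
      < (4 * (p + q)) ^ ((1:ℝ) / ((k + 2 : ℕ) : ℝ)) :=
    Real.rpow_lt_rpow (Finset.prod_nonneg fun i _ => hS i) (lt_of_le_of_lt hPA hC) hexp
  linarith

/-- the EF1 condition rules out the optimal configuration. -/
lemma killGen (x y z : M) {k : ℕ} (f : Fin k → M)
    (hxyne : x ≠ y) (hxzne : x ≠ z) (hyzne : y ≠ z)
    (r p q : ℝ) (A : Fin (k + 2) → Finset M)
    (hdisj : Disjoint (A 0) (A 1))
    (hef1 : EF1 (vGen x y z r p q f) A) :
    ¬ (x ∈ A 0 ∧ y ∈ A 1 ∧ z ∈ A 1) := by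
  rintro ⟨hx0, hy1, hz1⟩
  have hy0 : y ∉ A 0 := fun h => Finset.disjoint_left.mp hdisj h hy1
  have hz0 : z ∉ A 0 := fun h => Finset.disjoint_left.mp hdisj h hz1
  have hx1 : x ∉ A 1 := fun h => Finset.disjoint_left.mp hdisj hx0 h
  have hS0 : (∑ m ∈ A 0, vGen x y z r p q f 0 m) = 4 := by
    rw [sum_vGen_zero x y z hxyne hxzne hyzne r p q f]
    simp [hx0, hy0, hz0]
  have hS1 : (∑ m ∈ A 1, vGen x y z r p q f 0 m) = 10 := by
    rw [sum_vGen_zero x y z hxyne hxzne hyzne r p q f]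
    simp [hx1, hy1, hz1]
    norm_num
  have hsup : (A 1).sup' ⟨y, hy1⟩ (vGen x y z r p q f 0) ≤ 5 := by
    apply Finset.sup'_le
    intro m _
    rw [vGen_zero]
    dsimp only
    split_ifs <;> norm_num
  have := hef1 0 1 ⟨y, hy1⟩
  rw [hS0, hS1] at this
  linarith

end MNWAux

namespace MNWAux

variable {M : Type*} [Fintype M] [DecidableEq M]

lemma ef1_of_le {n : ℕ} (v : Fin n → M → ℝ) (hvnn : ∀ i m, 0 ≤ v i m)
    (A : Fin n → Finset M) (i i' : Fin n) (h : (A i').Nonempty)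
    (hle : (∑ j ∈ A i', v i j) ≤ ∑ j ∈ A i, v i j) :
    ∑ j ∈ A i, v i j ≥ (∑ j ∈ A i', v i j) - (A i').sup' h (v i) := by
  have := sup'_nonneg_of v hvnn i (A i') h
  linarith

lemma dummy_le (x y z : M) (r p q : ℝ) {k : ℕ} {f : Fin k → M}
    (hf : Function.Injective f) (hfx : ∀ j, f j ≠ x) (hfy : ∀ j, f j ≠ y) (hfz : ∀ j, f j ≠ z)
    (T0 T1 : Finset M) (hT0 : ∀ m ∈ T0, m = x ∨ m = y ∨ m = z)
    (hT1 : ∀ m ∈ T1, m = x ∨ m = y ∨ m = z)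
    {i : Fin (k + 2)} (i' : Fin (k + 2)) (h0 : i ≠ 0) (h1 : i ≠ 1) :
    (∑ m ∈ allocOf x f T0 T1 i', vGen x y z r p q f i m)
      ≤ ∑ m ∈ allocOf x f T0 T1 i, vGen x y z r p q f i m := by
  by_cases hii : i' = i
  · rw [hii]
  have hg : ∀ m, m = x ∨ m = y ∨ m = z → vGen x y z r p q f i m = 0 := by
    intro m hm
    rw [vGen_dummy x y z r p q f h0 h1]
    have h2 : 2 ≤ (i : ℕ) := two_le_val h0 h1
    have gx := gmap_mem x f (P := fun u => u ≠ x) hfx i h2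
    have gy := gmap_mem x f (P := fun u => u ≠ y) hfy i h2
    have gz := gmap_mem x f (P := fun u => u ≠ z) hfz i h2
    rcases hm with rfl | rfl | rfl <;> simp [Ne.symm gx, Ne.symm gy, Ne.symm gz]
  have hown : (∑ m ∈ allocOf x f T0 T1 i, vGen x y z r p q f i m) = 1 := by
    rw [allocOf_dummy x f T0 T1 h0 h1, Finset.sum_singleton,
      vGen_dummy x y z r p q f h0 h1]
    simp
  rw [hown]
  have henv : (∑ m ∈ allocOf x f T0 T1 i', vGen x y z r p q f i m) = 0 := by
    by_cases e0 : i' = 0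
    · rw [e0, allocOf_zero]
      exact Finset.sum_eq_zero fun m hm => hg m (hT0 m hm)
    by_cases e1 : i' = 1
    · rw [e1, allocOf_one]
      exact Finset.sum_eq_zero fun m hm => hg m (hT1 m hm)
    · rw [allocOf_dummy x f T0 T1 e0 e1, Finset.sum_singleton,
        vGen_dummy x y z r p q f h0 h1]
      have : gmap x f i' ≠ gmap x f i := fun h =>
        hii (gmap_inj x hf (two_le_val e0 e1) (two_le_val h0 h1) h)
      simp [this]
  rw [henv]
  norm_num

lemma bashA (x y z : M) (hxyne : x ≠ y) (hxzne : x ≠ z) (hyzne : y ≠ z)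
    {k : ℕ} (f : Fin k → M) (A : Fin (k + 2) → Finset M)
    (d1 : ¬(x ∈ A 0 ∧ x ∈ A 1)) (d2 : ¬(y ∈ A 0 ∧ y ∈ A 1)) (d3 : ¬(z ∈ A 0 ∧ z ∈ A 1))
    (e1 : ¬(x ∈ A 0 ∧ y ∈ A 0)) (e2 : ¬(x ∈ A 0 ∧ z ∈ A 0))
    (e3 : ¬(x ∈ A 1 ∧ y ∈ A 1)) (e4 : ¬(x ∈ A 1 ∧ z ∈ A 1))
    (kill : ¬(x ∈ A 0 ∧ y ∈ A 1 ∧ z ∈ A 1)) :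
    (∑ m ∈ A 0, vGen x y z 12 8 24 f 0 m) * (∑ m ∈ A 1, vGen x y z 12 8 24 f 1 m) ≤ 120 := by
  rw [sum_vGen_zero x y z hxyne hxzne hyzne _ _ _ f, sum_vGen_one x y z hxyne hxzne hyzne _ _ _ f]
  by_cases hx0 : x ∈ A 0 <;> by_cases hy0 : y ∈ A 0 <;> by_cases hz0 : z ∈ A 0 <;>
    by_cases hx1 : x ∈ A 1 <;> by_cases hy1 : y ∈ A 1 <;> by_cases hz1 : z ∈ A 1 <;>
    simp_all <;> norm_num

lemma bashB (x y z : M) (hxyne : x ≠ y) (hxzne : x ≠ z) (hyzne : y ≠ z)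
    {k : ℕ} (f : Fin k → M) (A : Fin (k + 2) → Finset M)
    (d1 : ¬(x ∈ A 0 ∧ x ∈ A 1)) (d2 : ¬(y ∈ A 0 ∧ y ∈ A 1)) (d3 : ¬(z ∈ A 0 ∧ z ∈ A 1))
    (e1 : ¬(x ∈ A 0 ∧ y ∈ A 0)) (e3 : ¬(x ∈ A 1 ∧ y ∈ A 1))
    (kill : ¬(x ∈ A 0 ∧ y ∈ A 1 ∧ z ∈ A 1)) :
    (∑ m ∈ A 0, vGen x y z 0 8 16 f 0 m) * (∑ m ∈ A 1, vGen x y z 0 8 16 f 1 m) ≤ 80 := by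
  rw [sum_vGen_zero x y z hxyne hxzne hyzne _ _ _ f, sum_vGen_one x y z hxyne hxzne hyzne _ _ _ f]
  by_cases hx0 : x ∈ A 0 <;> by_cases hy0 : y ∈ A 0 <;> by_cases hz0 : z ∈ A 0 <;>
    by_cases hx1 : x ∈ A 1 <;> by_cases hy1 : y ∈ A 1 <;> by_cases hz1 : z ∈ A 1 <;>
    simp_all <;> norm_num

end MNWAux

namespace MNWAux

variable {M : Type*} [Fintype M] [DecidableEq M]

lemma witnessA (G : SimpleGraph M) [DecidableRel G.Adj] (x y z : M) {k : ℕ}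
    {f : Fin k → M} (hf : Function.Injective f)
    (hfx : ∀ j, f j ≠ x) (hfy : ∀ j, f j ≠ y) (hfz : ∀ j, f j ≠ z)
    (hxyne : x ≠ y) (hxzne : x ≠ z) (hyzne : y ≠ z) :
    EF1 (vGen x y z 12 8 24 f) (allocOf x f ({y, z} : Finset M) {x}) := by
  set v := vGen x y z 12 8 24 f with hv
  set W := allocOf x f ({y, z} : Finset M) {x} with hW
  have hvnn : ∀ i m, 0 ≤ v i m := vGen_nonneg x y z (by norm_num) (by norm_num) (by norm_num) f
  have hW0 : W 0 = ({y, z} : Finset M) := allocOf_zero x f _ _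
  have hW1 : W 1 = ({x} : Finset M) := allocOf_one x f _ _
  intro i i' h
  by_cases hi0 : i = 0
  · subst hi0
    apply ef1_of_le v hvnn W _ _ h
    have hown : (∑ m ∈ W 0, v 0 m) = 10 := by
      rw [hW0, Finset.sum_pair hyzne, hv, vGen_zero]
      simp [Ne.symm hxyne, Ne.symm hxzne, hyzne, Ne.symm hyzne]
      norm_num
    rw [hown]
    by_cases e0 : i' = 0
    · rw [e0, hown]
    by_cases e1 : i' = 1
    · rw [e1, hW1, Finset.sum_singleton, hv, vGen_zero]
      simp
      norm_num
    · rw [hW, allocOf_dummy x f _ _ e0 e1, Finset.sum_singleton, hv, vGen_zero]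
      have h2 : 2 ≤ (i' : ℕ) := two_le_val e0 e1
      have gx := gmap_mem x f (P := fun u => u ≠ x) hfx i' h2
      have gy := gmap_mem x f (P := fun u => u ≠ y) hfy i' h2
      have gz := gmap_mem x f (P := fun u => u ≠ z) hfz i' h2
      simp [gx, gy, gz]
  by_cases hi1 : i = 1
  · subst hi1
    have hown : (∑ m ∈ W 1, v 1 m) = 12 := by
      rw [hW1, Finset.sum_singleton, hv, vGen_one]; simp
    by_cases e0 : i' = 0
    · subst e0
      have henv : (∑ m ∈ W 0, v 1 m) = 32 := by
        rw [hW0, Finset.sum_pair hyzne, hv, vGen_one]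
        simp [Ne.symm hxyne, Ne.symm hxzne, hyzne, Ne.symm hyzne]
        norm_num
      have hz : z ∈ W 0 := by rw [hW0]; simp
      have hsup : (24 : ℝ) ≤ (W 0).sup' h (v 1) := by
        have : v 1 z = 24 := by rw [hv, vGen_one]; simp [Ne.symm hxzne, Ne.symm hyzne]
        exact this ▸ Finset.le_sup' (v 1) hz
      rw [hown, henv]
      linarith
    · apply ef1_of_le v hvnn W _ _ h
      rw [hown]
      by_cases e1 : i' = 1
      · rw [e1, hown]
      · rw [hW, allocOf_dummy x f _ _ e0 e1, Finset.sum_singleton, hv, vGen_one]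
        have h2 : 2 ≤ (i' : ℕ) := two_le_val e0 e1
        have gx := gmap_mem x f (P := fun u => u ≠ x) hfx i' h2
        have gy := gmap_mem x f (P := fun u => u ≠ y) hfy i' h2
        have gz := gmap_mem x f (P := fun u => u ≠ z) hfz i' h2
        simp [gx, gy, gz]
  · apply ef1_of_le v hvnn W _ _ h
    apply dummy_le x y z 12 8 24 hf hfx hfy hfz _ _ ?_ ?_ i' hi0 hi1
    · intro m hm
      simp only [Finset.mem_insert, Finset.mem_singleton] at hm
      tauto
    · intro m hm
      simp only [Finset.mem_singleton] at hm
      tauto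

lemma witnessB (G : SimpleGraph M) [DecidableRel G.Adj] (x y z : M) {k : ℕ}
    {f : Fin k → M} (hf : Function.Injective f)
    (hfx : ∀ j, f j ≠ x) (hfy : ∀ j, f j ≠ y) (hfz : ∀ j, f j ≠ z)
    (hxyne : x ≠ y) (hxzne : x ≠ z) (hyzne : y ≠ z) :
    EF1 (vGen x y z 0 8 16 f) (allocOf x f ({x, z} : Finset M) {y}) := by
  set v := vGen x y z 0 8 16 f with hv
  set W := allocOf x f ({x, z} : Finset M) {y} with hW
  have hvnn : ∀ i m, 0 ≤ v i m := vGen_nonneg x y z (by norm_num) (by norm_num) (by norm_num) f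
  have hW0 : W 0 = ({x, z} : Finset M) := allocOf_zero x f _ _
  have hW1 : W 1 = ({y} : Finset M) := allocOf_one x f _ _
  intro i i' h
  by_cases hi0 : i = 0
  · subst hi0
    apply ef1_of_le v hvnn W _ _ h
    have hown : (∑ m ∈ W 0, v 0 m) = 9 := by
      rw [hW0, Finset.sum_pair hxzne, hv, vGen_zero]
      simp [hxyne, hxzne, Ne.symm hxzne, Ne.symm hyzne]
      norm_num
    rw [hown]
    by_cases e0 : i' = 0
    · rw [e0, hown]
    by_cases e1 : i' = 1
    · rw [e1, hW1, Finset.sum_singleton, hv, vGen_zero]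
      simp [Ne.symm hxyne]
      norm_num
    · rw [hW, allocOf_dummy x f _ _ e0 e1, Finset.sum_singleton, hv, vGen_zero]
      have h2 : 2 ≤ (i' : ℕ) := two_le_val e0 e1
      have gx := gmap_mem x f (P := fun u => u ≠ x) hfx i' h2
      have gy := gmap_mem x f (P := fun u => u ≠ y) hfy i' h2
      have gz := gmap_mem x f (P := fun u => u ≠ z) hfz i' h2
      simp [gx, gy, gz]
  by_cases hi1 : i = 1
  · subst hi1
    have hown : (∑ m ∈ W 1, v 1 m) = 8 := by
      rw [hW1, Finset.sum_singleton, hv, vGen_one]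
      simp [Ne.symm hxyne]
    by_cases e0 : i' = 0
    · subst e0
      have henv : (∑ m ∈ W 0, v 1 m) = 16 := by
        rw [hW0, Finset.sum_pair hxzne, hv, vGen_one]
        simp [Ne.symm hxzne, Ne.symm hyzne]
      have hz : z ∈ W 0 := by rw [hW0]; simp
      have hsup : (16 : ℝ) ≤ (W 0).sup' h (v 1) := by
        have : v 1 z = 16 := by rw [hv, vGen_one]; simp [Ne.symm hxzne, Ne.symm hyzne]
        exact this ▸ Finset.le_sup' (v 1) hz
      rw [hown, henv]
      linarith
    · apply ef1_of_le v hvnn W _ _ h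
      rw [hown]
      by_cases e1 : i' = 1
      · rw [e1, hown]
      · rw [hW, allocOf_dummy x f _ _ e0 e1, Finset.sum_singleton, hv, vGen_one]
        have h2 : 2 ≤ (i' : ℕ) := two_le_val e0 e1
        have gx := gmap_mem x f (P := fun u => u ≠ x) hfx i' h2
        have gy := gmap_mem x f (P := fun u => u ≠ y) hfy i' h2
        have gz := gmap_mem x f (P := fun u => u ≠ z) hfz i' h2
        simp [gx, gy, gz]
  · apply ef1_of_le v hvnn W _ _ h
    apply dummy_le x y z 0 8 16 hf hfx hfy hfz _ _ ?_ ?_ i' hi0 hi1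
    · intro m hm
      simp only [Finset.mem_insert, Finset.mem_singleton] at hm
      tauto
    · intro m hm
      simp only [Finset.mem_singleton] at hm
      tauto

end MNWAux

namespace MNWAux

variable {M : Type*} [Fintype M] [DecidableEq M]

lemma coreA (G : SimpleGraph M) [DecidableRel G.Adj] (x y z : M) {k : ℕ}
    (f : Fin k → M) (hf : Function.Injective f)
    (hfx : ∀ j, f j ≠ x) (hfy : ∀ j, f j ≠ y) (hfz : ∀ j, f j ≠ z)
    (hcov : ∀ m : M, m ≠ x → m ≠ y → m ≠ z → ∃ j, f j = m)
    (hxy : G.Adj x y) (hxz : G.Adj x z) (hyz : ¬ G.Adj y z) (hyzne : y ≠ z) :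
    ∃ v : Fin (k + 2) → M → ℝ, (∀ i j, 0 ≤ v i j) ∧
      (∃ A : Fin (k + 2) → Finset M, IsAllocation A ∧ FeasibleAlloc G A ∧ EF1 v A) ∧
      (∀ A : Fin (k + 2) → Finset M, IsMNW G v A → ¬ EF1 v A) := by
  have hxyne : x ≠ y := G.ne_of_adj hxy
  have hxzne : x ≠ z := G.ne_of_adj hxz
  have hnn : ∀ i m, 0 ≤ vGen x y z 12 8 24 f i m :=
    vGen_nonneg x y z (by norm_num) (by norm_num) (by norm_num) f
  refine ⟨vGen x y z 12 8 24 f, hnn, ⟨allocOf x f ({y, z} : Finset M) {x}, ?_, ?_, ?_⟩, ?_⟩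
  · apply isAllocation_allocOf x hf
    · intro j; simp [hfy j, hfz j]
    · intro j; simp [hfx j]
    · simp only [Finset.disjoint_singleton_right, Finset.mem_insert, Finset.mem_singleton]
      push_neg
      exact ⟨hxyne, hxzne⟩
    · intro m h1 h2
      simp only [Finset.mem_singleton, Finset.mem_insert] at h1 h2
      push_neg at h1
      exact hcov m h2 h1.1 h1.2
  · exact feasible_allocOf G x f _ _ (indep_pair G hyz) (indep_single G x)
  · exact witnessA G x y z hf hfx hfy hfz hxyne hxzne hyzne
  · rintro A ⟨⟨hdisj, _⟩, hfeas, hmax⟩ hef1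
    have hd := hdisj 0 1 zero_ne_one'
    have d1 : ¬(x ∈ A 0 ∧ x ∈ A 1) := fun h => Finset.disjoint_left.mp hd h.1 h.2
    have d2 : ¬(y ∈ A 0 ∧ y ∈ A 1) := fun h => Finset.disjoint_left.mp hd h.1 h.2
    have d3 : ¬(z ∈ A 0 ∧ z ∈ A 1) := fun h => Finset.disjoint_left.mp hd h.1 h.2
    have e1 : ¬(x ∈ A 0 ∧ y ∈ A 0) := fun h => hfeas 0 x h.1 y h.2 hxy
    have e2 : ¬(x ∈ A 0 ∧ z ∈ A 0) := fun h => hfeas 0 x h.1 z h.2 hxz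
    have e3 : ¬(x ∈ A 1 ∧ y ∈ A 1) := fun h => hfeas 1 x h.1 y h.2 hxy
    have e4 : ¬(x ∈ A 1 ∧ z ∈ A 1) := fun h => hfeas 1 x h.1 z h.2 hxz
    have kill := killGen x y z f hxyne hxzne hyzne 12 8 24 A hd hef1
    exact negGen G x y z hf hfx hfy hfz hcov hxyne hxzne hyzne hyz 12 8 24 hnn A hmax
      120 (by norm_num) (bashA x y z hxyne hxzne hyzne f A d1 d2 d3 e1 e2 e3 e4 kill)

lemma coreB (G : SimpleGraph M) [DecidableRel G.Adj] (x y z : M) {k : ℕ}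
    (f : Fin k → M) (hf : Function.Injective f)
    (hfx : ∀ j, f j ≠ x) (hfy : ∀ j, f j ≠ y) (hfz : ∀ j, f j ≠ z)
    (hcov : ∀ m : M, m ≠ x → m ≠ y → m ≠ z → ∃ j, f j = m)
    (hxy : G.Adj x y) (hxz : ¬ G.Adj x z) (hyz : ¬ G.Adj y z) (hyzne : y ≠ z)
    (hxzne : x ≠ z) :
    ∃ v : Fin (k + 2) → M → ℝ, (∀ i j, 0 ≤ v i j) ∧
      (∃ A : Fin (k + 2) → Finset M, IsAllocation A ∧ FeasibleAlloc G A ∧ EF1 v A) ∧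
      (∀ A : Fin (k + 2) → Finset M, IsMNW G v A → ¬ EF1 v A) := by
  have hxyne : x ≠ y := G.ne_of_adj hxy
  have hnn : ∀ i m, 0 ≤ vGen x y z 0 8 16 f i m :=
    vGen_nonneg x y z (by norm_num) (by norm_num) (by norm_num) f
  refine ⟨vGen x y z 0 8 16 f, hnn, ⟨allocOf x f ({x, z} : Finset M) {y}, ?_, ?_, ?_⟩, ?_⟩
  · apply isAllocation_allocOf x hf
    · intro j; simp [hfx j, hfz j]
    · intro j; simp [hfy j]
    · simp only [Finset.disjoint_singleton_right, Finset.mem_insert, Finset.mem_singleton]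
      push_neg
      exact ⟨Ne.symm hxyne, hyzne⟩
    · intro m h1 h2
      simp only [Finset.mem_singleton, Finset.mem_insert] at h1 h2
      push_neg at h1
      exact hcov m h1.1 h2 h1.2
  · exact feasible_allocOf G x f _ _ (indep_pair G hxz) (indep_single G y)
  · exact witnessB G x y z hf hfx hfy hfz hxyne hxzne hyzne
  · rintro A ⟨⟨hdisj, _⟩, hfeas, hmax⟩ hef1
    have hd := hdisj 0 1 zero_ne_one'
    have d1 : ¬(x ∈ A 0 ∧ x ∈ A 1) := fun h => Finset.disjoint_left.mp hd h.1 h.2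
    have d2 : ¬(y ∈ A 0 ∧ y ∈ A 1) := fun h => Finset.disjoint_left.mp hd h.1 h.2
    have d3 : ¬(z ∈ A 0 ∧ z ∈ A 1) := fun h => Finset.disjoint_left.mp hd h.1 h.2
    have e1 : ¬(x ∈ A 0 ∧ y ∈ A 0) := fun h => hfeas 0 x h.1 y h.2 hxy
    have e3 : ¬(x ∈ A 1 ∧ y ∈ A 1) := fun h => hfeas 1 x h.1 y h.2 hxy
    have kill := killGen x y z f hxyne hxzne hyzne 0 8 16 A hd hef1
    exact negGen G x y z hf hfx hfy hfz hcov hxyne hxzne hyzne hyz 0 8 16 hnn A hmax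
      80 (by norm_num) (bashB x y z hxyne hxzne hyzne f A d1 d2 d3 e1 e3 kill)

end MNWAux

open MNWAux

/-- If the conflict graph `G` is neither complete nor edgeless, then there are
a number of agents `n ≥ Δ(G)` and nonnegative additive valuations such that the
resulting instance has at least one feasible EF1 allocation, but no maximum
Nash welfare allocation is EF1. -/
theorem mnw_not_ef1_of_neither_complete_nor_empty {M : Type*} [Fintype M]
    [DecidableEq M] (G : SimpleGraph M) [DecidableRel G.Adj]
    (hNotComplete : ∃ j k : M, j ≠ k ∧ ¬ G.Adj j k)
    (hNotEmpty : ∃ j k : M, G.Adj j k) :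
    ∃ n : ℕ, G.maxDegree ≤ n ∧
      ∃ v : Fin n → M → ℝ, (∀ i j, 0 ≤ v i j) ∧
        (∃ A : Fin n → Finset M, IsAllocation A ∧ FeasibleAlloc G A ∧ EF1 v A) ∧
        (∀ A : Fin n → Finset M, IsMNW G v A → ¬ EF1 v A) := by
  obtain ⟨c, d, hcd, hcdn⟩ := hNotComplete
  obtain ⟨u, w, huw⟩ := hNotEmpty
  obtain ⟨x, y, z, hxy, hyz, hyzne⟩ :
      ∃ x y z : M, G.Adj x y ∧ ¬ G.Adj y z ∧ y ≠ z := by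
    by_cases h1 : u = c
    · exact ⟨w, u, d, huw.symm, by rw [h1]; exact hcdn, by rw [h1]; exact hcd⟩
    · by_cases h2 : G.Adj u c
      · exact ⟨u, c, d, h2, hcdn, hcd⟩
      · exact ⟨w, u, c, huw.symm, h2, h1⟩
  have hxyne : x ≠ y := G.ne_of_adj hxy
  have hxzne : x ≠ z := by rintro rfl; exact hyz hxy.symm
  have h3card : ({x, y, z} : Finset M).card = 3 := by
    rw [Finset.card_insert_of_notMem (by simp [hxyne, hxzne]),
      Finset.card_insert_of_notMem (by simp [hyzne]), Finset.card_singleton]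
  have hcard3 : 3 ≤ Fintype.card M := by
    have h := Finset.card_le_univ ({x, y, z} : Finset M)
    omega
  set k := Fintype.card M - 3 with hk
  have hcardk : Fintype.card M = k + 3 := by omega
  set D := (Finset.univ : Finset M) \ ({x, y, z} : Finset M) with hD
  have hDcard : D.card = k := by
    rw [hD, Finset.card_sdiff_of_subset (Finset.subset_univ _), Finset.card_univ, h3card]
  set e := D.equivFin with he
  set f : Fin k → M := fun j => ((e.symm ⟨(j : ℕ), by rw [hDcard]; exact j.isLt⟩ : ↥D) : M)
    with hfdef
  have hfD : ∀ j, f j ∈ D := fun j => (e.symm _).2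
  have hfx : ∀ j, f j ≠ x := by
    intro j
    have := hfD j
    rw [hD, Finset.mem_sdiff] at this
    simp only [Finset.mem_insert, Finset.mem_singleton] at this
    push_neg at this
    exact this.2.1
  have hfy : ∀ j, f j ≠ y := by
    intro j
    have := hfD j
    rw [hD, Finset.mem_sdiff] at this
    simp only [Finset.mem_insert, Finset.mem_singleton] at this
    push_neg at this
    exact this.2.2.1
  have hfz : ∀ j, f j ≠ z := by
    intro j
    have := hfD j
    rw [hD, Finset.mem_sdiff] at this
    simp only [Finset.mem_insert, Finset.mem_singleton] at this
    push_neg at this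
    exact this.2.2.2
  have hf : Function.Injective f := by
    intro a b hab
    rw [hfdef] at hab
    have h2 := e.symm.injective (Subtype.ext hab)
    have h3 := congrArg Fin.val h2
    exact Fin.ext h3
  have hcov : ∀ m : M, m ≠ x → m ≠ y → m ≠ z → ∃ j, f j = m := by
    intro m h1 h2 h3
    have hm : m ∈ D := by
      rw [hD, Finset.mem_sdiff]
      simp [h1, h2, h3]
    refine ⟨⟨((e ⟨m, hm⟩ : Fin D.card) : ℕ), by rw [← hDcard]; exact (e ⟨m, hm⟩).isLt⟩, ?_⟩
    rw [hfdef]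
    have h4 : (⟨((e ⟨m, hm⟩ : Fin D.card) : ℕ), by exact (e ⟨m, hm⟩).isLt⟩ : Fin D.card)
        = e ⟨m, hm⟩ := Fin.ext rfl
    show ((e.symm _ : ↥D) : M) = m
    rw [h4, Equiv.symm_apply_apply]
  refine ⟨k + 2, ?_, ?_⟩
  · have : Nonempty M := ⟨x⟩
    have h := G.maxDegree_lt_card_verts
    omega
  · by_cases hxz : G.Adj x z
    · exact coreA G x y z f hf hfx hfy hfz hcov hxy hxz hyz hyzne
    · exact coreB G x y z f hf hfx hfy hfz hcov hxy hxz hyz hyzne hxzne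
end

section
/- For all integers n and d with n > d ≥ 0, the following chain of inequalities holds: (1/(d+1))·(1 − (1 − 1/n)^{d+1}) ≥ (1/n)·(1 − (1 − 1/n)^n) ≥ (1/n)·(1 − 1/e). (This is the key bound showing that, in the randomized coloring procedure, each item remains allocated to any fixed agent with probability at least (1 − 1/e)/n when the item has degree d in the conflict graph and there are n > d agents.) -/
lemma aux_key (x : ℝ) (hx0 : 0 ≤ x) (hx1 : x ≤ 1) (m n : ℕ) (hm : 1 ≤ m) (hmn : m ≤ n) :
    (m : ℝ) * (1 - x ^ n) ≤ (n : ℝ) * (1 - x ^ m) := by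
  have hgeom : ∀ k : ℕ, 1 - x ^ k = (1 - x) * ∑ i ∈ Finset.range k, x ^ i := by
    intro k
    have := geom_sum_mul x k
    nlinarith [this]
  rw [hgeom n, hgeom m]
  -- main inequality: n * S_m ≥ m * S_n
  have key : (m : ℝ) * ∑ i ∈ Finset.range n, x ^ i ≤ (n : ℝ) * ∑ i ∈ Finset.range m, x ^ i := by
    have hsplit : ∑ i ∈ Finset.range n, x ^ i =
        (∑ i ∈ Finset.range m, x ^ i) + ∑ i ∈ Finset.Ico m n, x ^ i := by
      rw [← Finset.sum_range_add_sum_Ico _ hmn]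
    have hT : ∑ i ∈ Finset.Ico m n, x ^ i ≤ (n - m : ℕ) * x ^ (m - 1) := by
      have := Finset.sum_le_card_nsmul (Finset.Ico m n) (fun i => x ^ i) (x ^ (m-1))
        (fun i hi => by
          have : m - 1 ≤ i := le_trans (Nat.sub_le m 1) (Finset.mem_Ico.mp hi).1
          exact pow_le_pow_of_le_one hx0 hx1 this)
      simpa [Nat.card_Ico, nsmul_eq_mul] using this
    have hSm : (m : ℕ) * x ^ (m - 1) ≤ ∑ i ∈ Finset.range m, x ^ i := by
      have := Finset.card_nsmul_le_sum (Finset.range m) (fun i => x ^ i) (x ^ (m-1))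
        (fun i hi => by
          have : i ≤ m - 1 := Nat.le_sub_one_of_lt (Finset.mem_range.mp hi)
          exact pow_le_pow_of_le_one hx0 hx1 this)
      simpa [Finset.card_range, nsmul_eq_mul] using this
    have hxp : 0 ≤ x ^ (m-1) := pow_nonneg hx0 _
    have hcast : ((n - m : ℕ) : ℝ) = (n : ℝ) - m := by
      push_cast [Nat.cast_sub hmn]; ring
    rw [hsplit]
    have h1 : (m : ℝ) * ∑ i ∈ Finset.Ico m n, x ^ i ≤ ((n:ℝ) - m) * ∑ i ∈ Finset.range m, x ^ i := by
      calc (m : ℝ) * ∑ i ∈ Finset.Ico m n, x ^ i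
          ≤ (m : ℝ) * ((n - m : ℕ) * x ^ (m-1)) := by
            apply mul_le_mul_of_nonneg_left hT (by positivity)
        _ = ((n:ℝ) - m) * ((m:ℝ) * x ^ (m-1)) := by rw [hcast]; ring
        _ ≤ ((n:ℝ) - m) * ∑ i ∈ Finset.range m, x ^ i := by
            apply mul_le_mul_of_nonneg_left hSm
            have : (m:ℝ) ≤ n := by exact_mod_cast hmn
            linarith
    nlinarith
  have h1x : 0 ≤ 1 - x := by linarith
  nlinarith [key]

/-- For integers `n > d ≥ 0`, the chain of inequalities
`(1/(d+1))·(1 − (1 − 1/n)^(d+1)) ≥ (1/n)·(1 − (1 − 1/n)^n) ≥ (1/n)·(1 − 1/e)`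
holds; this is the key bound in the randomized coloring procedure, showing that
an item of degree `d` remains allocated to any fixed agent with probability at
least `(1 − 1/e)/n` when there are `n > d` agents. -/
theorem randomized_coloring_probability_bound (n d : ℕ) (h : d < n) :
    (1 / ((d : ℝ) + 1)) * (1 - (1 - 1 / (n : ℝ)) ^ (d + 1)) ≥
        (1 / (n : ℝ)) * (1 - (1 - 1 / (n : ℝ)) ^ n) ∧
      (1 / (n : ℝ)) * (1 - (1 - 1 / (n : ℝ)) ^ n) ≥
        (1 / (n : ℝ)) * (1 - 1 / Real.exp 1) := by
  have hn1 : 1 ≤ n := Nat.one_le_of_lt (Nat.lt_of_le_of_lt (Nat.zero_le d) h)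
  have hnR : (1 : ℝ) ≤ n := by exact_mod_cast hn1
  have hnpos : (0:ℝ) < n := by linarith
  set x : ℝ := 1 - 1 / n with hxdef
  have hx0 : 0 ≤ x := by
    rw [hxdef, sub_nonneg, div_le_one hnpos]; exact hnR
  have hx1 : x ≤ 1 := by
    have h0 : (0:ℝ) ≤ 1 / n := by positivity
    rw [hxdef]; linarith
  constructor
  · have key := aux_key x hx0 hx1 (d+1) n (Nat.le_add_left 1 d) h
    have hd1 : (0:ℝ) < (d:ℝ) + 1 := by positivity
    rw [ge_iff_le, div_mul_eq_mul_div, div_mul_eq_mul_div, div_le_div_iff₀ hnpos hd1]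
    push_cast at key ⊢
    nlinarith [key]
  · have hexp : x ^ n ≤ 1 / Real.exp 1 := by
      have h1 : x ≤ Real.exp (-(1/n)) := by
        have := Real.add_one_le_exp (-(1/(n:ℝ)))
        rw [hxdef]; linarith
      calc x ^ n ≤ (Real.exp (-(1/n))) ^ n := pow_le_pow_left₀ hx0 h1 n
        _ = Real.exp (-(1/n) * n) := by rw [← Real.exp_nat_mul]; ring_nf
        _ = Real.exp (-1) := by congr 1; field_simp
        _ = 1 / Real.exp 1 := by rw [Real.exp_neg]; field_simp
    apply mul_le_mul_of_nonneg_left _ (by positivity)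
    linarith
end

section
/- Let (N, M, V, G) be a problem instance with n = |N| > Δ(G) in which all agents have the identical valuation v : M → [0, 1], and let W = v(M). Then for any constant c > √8 there exists a feasible allocation in which every agent receives a bundle of value at least (1 − 1/e)·(W/n) − c·√(W·ln n); equivalently, an α-approximately proportional feasible allocation exists with α ≥ 1 − 1/e − c·n·√(ln(n)/W). -/
open Finset

set_option maxHeartbeats 1600000

lemma exp_le_quad {x : ℝ} (h0 : 0 ≤ x) (h1 : x ≤ 1) : Real.exp x ≤ 1 + x + x^2 := by
  have hb := Real.exp_bound (x := x) (by rw [abs_of_nonneg h0]; exact h1) (n := 2) (by norm_num)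
  have hs : ∑ m ∈ range 2, x ^ m / (Nat.factorial m : ℝ) = 1 + x := by
    simp [Finset.sum_range_succ, Nat.factorial]
  rw [hs, abs_of_nonneg h0] at hb
  have h2 : ((Nat.succ 2 : ℕ) : ℝ) / ((Nat.factorial 2 : ℕ) * (2:ℕ) : ℝ) = 3/4 := by
    norm_num [Nat.factorial]
  have := abs_le.1 hb
  have h3 := this.2
  rw [h2] at h3
  nlinarith [h3, sq_nonneg x]


lemma one_sub_le_exp_mul {x : ℝ} (h0 : 0 ≤ x) (h1 : x ≤ 1) :
    1 - x ≤ Real.exp (-x) * (1 - x^3) := by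
  have h2 : (1 - x) * Real.exp x ≤ 1 - x^3 := by
    have := exp_le_quad h0 h1
    nlinarith [Real.exp_pos x, this]
  have h3 : Real.exp (-x) * ((1-x) * Real.exp x) = 1 - x := by
    rw [← mul_assoc, mul_comm (Real.exp (-x)), mul_assoc, ← Real.exp_add]
    simp
  calc 1 - x = Real.exp (-x) * ((1-x) * Real.exp x) := h3.symm
    _ ≤ Real.exp (-x) * (1 - x^3) := mul_le_mul_of_nonneg_left h2 (Real.exp_pos _).le


lemma q_pow_margin {n : ℕ} (hn : 2 ≤ n) :
    (1 - 1/(n:ℝ))^n ≤ 1 / Real.exp 1 - 1/(6*(n:ℝ)^2) := by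
  have hnR : (2:ℝ) ≤ (n:ℝ) := by exact_mod_cast hn
  have hnpos : (0:ℝ) < n := by linarith
  set x : ℝ := 1/(n:ℝ) with hx
  have hx0 : 0 ≤ x := by positivity
  have hxval : x * n = 1 := by rw [hx]; field_simp
  have hx1 : x ≤ 1 := by rw [hx, div_le_one hnpos]; linarith
  have h1 : 1 - x ≤ Real.exp (-x) * (1 - x^3) := one_sub_le_exp_mul hx0 hx1
  have hq0 : (0:ℝ) ≤ 1 - x := by linarith
  have hx3 : x^3 ≤ 1 := by
    calc x^3 ≤ 1^3 := pow_le_pow_left₀ hx0 hx1 3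
      _ = 1 := one_pow 3
  have hstep : (1 - x)^n ≤ (Real.exp (-x))^n * (1 - x^3)^n := by
    calc (1-x)^n ≤ (Real.exp (-x) * (1 - x^3))^n := pow_le_pow_left₀ hq0 h1 n
      _ = (Real.exp (-x))^n * (1 - x^3)^n := mul_pow _ _ _
  have hexpn : (Real.exp (-x))^n = Real.exp (-1) := by
    rw [← Real.exp_nat_mul]
    congr 1
    rw [hx]; field_simp
  set z : ℝ := 1/(n:ℝ)^2 with hzdef
  have hz0 : 0 ≤ z := by positivity
  have hz1 : z ≤ 1 := by
    rw [hzdef, div_le_one (by positivity)]; nlinarith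
  have hcube : (1 - x^3)^n ≤ Real.exp (-z) := by
    have h4 : 1 - x^3 ≤ Real.exp (-x^3) := by
      have := Real.add_one_le_exp (-x^3); linarith
    have h5 : (0:ℝ) ≤ 1 - x^3 := by linarith
    calc (1-x^3)^n ≤ (Real.exp (-x^3))^n := pow_le_pow_left₀ h5 h4 n
      _ = Real.exp (n * (-x^3)) := by rw [← Real.exp_nat_mul]
      _ ≤ Real.exp (-z) := by
          apply Real.exp_le_exp.2
          rw [hzdef, hx]
          have : (n:ℝ) * -(1/(n:ℝ))^3 = -(1/(n:ℝ)^2) := by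
            field_simp
          rw [this]
  have hz : Real.exp (-z) ≤ 1 - z/2 := by
    have h6 : 1 + z ≤ Real.exp z := by have := Real.add_one_le_exp z; linarith
    have h7 : Real.exp (-z) ≤ 1/(1+z) := by
      rw [Real.exp_neg, one_div]
      exact inv_anti₀ (by linarith) h6
    have h8 : 1/(1+z) ≤ 1 - z/2 := by
      rw [div_le_iff₀ (by linarith)]
      nlinarith
    linarith
  have hcomb : (1-x)^n ≤ Real.exp (-1) * (1 - z/2) := by
    calc (1-x)^n ≤ (Real.exp (-x))^n * (1 - x^3)^n := hstep
      _ = Real.exp (-1) * (1 - x^3)^n := by rw [hexpn]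
      _ ≤ Real.exp (-1) * (1 - z/2) := by
          apply mul_le_mul_of_nonneg_left _ (Real.exp_pos _).le
          exact le_trans hcube hz
  have he3 : (1:ℝ)/3 ≤ Real.exp (-1) := by
    rw [Real.exp_neg, one_div]
    have h9 : Real.exp 1 ≤ 3 := by
      have := Real.exp_one_lt_d9; linarith
    exact inv_anti₀ (Real.exp_pos 1) h9
  have hinv : Real.exp (-1) = 1 / Real.exp 1 := by rw [Real.exp_neg, one_div]
  have hfin : Real.exp (-1) * (1 - z/2) ≤ 1/Real.exp 1 - 1/(6*(n:ℝ)^2) := by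
    have hzz : 1/(6*(n:ℝ)^2) = z/6 := by rw [hzdef]; ring
    rw [hzz, ← hinv]
    have : Real.exp (-1) * (1 - z/2) = Real.exp (-1) - Real.exp (-1) * (z/2) := by ring
    rw [this]
    have : Real.exp (-1) * (z/2) ≥ z/6 := by
      calc Real.exp (-1) * (z/2) ≥ (1/3) * (z/2) := by
            apply mul_le_mul_of_nonneg_right he3 (by linarith)
        _ = z/6 := by ring
    linarith
  linarith


lemma pow_sub_pow_le_my {a b : ℝ} (n : ℕ) (hb : 0 ≤ b) (hba : b ≤ a) (ha : a ≤ 1) :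
    a^n - b^n ≤ n * (a - b) * a^(n-1) := by
  have key := geom_sum₂_mul a b n
  rw [← key]
  have hterm : ∀ i ∈ range n, a^i * b^(n-1-i) ≤ a^(n-1) := by
    intro i hi
    have h1 : b^(n-1-i) ≤ a^(n-1-i) := pow_le_pow_left₀ hb hba _
    have h2 : a^i * b^(n-1-i) ≤ a^i * a^(n-1-i) := by
      apply mul_le_mul_of_nonneg_left h1 (pow_nonneg (le_trans hb hba) i)
    have hi' : i < n := mem_range.1 hi
    have h3 : a^i * a^(n-1-i) = a^(n-1) := by
      rw [← pow_add]; congr 1; omega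
    linarith [h2, h3.le]
  have hsum : (∑ i ∈ range n, a^i * b^(n-1-i)) ≤ n * a^(n-1) := by
    calc (∑ i ∈ range n, a^i * b^(n-1-i)) ≤ ∑ _i ∈ range n, a^(n-1) :=
          Finset.sum_le_sum hterm
      _ = n * a^(n-1) := by rw [Finset.sum_const, card_range, nsmul_eq_mul]
  have hab : 0 ≤ a - b := by linarith
  calc (∑ i ∈ range n, a^i * b^(n-1-i)) * (a - b) ≤ (n * a^(n-1)) * (a-b) :=
        mul_le_mul_of_nonneg_right hsum hab
    _ = n * (a-b) * a^(n-1) := by ring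


lemma telescope_sum_bound {n N : ℕ} (hn : 2 ≤ n) (hN : 1 ≤ N)
    (hq : (1 - 1/(n:ℝ))^n ≤ 1/Real.exp 1 - 1/(N:ℝ)) :
    (N:ℝ)*(1 - 1/Real.exp 1) ≤ ∑ k ∈ range N, (1 - ((k:ℝ)+1)/((N:ℝ)*n))^(n-1) := by
  have hnR : (2:ℝ) ≤ (n:ℝ) := by exact_mod_cast hn
  have hNR : (1:ℝ) ≤ (N:ℝ) := by exact_mod_cast hN
  have hNn : (0:ℝ) < (N:ℝ)*n := by positivity
  have hbase0 : ∀ k : ℕ, (k:ℝ) ≤ (N:ℝ)*n → 0 ≤ 1 - (k:ℝ)/((N:ℝ)*n) := by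
    intro k hk
    have : (k:ℝ)/((N:ℝ)*n) ≤ 1 := by rw [div_le_one hNn]; exact hk
    linarith
  have hbase1 : ∀ k : ℕ, 1 - (k:ℝ)/((N:ℝ)*n) ≤ 1 := by
    intro k
    have : 0 ≤ (k:ℝ)/((N:ℝ)*n) := by positivity
    linarith
  -- telescoping
  have htel : 1 - (1-1/(n:ℝ))^n ≤ (1/(N:ℝ)) * ∑ k ∈ range N, (1 - (k:ℝ)/((N:ℝ)*n))^(n-1) := by
    have hterm : ∀ k ∈ range N,
        (1 - (k:ℝ)/((N:ℝ)*n))^n - (1 - ((k:ℝ)+1)/((N:ℝ)*n))^n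
          ≤ (1/(N:ℝ)) * (1 - (k:ℝ)/((N:ℝ)*n))^(n-1) := by
      intro k hk
      have hkN : k < N := mem_range.1 hk
      have hk1 : ((k:ℝ)+1) ≤ (N:ℝ)*n := by
        have h1 : ((k:ℝ)+1) ≤ (N:ℝ) := by exact_mod_cast Nat.succ_le_of_lt hkN
        nlinarith
      have hb0 : 0 ≤ 1 - ((k:ℝ)+1)/((N:ℝ)*n) := by
        have : ((k:ℝ)+1)/((N:ℝ)*n) ≤ 1 := by rw [div_le_one hNn]; exact hk1
        linarith
      have hba : 1 - ((k:ℝ)+1)/((N:ℝ)*n) ≤ 1 - (k:ℝ)/((N:ℝ)*n) := by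
        have h9 : (k:ℝ)/((N:ℝ)*n) ≤ ((k:ℝ)+1)/((N:ℝ)*n) := by
          gcongr
          linarith
        linarith
      have := pow_sub_pow_le_my (a := 1 - (k:ℝ)/((N:ℝ)*n)) (b := 1 - ((k:ℝ)+1)/((N:ℝ)*n))
        n hb0 hba (hbase1 k)
      have hd : (1 - (k:ℝ)/((N:ℝ)*n)) - (1 - ((k:ℝ)+1)/((N:ℝ)*n)) = 1/((N:ℝ)*n) := by
        field_simp
        ring
      rw [hd] at this
      have hco : (n:ℝ) * (1/((N:ℝ)*n)) = 1/(N:ℝ) := by field_simp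
      calc (1 - (k:ℝ)/((N:ℝ)*n))^n - (1 - ((k:ℝ)+1)/((N:ℝ)*n))^n
          ≤ (n:ℝ) * (1/((N:ℝ)*n)) * (1 - (k:ℝ)/((N:ℝ)*n))^(n-1) := this
        _ = (1/(N:ℝ)) * (1 - (k:ℝ)/((N:ℝ)*n))^(n-1) := by rw [hco]
    have hsum := Finset.sum_le_sum hterm
    have hlhs : ∑ k ∈ range N,
        ((1 - (k:ℝ)/((N:ℝ)*n))^n - (1 - ((k:ℝ)+1)/((N:ℝ)*n))^n) = 1 - (1-1/(n:ℝ))^n := by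
      have := Finset.sum_range_sub' (fun k => (1 - (k:ℝ)/((N:ℝ)*n))^n) N
      simp only [Nat.cast_zero, Nat.cast_add, Nat.cast_one] at this ⊢
      rw [this]
      have h11 : ((N:ℝ))/((N:ℝ)*n) = 1/(n:ℝ) := by field_simp
      rw [h11]
      norm_num
    rw [hlhs] at hsum
    rw [Finset.mul_sum]
    exact hsum
  -- shift
  have hshift : ∑ k ∈ range N, (1 - (k:ℝ)/((N:ℝ)*n))^(n-1)
      ≤ 1 + ∑ k ∈ range N, (1 - ((k:ℝ)+1)/((N:ℝ)*n))^(n-1) := by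
    obtain ⟨P, rfl⟩ : ∃ P, N = P + 1 := ⟨N-1, by omega⟩
    rw [Finset.sum_range_succ' (fun k => (1 - (k:ℝ)/(((P+1:ℕ):ℝ)*n))^(n-1)) P]
    rw [Finset.sum_range_succ (fun k => (1 - ((k:ℝ)+1)/(((P+1:ℕ):ℝ)*n))^(n-1)) P]
    have h0 : (1 - ((0:ℕ):ℝ)/(((P+1:ℕ):ℝ)*n))^(n-1) = 1 := by norm_num
    have hlast : 0 ≤ (1 - ((P:ℝ)+1)/(((P+1:ℕ):ℝ)*n))^(n-1) := by
      apply pow_nonneg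
      have := hbase0 (P+1) (by push_cast; nlinarith)
      push_cast at this ⊢
      linarith
    push_cast at h0 hlast ⊢
    linarith
  -- combine
  have hfin : (N:ℝ) * (1 - (1-1/(n:ℝ))^n) - 1 ≤ ∑ k ∈ range N, (1 - ((k:ℝ)+1)/((N:ℝ)*n))^(n-1) := by
    have hNpos : (0:ℝ) < N := by linarith
    have := mul_le_mul_of_nonneg_left htel (le_of_lt hNpos)
    rw [← mul_assoc, mul_one_div, div_self (ne_of_gt hNpos), one_mul] at this
    linarith
  have hlast : (N:ℝ)*(1 - 1/Real.exp 1) ≤ (N:ℝ) * (1 - (1-1/(n:ℝ))^n) - 1 := by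
    have h1 : (N:ℝ) * (1/Real.exp 1 - (1-1/(n:ℝ))^n) ≥ (N:ℝ) * (1/(N:ℝ)) := by
      apply mul_le_mul_of_nonneg_left _ (by linarith)
      linarith
    have h2 : (N:ℝ) * (1/(N:ℝ)) = 1 := by field_simp
    nlinarith
  linarith


section AuxMain
variable {M : Type*} [Fintype M] [DecidableEq M]

def HsetX (G : SimpleGraph M) [DecidableRel G.Adj] {N : ℕ}
    (em : M ≃ Fin (Fintype.card M)) (ρ : M → Fin N) (j : M) : Finset M :=
  (G.neighborFinset j).filter (fun w => ρ j < ρ w ∨ (ρ j = ρ w ∧ em j < em w))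

lemma extend_coloring {M : Type*} [Fintype M] [DecidableEq M]
    (G : SimpleGraph M) [DecidableRel G.Adj] (n : ℕ) (hΔ : G.maxDegree < n)
    (S : Finset M) (f₀ : M → Fin n)
    (h₀ : ∀ j ∉ S, ∀ w ∉ S, G.Adj j w → f₀ j ≠ f₀ w) :
    ∃ f : M → Fin n, (∀ j ∉ S, f j = f₀ j) ∧ ∀ j w, G.Adj j w → f j ≠ f w := by
  classical
  induction S using Finset.strongInduction generalizing f₀ with
  | _ S ih =>
    rcases Finset.eq_empty_or_nonempty S with rfl | ⟨x, hx⟩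
    · exact ⟨f₀, fun j _ => rfl, fun j w hjw => h₀ j (notMem_empty j) w (notMem_empty w) hjw⟩
    · -- choose a color for x avoiding colors of neighbors outside S
      have hn0 : 0 < n := lt_of_le_of_lt (Nat.zero_le _) hΔ
      set used : Finset (Fin n) :=
        ((G.neighborFinset x).filter (fun w => w ∉ S)).image f₀ with hused
      have hcard : used.card < n := by
        calc used.card ≤ ((G.neighborFinset x).filter (fun w => w ∉ S)).card :=
              Finset.card_image_le
          _ ≤ (G.neighborFinset x).card := Finset.card_filter_le _ _
          _ = G.degree x := (G.card_neighborFinset_eq_degree x)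
          _ ≤ G.maxDegree := G.degree_le_maxDegree x
          _ < n := hΔ
      have hex : ∃ c : Fin n, c ∉ used := by
        by_contra h
        push_neg at h
        have : (Finset.univ : Finset (Fin n)) ⊆ used := fun c _ => h c
        have := Finset.card_le_card this
        simp [Fintype.card_fin] at this
        omega
      obtain ⟨c, hc⟩ := hex
      set f₁ : M → Fin n := Function.update f₀ x c with hf₁
      have h₁ : ∀ j ∉ S.erase x, ∀ w ∉ S.erase x, G.Adj j w → f₁ j ≠ f₁ w := by
        intro j hj w hw hjw
        have hne : j ≠ w := G.ne_of_adj hjw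
        by_cases hjx : j = x
        · by_cases hwx : w = x
          · exact absurd (hjx.trans hwx.symm) hne
          · have hwS : w ∉ S := by
              intro hwS
              exact hw (Finset.mem_erase.2 ⟨hwx, hwS⟩)
            have hmem : f₀ w ∈ used := by
              apply Finset.mem_image_of_mem
              rw [Finset.mem_filter, SimpleGraph.mem_neighborFinset]
              exact ⟨hjx ▸ hjw, hwS⟩
            rw [hf₁, hjx]
            rw [Function.update_self, Function.update_of_ne hwx]
            intro hcw
            rw [← hcw] at hmem
            exact hc hmem
        · by_cases hwx : w = x
          · have hjS : j ∉ S := by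
              intro hjS
              exact hj (Finset.mem_erase.2 ⟨hjx, hjS⟩)
            have hmem : f₀ j ∈ used := by
              apply Finset.mem_image_of_mem
              rw [Finset.mem_filter, SimpleGraph.mem_neighborFinset]
              exact ⟨G.adj_symm (hwx ▸ hjw), hjS⟩
            rw [hf₁, hwx, Function.update_self, Function.update_of_ne hjx]
            intro hcw
            rw [hcw] at hmem
            exact hc hmem
          · have hjS : j ∉ S := by
              intro hjS; exact hj (Finset.mem_erase.2 ⟨hjx, hjS⟩)
            have hwS : w ∉ S := by
              intro hwS; exact hw (Finset.mem_erase.2 ⟨hwx, hwS⟩)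
            rw [hf₁, Function.update_of_ne hjx, Function.update_of_ne hwx]
            exact h₀ j hjS w hwS hjw
      obtain ⟨f, hf1, hf2⟩ := ih (S.erase x) (Finset.erase_ssubset hx) f₁ h₁
      refine ⟨f, ?_, hf2⟩
      intro j hjS
      have hjx : j ≠ x := fun h => hjS (h ▸ hx)
      have : j ∉ S.erase x := fun h => hjS (Finset.mem_of_mem_erase h)
      rw [hf1 j this, hf₁, Function.update_of_ne hjx]

lemma prod_indicator_sum (n : ℕ) (hn : 0 < n) (A B : Finset M) (hAB : Disjoint A B) (i : Fin n) :
    ∑ a ∈ Fintype.piFinset (fun _ : M => (univ : Finset (Fin n))),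
      ((∏ x ∈ A, (if a x = i then (1:ℝ) else 0)) * ∏ x ∈ B, (if a x = i then (0:ℝ) else 1))
    = (n:ℝ)^(Fintype.card M - A.card - B.card) * ((n:ℝ)-1)^B.card := by
  classical
  set g : M → Fin n → ℝ := fun w s =>
    if w ∈ A then (if s = i then 1 else 0) else if w ∈ B then (if s = i then 0 else 1) else 1
    with hg
  have hpt : ∀ a : M → Fin n,
      ((∏ x ∈ A, (if a x = i then (1:ℝ) else 0)) * ∏ x ∈ B, (if a x = i then (0:ℝ) else 1))
      = ∏ w : M, g w (a w) := by
    intro a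
    have hsub : A ∪ B ⊆ univ := Finset.subset_univ _
    rw [← Finset.prod_sdiff hsub]
    have h1 : ∏ w ∈ univ \ (A ∪ B), g w (a w) = 1 := by
      apply Finset.prod_eq_one
      intro w hw
      rcases Finset.mem_sdiff.1 hw with ⟨_, hw2⟩
      rw [Finset.mem_union] at hw2
      push_neg at hw2
      rw [hg]
      simp only [hw2.1, if_false, hw2.2]
    have h2 : ∏ w ∈ A ∪ B, g w (a w)
        = (∏ x ∈ A, (if a x = i then (1:ℝ) else 0)) * ∏ x ∈ B, (if a x = i then (0:ℝ) else 1) := by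
      rw [Finset.prod_union hAB]
      congr 1
      · apply Finset.prod_congr rfl
        intro w hw
        rw [hg]; simp only [hw, if_true]
      · apply Finset.prod_congr rfl
        intro w hw
        have hwA : w ∉ A := Finset.disjoint_right.1 hAB hw
        rw [hg]; simp only [hw, hwA, if_false, if_true]
    rw [h1, h2, one_mul]
  rw [Finset.sum_congr rfl (fun a _ => hpt a)]
  rw [← Finset.prod_univ_sum (fun _ => (univ : Finset (Fin n))) g]
  have hfA : ∀ w ∈ A, ∑ s : Fin n, g w s = 1 := by
    intro w hw
    rw [hg]
    simp only [hw, if_true]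
    rw [Finset.sum_ite_eq' univ i (fun _ => (1:ℝ))]
    simp
  have hfB : ∀ w ∈ B, ∑ s : Fin n, g w s = (n:ℝ) - 1 := by
    intro w hw
    have hwA : w ∉ A := Finset.disjoint_right.1 hAB hw
    rw [hg]
    simp only [hw, hwA, if_false, if_true]
    rw [Finset.sum_ite, Finset.sum_const, Finset.sum_const]
    have h1 : (univ.filter (fun s : Fin n => s = i)).card = 1 := by
      rw [Finset.filter_eq']
      simp
    have h2 : (univ.filter (fun s : Fin n => ¬ s = i)).card = n - 1 := by
      have := Finset.card_filter_add_card_filter_not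
        (s := (univ : Finset (Fin n))) (p := fun s => s = i)
      rw [Finset.card_univ, Fintype.card_fin] at this
      omega
    rw [h1, h2]
    simp [Nat.cast_sub hn]
  have hfC : ∀ w, w ∉ A → w ∉ B → ∑ s : Fin n, g w s = (n:ℝ) := by
    intro w hwA hwB
    rw [hg]
    simp only [hwA, hwB, if_false]
    rw [Finset.sum_const, Finset.card_univ, Fintype.card_fin, nsmul_eq_mul, mul_one]
  have hsub : A ∪ B ⊆ univ := Finset.subset_univ _
  have eA : ∏ w ∈ A, (∑ s : Fin n, g w s) = 1 := by
    rw [Finset.prod_congr rfl hfA, Finset.prod_const, one_pow]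
  have eB : ∏ w ∈ B, (∑ s : Fin n, g w s) = ((n:ℝ)-1)^B.card := by
    rw [Finset.prod_congr rfl hfB, Finset.prod_const]
  have eC : ∏ w ∈ univ \ (A ∪ B), (∑ s : Fin n, g w s)
      = (n:ℝ)^(Fintype.card M - A.card - B.card) := by
    have h3 : ∀ w ∈ univ \ (A ∪ B), (∑ s : Fin n, g w s) = (n:ℝ) := by
      intro w hw
      rcases Finset.mem_sdiff.1 hw with ⟨_, hw2⟩
      rw [Finset.mem_union] at hw2
      push_neg at hw2
      exact hfC w hw2.1 hw2.2
    rw [Finset.prod_congr rfl h3, Finset.prod_const]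
    congr 1
    rw [Finset.card_sdiff_of_subset hsub, Finset.card_univ, Finset.card_union_of_disjoint hAB]
    omega
  rw [← Finset.prod_sdiff hsub, Finset.prod_union hAB, eA, eB, eC]
  ring

lemma stepA (G : SimpleGraph M) [DecidableRel G.Adj] (n : ℕ)
    (em : M ≃ Fin (Fintype.card M))
    (hn : 2 ≤ n) (hΔ : G.maxDegree < n) (v : M → ℝ) (hv0 : ∀ j, 0 ≤ v j) :
    ∃ ρ : M → Fin (6*n^2),
      (1 - 1/Real.exp 1) * (∑ j, v j)
        ≤ ∑ j, v j * (1 - 1/(n:ℝ))^((HsetX G em ρ j).card) := by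
  classical
  set N : ℕ := 6*n^2 with hNdef
  have hn0 : 0 < n := by omega
  have hN1 : 1 ≤ N := by rw [hNdef]; nlinarith
  have hNR0 : (0:ℝ) < (N:ℝ) := by exact_mod_cast hN1
  have hnR : (2:ℝ) ≤ (n:ℝ) := by exact_mod_cast hn
  have hnpos : (0:ℝ) < (n:ℝ) := by linarith
  set q : ℝ := 1 - 1/(n:ℝ) with hq
  have hinv : (1:ℝ)/(n:ℝ) ≤ 1 := by rw [div_le_one hnpos]; linarith
  have hq0 : 0 ≤ q := by rw [hq]; linarith
  have hq1 : q ≤ 1 := by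
    have : 0 ≤ 1/(n:ℝ) := by positivity
    rw [hq]; linarith
  set P : Finset (M → Fin N) := Fintype.piFinset (fun _ : M => (univ : Finset (Fin N))) with hP
  have hPcard : P.card = N^(Fintype.card M) := by
    rw [hP, Fintype.card_piFinset]
    simp
  have hPne : P.Nonempty := by
    refine ⟨fun _ => ⟨0, by omega⟩, ?_⟩
    rw [hP, Fintype.mem_piFinset]
    intro a; exact mem_univ _
  have hyper : ∀ j : M,
      ((N:ℝ))^(Fintype.card M) * (1 - 1/Real.exp 1) ≤ ∑ ρ ∈ P, q^((HsetX G em ρ j).card) := by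
    intro j
    set d : ℕ := (G.neighborFinset j).card with hd
    have hdm : d + 1 ≤ Fintype.card M := by
      have hsub : G.neighborFinset j ⊆ univ.erase j := by
        intro w hw
        rw [Finset.mem_erase]
        refine ⟨?_, mem_univ _⟩
        have hadj : G.Adj j w := (SimpleGraph.mem_neighborFinset G j w).1 hw
        exact (G.ne_of_adj hadj).symm
      have h2 := Finset.card_le_card hsub
      rw [Finset.card_erase_of_mem (mem_univ j), Finset.card_univ] at h2
      have hjm : 1 ≤ Fintype.card M := Fintype.card_pos_iff.2 ⟨j⟩
      rw [hd]
      omega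
    have hdn : d ≤ n - 1 := by
      have h1 : d = G.degree j := by rw [hd]; exact G.card_neighborFinset_eq_degree j
      have h2 := G.degree_le_maxDegree j
      omega
    have hfib : ∑ ρ ∈ P, q^((HsetX G em ρ j).card)
        = ∑ t : Fin N, ∑ ρ ∈ P.filter (fun ρ => ρ j = t), q^((HsetX G em ρ j).card) :=
      (Finset.sum_fiberwise P (fun ρ => ρ j) _).symm
    have hfiber : ∀ t : Fin N,
        ((N:ℝ))^(Fintype.card M - 1) * (1 - ((N:ℝ) - (t:ℕ))/((N:ℝ)*n))^(n-1)
          ≤ ∑ ρ ∈ P.filter (fun ρ => ρ j = t), q^((HsetX G em ρ j).card) := by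
      intro t
      set β : ℝ := 1 - ((N:ℝ) - (t:ℕ))/((N:ℝ)*n) with hβ
      have htN : ((t:ℕ):ℝ) ≤ (N:ℝ) := by
        have h1 : ((t:ℕ):ℝ) < (N:ℝ) := by exact_mod_cast t.isLt
        linarith
      have ht0 : (0:ℝ) ≤ ((t:ℕ):ℝ) := by positivity
      have hNn : (0:ℝ) < (N:ℝ)*(n:ℝ) := by positivity
      have hβ0 : 0 ≤ β := by
        rw [hβ]
        have h1 : ((N:ℝ) - (t:ℕ))/((N:ℝ)*n) ≤ 1/(n:ℝ) := by
          rw [div_le_div_iff₀ hNn hnpos]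
          nlinarith
        linarith
      have hβ1 : β ≤ 1 := by
        rw [hβ]
        have h1 : 0 ≤ ((N:ℝ) - (t:ℕ))/((N:ℝ)*n) := by
          apply div_nonneg _ (le_of_lt hNn)
          linarith
        linarith
      set T : M → Finset (Fin N) := fun w => if w = j then {t} else univ with hT
      have hpin : P.filter (fun ρ => ρ j = t) = Fintype.piFinset T := by
        ext ρ
        simp only [Finset.mem_filter, hP, Fintype.mem_piFinset, hT]
        constructor
        · rintro ⟨h1, h2⟩ w
          by_cases hw : w = j
          · subst hw; simp [h2]
          · simp [hw]
        · intro h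
          refine ⟨fun w => mem_univ _, ?_⟩
          have := h j
          simpa using this
      set g : (w : M) → Fin N → ℝ := fun w s =>
        if w ∈ G.neighborFinset j then (if t < s ∨ (t = s ∧ em j < em w) then q else 1) else 1
        with hg
      have hpoint : ∀ ρ ∈ Fintype.piFinset T,
          q^((HsetX G em ρ j).card) = ∏ w : M, g w (ρ w) := by
        intro ρ hρ
        have hρj : ρ j = t := by
          have := (Fintype.mem_piFinset.1 hρ) j
          simpa [hT] using this
        have h1 : ∏ w : M, g w (ρ w) = ∏ w ∈ G.neighborFinset j,
            (if t < ρ w ∨ (t = ρ w ∧ em j < em w) then q else 1) := by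
          rw [← Finset.prod_subset (Finset.subset_univ (G.neighborFinset j))]
          · apply Finset.prod_congr rfl
            intro w hw
            rw [hg]
            simp only [hw, if_true]
          · intro w _ hw
            rw [hg]
            simp only [hw, if_false]
        rw [h1, Finset.prod_ite, Finset.prod_const, Finset.prod_const, one_pow, mul_one]
        congr 1
        rw [HsetX]
        congr 1
        apply Finset.filter_congr
        intro w _
        rw [hρj]
      have hfact : ∑ ρ ∈ Fintype.piFinset T, ∏ w : M, g w (ρ w)
          = ∏ w : M, ∑ s ∈ T w, g w s := (Finset.prod_univ_sum T g).symm
      have hfac_j : ∑ s ∈ T j, g j s = 1 := by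
        simp only [hT, if_true, hg]
        simp [SimpleGraph.notMem_neighborFinset_self]
      have hfac_nbr : ∀ w ∈ G.neighborFinset j, (N:ℝ) * β ≤ ∑ s ∈ T w, g w s := by
        intro w hw
        have hwj : w ≠ j := by
          intro h
          rw [h] at hw
          exact (SimpleGraph.notMem_neighborFinset_self G j) hw
        simp only [hT, hwj, if_false, hg, hw, if_true]
        have hpt : ∀ s : Fin N, (if t ≤ s then q else 1) ≤
            (if t < s ∨ (t = s ∧ em j < em w) then q else 1) := by
          intro s
          by_cases hcond : t < s ∨ (t = s ∧ em j < em w)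
          · have hts : t ≤ s := by
              rcases hcond with h | ⟨h, _⟩
              · exact le_of_lt h
              · exact le_of_eq h
            simp [hcond, hts]
          · by_cases hts : t ≤ s
            · simp [hcond, hts, hq1]
            · simp [hcond, hts]
        have hsum : ∑ s : Fin N, (if t ≤ s then q else 1) = (N:ℝ) * β := by
          rw [Finset.sum_ite, Finset.sum_const, Finset.sum_const]
          have hc1 : (univ.filter (fun s : Fin N => t ≤ s)) = Finset.Ici t := by
            ext s; simp [Finset.mem_Ici]
          have hc2 : (univ.filter (fun s : Fin N => ¬ t ≤ s)) = Finset.Iio t := by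
            ext s; simp [Finset.mem_Iio, not_le]
          rw [hc1, hc2, Fin.card_Ici, Fin.card_Iio]
          rw [nsmul_eq_mul, nsmul_eq_mul, mul_one]
          rw [hβ]
          rw [Nat.cast_sub (le_of_lt t.isLt)]
          have hn' : (n:ℝ) ≠ 0 := ne_of_gt hnpos
          have hN' : (N:ℝ) ≠ 0 := ne_of_gt hNR0
          rw [hq]
          field_simp
          ring
        calc (N:ℝ) * β = ∑ s : Fin N, (if t ≤ s then q else 1) := hsum.symm
          _ ≤ ∑ s : Fin N, (if t < s ∨ (t = s ∧ em j < em w) then q else 1) :=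
              Finset.sum_le_sum (fun s _ => hpt s)
      have hfac_other : ∀ w, w ≠ j → w ∉ G.neighborFinset j → ∑ s ∈ T w, g w s = (N:ℝ) := by
        intro w hwj hwn
        simp only [hT, hwj, if_false, hg, hwn]
        simp
      -- split the product
      have hsub' : G.neighborFinset j ⊆ univ.erase j := by
        intro w hw
        rw [Finset.mem_erase]
        refine ⟨?_, mem_univ _⟩
        intro h
        rw [h] at hw
        exact (SimpleGraph.notMem_neighborFinset_self G j) hw
      have hprod_ge : ((N:ℝ))^(Fintype.card M - 1) * β^(n-1) ≤ ∏ w : M, ∑ s ∈ T w, g w s := by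
        have h1 : ∏ w : M, (∑ s ∈ T w, g w s)
            = (∑ s ∈ T j, g j s) * ∏ w ∈ univ.erase j, (∑ s ∈ T w, g w s) :=
          (Finset.mul_prod_erase univ _ (mem_univ j)).symm
        have h2 : ∏ w ∈ univ.erase j, (∑ s ∈ T w, g w s)
            = (∏ w ∈ univ.erase j \ G.neighborFinset j, (∑ s ∈ T w, g w s))
              * ∏ w ∈ G.neighborFinset j, (∑ s ∈ T w, g w s) :=
          (Finset.prod_sdiff hsub').symm
        have h3 : ∏ w ∈ univ.erase j \ G.neighborFinset j, (∑ s ∈ T w, g w s)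
            = (N:ℝ)^(Fintype.card M - 1 - d) := by
          rw [Finset.prod_congr rfl (fun w hw => ?_), Finset.prod_const]
          · congr 1
            rw [Finset.card_sdiff_of_subset hsub', Finset.card_erase_of_mem (mem_univ j),
              Finset.card_univ, ← hd]
          · rcases Finset.mem_sdiff.1 hw with ⟨hw1, hw2⟩
            exact hfac_other w (Finset.mem_erase.1 hw1).1 hw2
        have h4 : ((N:ℝ)*β)^d ≤ ∏ w ∈ G.neighborFinset j, (∑ s ∈ T w, g w s) := by
          have := Finset.prod_le_prod (s := G.neighborFinset j)
            (f := fun _ => (N:ℝ)*β) (g := fun w => ∑ s ∈ T w, g w s)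
            (fun w _ => by positivity) (fun w hw => hfac_nbr w hw)
          rw [Finset.prod_const, ← hd] at this
          exact this
        rw [h1, hfac_j, one_mul, h2, h3]
        have h5 : ((N:ℝ))^(Fintype.card M - 1) * β^(n-1) ≤ (N:ℝ)^(Fintype.card M - 1 - d) * ((N:ℝ)*β)^d := by
          rw [mul_pow, ← mul_assoc]
          have he : (N:ℝ)^(Fintype.card M - 1 - d) * (N:ℝ)^d = (N:ℝ)^(Fintype.card M - 1) := by
            rw [← pow_add]
            congr 1
            omega
          rw [he]
          apply mul_le_mul_of_nonneg_left _ (by positivity)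
          apply pow_le_pow_of_le_one hβ0 hβ1
          omega
        calc ((N:ℝ))^(Fintype.card M - 1) * β^(n-1) ≤ (N:ℝ)^(Fintype.card M - 1 - d) * ((N:ℝ)*β)^d := h5
          _ ≤ (N:ℝ)^(Fintype.card M - 1 - d) * ∏ w ∈ G.neighborFinset j, (∑ s ∈ T w, g w s) := by
              apply mul_le_mul_of_nonneg_left h4 (by positivity)
      calc ((N:ℝ))^(Fintype.card M - 1) * β^(n-1) ≤ ∏ w : M, ∑ s ∈ T w, g w s := hprod_ge
        _ = ∑ ρ ∈ Fintype.piFinset T, ∏ w : M, g w (ρ w) := hfact.symm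
        _ = ∑ ρ ∈ Fintype.piFinset T, q^((HsetX G em ρ j).card) :=
            (Finset.sum_congr rfl (fun ρ hρ => (hpoint ρ hρ).symm))
        _ = ∑ ρ ∈ P.filter (fun ρ => ρ j = t), q^((HsetX G em ρ j).card) := by rw [hpin]
    -- sum over fibers
    have hreflect : (N:ℝ)*(1 - 1/Real.exp 1)
        ≤ ∑ t : Fin N, (1 - ((N:ℝ) - (t:ℕ))/((N:ℝ)*n))^(n-1) := by
      set F : ℕ → ℝ := fun k => (1 - ((N:ℝ) - (k:ℝ))/((N:ℝ)*n))^(n-1) with hF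
      have h1 : ∑ t : Fin N, (1 - ((N:ℝ) - (t:ℕ))/((N:ℝ)*n))^(n-1) = ∑ k ∈ range N, F k :=
        Fin.sum_univ_eq_sum_range F N
      have h2 : ∑ k ∈ range N, F k = ∑ k ∈ range N, F (N-1-k) :=
        (Finset.sum_range_reflect F N).symm
      have h3 : ∀ k ∈ range N, F (N-1-k) = (1 - ((k:ℝ)+1)/((N:ℝ)*n))^(n-1) := by
        intro k hk
        have hkN : k < N := mem_range.1 hk
        have hcast : ((N-1-k : ℕ):ℝ) = (N:ℝ) - ((k:ℝ)+1) := by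
          have h4 : (N-1-k : ℕ) = N - (k+1) := by omega
          rw [h4, Nat.cast_sub (by omega)]
          push_cast
          ring
        show (1 - ((N:ℝ) - ((N-1-k:ℕ):ℝ))/((N:ℝ)*n))^(n-1) = (1 - ((k:ℝ)+1)/((N:ℝ)*n))^(n-1)
        rw [hcast]
        ring_nf
      rw [h1, h2, Finset.sum_congr rfl h3]
      apply telescope_sum_bound hn hN1
      have := q_pow_margin hn
      have hNcast : (6*(n:ℝ)^2) = (N:ℝ) := by rw [hNdef]; push_cast; ring
      rw [hNcast] at this
      exact this
    calc ((N:ℝ))^(Fintype.card M) * (1 - 1/Real.exp 1)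
        = (N:ℝ)^(Fintype.card M - 1) * ((N:ℝ) * (1 - 1/Real.exp 1)) := by
          rw [← mul_assoc, ← pow_succ]
          congr 2
          omega
      _ ≤ (N:ℝ)^(Fintype.card M - 1) * ∑ t : Fin N, (1 - ((N:ℝ) - (t:ℕ))/((N:ℝ)*n))^(n-1) := by
          apply mul_le_mul_of_nonneg_left hreflect (by positivity)
      _ = ∑ t : Fin N, (N:ℝ)^(Fintype.card M - 1) * (1 - ((N:ℝ) - (t:ℕ))/((N:ℝ)*n))^(n-1) := by
          rw [Finset.mul_sum]
      _ ≤ ∑ t : Fin N, ∑ ρ ∈ P.filter (fun ρ => ρ j = t), q^((HsetX G em ρ j).card) :=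
          Finset.sum_le_sum (fun t _ => hfiber t)
      _ = ∑ ρ ∈ P, q^((HsetX G em ρ j).card) := hfib.symm
  -- averaging over ρ
  have hsum2 : ∑ _ρ ∈ P, (1 - 1/Real.exp 1) * (∑ j, v j)
      ≤ ∑ ρ ∈ P, ∑ j, v j * q^((HsetX G em ρ j).card) := by
    rw [Finset.sum_const, hPcard, nsmul_eq_mul]
    rw [Finset.sum_comm]
    have : ∑ j : M, ∑ ρ ∈ P, v j * q^((HsetX G em ρ j).card)
        = ∑ j : M, v j * ∑ ρ ∈ P, q^((HsetX G em ρ j).card) := by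
      apply Finset.sum_congr rfl
      intro j _
      rw [Finset.mul_sum]
    rw [this]
    have h6 : ∑ j : M, v j * ((N:ℝ)^(Fintype.card M) * (1 - 1/Real.exp 1))
        ≤ ∑ j : M, v j * ∑ ρ ∈ P, q^((HsetX G em ρ j).card) := by
      apply Finset.sum_le_sum
      intro j _
      exact mul_le_mul_of_nonneg_left (hyper j) (hv0 j)
    calc (↑(N^(Fintype.card M)) : ℝ) * ((1 - 1/Real.exp 1) * ∑ j, v j)
        = ∑ j : M, v j * ((N:ℝ)^(Fintype.card M) * (1 - 1/Real.exp 1)) := by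
          rw [← Finset.sum_mul]
          push_cast
          ring
      _ ≤ _ := h6
  obtain ⟨ρ, _, hρ⟩ := Finset.exists_le_of_sum_le hPne hsum2
  exact ⟨ρ, hρ⟩

lemma stepB (G : SimpleGraph M) [DecidableRel G.Adj] (n : ℕ) (hn : 2 ≤ n) (hΔ : G.maxDegree < n)
    (v : M → ℝ) (hv0 : ∀ j, 0 ≤ v j) (hv1 : ∀ j, v j ≤ 1) (hW : 0 < ∑ j, v j)
    (H : M → Finset M) (hHnbr : ∀ j, H j ⊆ G.neighborFinset j)
    (htri : ∀ j w, G.Adj j w → w ∈ H j ∨ j ∈ H w) :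
    ∃ a : M → Fin n, ∀ i : Fin n,
      (∑ j, v j * (1 - 1/(n:ℝ))^((H j).card))/n - 2*Real.sqrt (∑ j, v j)
        ≤ ∑ j, v j * (if (a j = i ∧ ∀ w ∈ H j, a w ≠ i) then (1:ℝ) else 0) := by
  classical
  set q : ℝ := 1 - 1/(n:ℝ) with hq
  set W : ℝ := ∑ j, v j with hWdef
  have hn0 : 0 < n := by omega
  have hnR : (2:ℝ) ≤ (n:ℝ) := by exact_mod_cast hn
  have hnpos : (0:ℝ) < (n:ℝ) := by linarith
  have hnne : (n:ℝ) ≠ 0 := ne_of_gt hnpos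
  have hq0 : 0 ≤ q := by
    have : (1:ℝ)/(n:ℝ) ≤ 1 := by rw [div_le_one hnpos]; linarith
    rw [hq]; linarith
  have hq1 : q ≤ 1 := by
    have : (0:ℝ) ≤ 1/(n:ℝ) := by positivity
    rw [hq]; linarith
  have hnq : (n:ℝ) - 1 = n * q := by rw [hq]; field_simp
  set m : ℕ := Fintype.card M with hm
  set Q : Finset (M → Fin n) := Fintype.piFinset (fun _ : M => (univ : Finset (Fin n))) with hQ
  have hQcard : Q.card = n^m := by rw [hQ, Fintype.card_piFinset]; simp [hm]
  set Y : (M → Fin n) → Fin n → M → ℝ :=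
    fun a i j => if (a j = i ∧ ∀ w ∈ H j, a w ≠ i) then 1 else 0 with hY
  set K : (M → Fin n) → Fin n → ℝ := fun a i => ∑ j, v j * Y a i j with hK
  set μ : ℝ := (∑ j, v j * q^((H j).card))/n with hμ
  -- basic facts
  have hself : ∀ j, j ∉ H j := by
    intro j hj
    exact (SimpleGraph.notMem_neighborFinset_self G j) (hHnbr j hj)
  have hHcard : ∀ j : M, (H j).card + 1 ≤ m := by
    intro j
    have hsub : H j ⊆ univ.erase j := by
      intro w hw
      rw [Finset.mem_erase]
      refine ⟨?_, mem_univ _⟩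
      intro h
      exact hself j (h ▸ hw)
    have h2 := Finset.card_le_card hsub
    rw [Finset.card_erase_of_mem (mem_univ j), Finset.card_univ, ← hm] at h2
    have hjm : 1 ≤ m := by rw [hm]; exact Fintype.card_pos_iff.2 ⟨j⟩
    omega
  -- Y as a product
  have hYprod : ∀ (a : M → Fin n) (i : Fin n) (j : M),
      Y a i j = (∏ x ∈ ({j} : Finset M), (if a x = i then (1:ℝ) else 0))
        * ∏ x ∈ H j, (if a x = i then (0:ℝ) else 1) := by
    intro a i j
    simp only [hY]
    rw [Finset.prod_singleton]
    by_cases h1 : a j = i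
    · by_cases h2 : ∀ w ∈ H j, a w ≠ i
      · have hc : (a j = i ∧ ∀ w ∈ H j, a w ≠ i) := ⟨h1, h2⟩
        rw [if_pos hc, if_pos h1,
          Finset.prod_eq_one (fun w hw => by simp [h2 w hw]), mul_one]
      · push_neg at h2
        obtain ⟨w, hw, hwa⟩ := h2
        have : (∏ x ∈ H j, (if a x = i then (0:ℝ) else 1)) = 0 := by
          apply Finset.prod_eq_zero hw
          simp [hwa]
        rw [this, mul_zero, if_neg]
        push_neg
        intro _
        exact ⟨w, hw, hwa⟩
    · simp only [h1, if_neg, false_and, if_false]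
      norm_num
  -- first moment
  have hE1 : ∀ (i : Fin n) (j : M), ∑ a ∈ Q, Y a i j = (n:ℝ)^m * q^((H j).card) / n := by
    intro i j
    have hdisj : Disjoint ({j} : Finset M) (H j) := by
      rw [Finset.disjoint_singleton_left]
      exact hself j
    rw [Finset.sum_congr rfl (fun a _ => hYprod a i j)]
    rw [hQ, prod_indicator_sum n hn0 _ _ hdisj i]
    rw [Finset.card_singleton, hnq]
    rw [mul_pow, ← mul_assoc, ← pow_add]
    have h1 : m - 1 - (H j).card + (H j).card = m - 1 := by
      have := hHcard j; omega
    rw [h1]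
    rw [eq_div_iff hnne, mul_assoc, mul_comm (q ^ (H j).card), ← mul_assoc, ← pow_succ]
    congr 2
    have := hHcard j; omega
  -- diagonal second moment
  have hYsq : ∀ a i j, Y a i j * Y a i j = Y a i j := by
    intro a i j
    simp only [hY]
    by_cases h : (a j = i ∧ ∀ w ∈ H j, a w ≠ i)
    · rw [if_pos h]; norm_num
    · rw [if_neg h]; norm_num
  -- adjacent pairs vanish
  have hadjzero : ∀ a i j w, G.Adj j w → Y a i j * Y a i w = 0 := by
    intro a i j w hadj
    rcases htri j w hadj with hcase | hcase
    · simp only [hY]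
      by_cases h1 : (a j = i ∧ ∀ u ∈ H j, a u ≠ i)
      · by_cases h2 : (a w = i ∧ ∀ u ∈ H w, a u ≠ i)
        · exact absurd h2.1 (h1.2 w hcase)
        · simp [h1, h2]
      · simp [h1]
    · simp only [hY]
      by_cases h2 : (a w = i ∧ ∀ u ∈ H w, a u ≠ i)
      · by_cases h1 : (a j = i ∧ ∀ u ∈ H j, a u ≠ i)
        · exact absurd h1.1 (h2.2 j hcase)
        · simp [h1]
      · simp [h2]
  -- nonadjacent distinct pairs
  have hE2 : ∀ (i : Fin n) (j w : M), j ≠ w → ¬ G.Adj j w →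
      ∑ a ∈ Q, Y a i j * Y a i w = (n:ℝ)^m * q^((H j ∪ H w).card) / (n:ℝ)^2 := by
    intro i j w hjw hnadj
    have hjHw : j ∉ H w := by
      intro h
      have := hHnbr w h
      rw [SimpleGraph.mem_neighborFinset] at this
      exact hnadj (this.symm)
    have hwHj : w ∉ H j := by
      intro h
      have := hHnbr j h
      rw [SimpleGraph.mem_neighborFinset] at this
      exact hnadj this
    have hdisj : Disjoint ({j, w} : Finset M) (H j ∪ H w) := by
      rw [Finset.disjoint_left]
      intro x hx hx2
      rw [Finset.mem_insert, Finset.mem_singleton] at hx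
      rw [Finset.mem_union] at hx2
      rcases hx with rfl | rfl
      · rcases hx2 with h | h
        · exact hself x h
        · exact hjHw h
      · rcases hx2 with h | h
        · exact hwHj h
        · exact hself x h
    have hpoint : ∀ a : M → Fin n, Y a i j * Y a i w
        = (∏ x ∈ ({j, w} : Finset M), (if a x = i then (1:ℝ) else 0))
          * ∏ x ∈ H j ∪ H w, (if a x = i then (0:ℝ) else 1) := by
      intro a
      rw [hYprod a i j, hYprod a i w]
      rw [Finset.prod_singleton, Finset.prod_singleton, Finset.prod_pair hjw]
      have hui : (∏ x ∈ H j, (if a x = i then (0:ℝ) else 1))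
          * ∏ x ∈ H w, (if a x = i then (0:ℝ) else 1)
          = (∏ x ∈ H j ∪ H w, (if a x = i then (0:ℝ) else 1))
            * ∏ x ∈ H j ∩ H w, (if a x = i then (0:ℝ) else 1) :=
        (Finset.prod_union_inter).symm
      have hcap : (∏ x ∈ H j ∪ H w, (if a x = i then (0:ℝ) else 1))
          * ∏ x ∈ H j ∩ H w, (if a x = i then (0:ℝ) else 1)
          = ∏ x ∈ H j ∪ H w, (if a x = i then (0:ℝ) else 1) := by
        by_cases hz : ∃ x ∈ H j ∪ H w, a x = i
        · obtain ⟨x, hx, hxa⟩ := hz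
          have : (∏ x ∈ H j ∪ H w, (if a x = i then (0:ℝ) else 1)) = 0 :=
            Finset.prod_eq_zero hx (by simp [hxa])
          rw [this, zero_mul]
        · push_neg at hz
          have : (∏ x ∈ H j ∩ H w, (if a x = i then (0:ℝ) else 1)) = 1 := by
            apply Finset.prod_eq_one
            intro x hx
            have hxu : x ∈ H j ∪ H w := Finset.mem_union_left _ (Finset.mem_inter.1 hx).1
            simp [hz x hxu]
          rw [this, mul_one]
      calc (if a j = i then (1:ℝ) else 0) * (∏ x ∈ H j, (if a x = i then (0:ℝ) else 1))
            * ((if a w = i then (1:ℝ) else 0) * ∏ x ∈ H w, (if a x = i then (0:ℝ) else 1))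
          = ((if a j = i then (1:ℝ) else 0) * (if a w = i then (1:ℝ) else 0))
            * ((∏ x ∈ H j, (if a x = i then (0:ℝ) else 1))
              * ∏ x ∈ H w, (if a x = i then (0:ℝ) else 1)) := by ring
        _ = ((if a j = i then (1:ℝ) else 0) * (if a w = i then (1:ℝ) else 0))
            * ∏ x ∈ H j ∪ H w, (if a x = i then (0:ℝ) else 1) := by rw [hui, hcap]
    rw [Finset.sum_congr rfl (fun a _ => hpoint a)]
    rw [hQ, prod_indicator_sum n hn0 _ _ hdisj i]
    have hc2 : ({j, w} : Finset M).card = 2 := by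
      rw [Finset.card_insert_of_notMem (by simp [hjw]), Finset.card_singleton]
    rw [hc2, hnq]
    have hcardu : (H j ∪ H w).card + 2 ≤ m := by
      have h1 : ({j,w} ∪ (H j ∪ H w)).card = 2 + (H j ∪ H w).card := by
        rw [Finset.card_union_of_disjoint hdisj, hc2]
      have h2 : ({j,w} ∪ (H j ∪ H w)).card ≤ m := by
        rw [hm, ← Finset.card_univ]
        exact Finset.card_le_card (Finset.subset_univ _)
      omega
    rw [mul_pow, ← mul_assoc, ← pow_add]
    have h1 : m - 2 - (H j ∪ H w).card + (H j ∪ H w).card = m - 2 := by omega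
    rw [h1]
    rw [eq_div_iff (by positivity : ((n:ℝ)^2) ≠ 0)]
    rw [mul_assoc, mul_comm (q ^ (H j ∪ H w).card), ← mul_assoc, ← pow_add]
    congr 2
    omega
  -- symmetry of neighbour relation
  have hsymm : ∀ x y : M, x ∈ G.neighborFinset y ↔ y ∈ G.neighborFinset x := by
    intro x y
    rw [SimpleGraph.mem_neighborFinset, SimpleGraph.mem_neighborFinset, SimpleGraph.adj_comm]
  have hdeg : ∀ u : M, ((G.neighborFinset u).card : ℝ) ≤ (n:ℝ) - 1 := by
    intro u
    have h1 : (G.neighborFinset u).card ≤ n - 1 := by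
      have h2 : (G.neighborFinset u).card = G.degree u := G.card_neighborFinset_eq_degree u
      have h3 := G.degree_le_maxDegree u
      omega
    calc ((G.neighborFinset u).card : ℝ) ≤ ((n-1 : ℕ) : ℝ) := by exact_mod_cast h1
      _ = (n:ℝ) - 1 := by rw [Nat.cast_sub (by omega)]; simp
  -- the Cauchy–Schwarz style combinatorial bound
  have hv2 : ∑ j : M, (v j)^2 ≤ W := by
    rw [hWdef]
    apply Finset.sum_le_sum
    intro j _
    nlinarith [hv0 j, hv1 j]
  have hCS : ∑ j : M, ∑ w : M, v j * v w * ((G.neighborFinset j ∩ G.neighborFinset w).card : ℝ)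
      ≤ ((n:ℝ)-1)^2 * W := by
    have key : ∀ j w : M, v j * v w * ((G.neighborFinset j ∩ G.neighborFinset w).card : ℝ)
        = ∑ u : M, (v j * (if j ∈ G.neighborFinset u then (1:ℝ) else 0))
          * (v w * (if w ∈ G.neighborFinset u then (1:ℝ) else 0)) := by
      intro j w
      have h1 : ((G.neighborFinset j ∩ G.neighborFinset w).card : ℝ)
          = ∑ u : M, (if j ∈ G.neighborFinset u then (1:ℝ) else 0)
            * (if w ∈ G.neighborFinset u then (1:ℝ) else 0) := by
        have h2 : ∀ u : M, (if j ∈ G.neighborFinset u then (1:ℝ) else 0)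
            * (if w ∈ G.neighborFinset u then (1:ℝ) else 0)
            = if u ∈ G.neighborFinset j ∩ G.neighborFinset w then (1:ℝ) else 0 := by
          intro u
          by_cases ha : u ∈ G.neighborFinset j <;> by_cases hb : u ∈ G.neighborFinset w
          · rw [if_pos ((hsymm j u).2 ha), if_pos ((hsymm w u).2 hb),
              if_pos (Finset.mem_inter.2 ⟨ha, hb⟩)]
            norm_num
          · rw [if_neg (fun h => hb ((hsymm w u).1 h)),
              if_neg (fun h => hb (Finset.mem_inter.1 h).2)]
            norm_num
          · rw [if_neg (fun h => ha ((hsymm j u).1 h)),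
              if_neg (fun h => ha (Finset.mem_inter.1 h).1)]
            norm_num
          · rw [if_neg (fun h => ha ((hsymm j u).1 h)),
              if_neg (fun h => ha (Finset.mem_inter.1 h).1)]
            norm_num
        rw [Finset.sum_congr rfl (fun u _ => h2 u)]
        rw [Finset.sum_ite_mem, Finset.univ_inter, Finset.sum_const, nsmul_eq_mul, mul_one]
      rw [h1, Finset.mul_sum]
      apply Finset.sum_congr rfl
      intro u _
      ring
    rw [Finset.sum_congr rfl (fun j (_ : j ∈ univ) =>
      Finset.sum_congr rfl (fun w (_ : w ∈ univ) => key j w))]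
    have hswap : ∑ j : M, ∑ w : M, ∑ u : M,
        (v j * (if j ∈ G.neighborFinset u then (1:ℝ) else 0))
          * (v w * (if w ∈ G.neighborFinset u then (1:ℝ) else 0))
        = ∑ u : M, (∑ j : M, v j * (if j ∈ G.neighborFinset u then (1:ℝ) else 0))
          * (∑ w : M, v w * (if w ∈ G.neighborFinset u then (1:ℝ) else 0)) := by
      rw [Finset.sum_congr rfl (fun j (_ : j ∈ univ) => Finset.sum_comm)]
      rw [Finset.sum_comm]
      apply Finset.sum_congr rfl
      intro u _
      rw [Finset.sum_mul_sum]
    rw [hswap]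
    have hSu : ∀ u : M, (∑ j : M, v j * (if j ∈ G.neighborFinset u then (1:ℝ) else 0))
        = ∑ j ∈ G.neighborFinset u, v j := by
      intro u
      rw [Finset.sum_congr rfl (fun j (_ : j ∈ univ) => by
        rw [mul_ite, mul_one, mul_zero])]
      rw [Finset.sum_ite_mem, Finset.univ_inter]
    rw [Finset.sum_congr rfl (fun u (_ : u ∈ univ) => by rw [hSu u])]
    have hper : ∀ u : M, (∑ j ∈ G.neighborFinset u, v j) * (∑ j ∈ G.neighborFinset u, v j)
        ≤ ((n:ℝ)-1) * ∑ j ∈ G.neighborFinset u, (v j)^2 := by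
      intro u
      have hcs := Finset.sum_mul_sq_le_sq_mul_sq (G.neighborFinset u) (fun _ => (1:ℝ)) v
      simp only [one_mul, one_pow] at hcs
      rw [Finset.sum_const, nsmul_eq_mul, mul_one] at hcs
      have h5 : (∑ j ∈ G.neighborFinset u, v j)*(∑ j ∈ G.neighborFinset u, v j)
          = (∑ j ∈ G.neighborFinset u, v j)^2 := by ring
      rw [h5]
      calc (∑ j ∈ G.neighborFinset u, v j)^2
          ≤ ((G.neighborFinset u).card : ℝ) * ∑ j ∈ G.neighborFinset u, (v j)^2 := hcs
        _ ≤ ((n:ℝ)-1) * ∑ j ∈ G.neighborFinset u, (v j)^2 := by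
            apply mul_le_mul_of_nonneg_right (hdeg u)
            apply Finset.sum_nonneg
            intro j _
            positivity
    have hlast : ∑ u : M, ∑ j ∈ G.neighborFinset u, (v j)^2 ≤ ((n:ℝ)-1) * W := by
      have h6 : ∀ u : M, ∑ j ∈ G.neighborFinset u, (v j)^2
          = ∑ j : M, (if j ∈ G.neighborFinset u then (v j)^2 else 0) := by
        intro u
        rw [Finset.sum_ite_mem, Finset.univ_inter]
      rw [Finset.sum_congr rfl (fun u (_ : u ∈ univ) => h6 u), Finset.sum_comm]
      have h7 : ∀ j : M, ∑ u : M, (if j ∈ G.neighborFinset u then (v j)^2 else 0)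
          = ((G.neighborFinset j).card : ℝ) * (v j)^2 := by
        intro j
        rw [Finset.sum_congr rfl (fun u (_ : u ∈ univ) => by
          rw [show (if j ∈ G.neighborFinset u then (v j)^2 else 0)
            = (if u ∈ G.neighborFinset j then (v j)^2 else 0) by
              by_cases h : j ∈ G.neighborFinset u
              · rw [if_pos h, if_pos ((hsymm j u).1 h)]
              · rw [if_neg h, if_neg (fun h2 => h ((hsymm u j).1 h2))]])]
        rw [Finset.sum_ite_mem, Finset.univ_inter, Finset.sum_const, nsmul_eq_mul]
      rw [Finset.sum_congr rfl (fun j (_ : j ∈ univ) => h7 j)]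
      calc ∑ j : M, ((G.neighborFinset j).card : ℝ) * (v j)^2
          ≤ ∑ j : M, ((n:ℝ)-1) * (v j)^2 := by
            apply Finset.sum_le_sum
            intro j _
            apply mul_le_mul_of_nonneg_right (hdeg j) (by positivity)
        _ = ((n:ℝ)-1) * ∑ j : M, (v j)^2 := by rw [Finset.mul_sum]
        _ ≤ ((n:ℝ)-1) * W := by
            apply mul_le_mul_of_nonneg_left hv2 (by linarith)
    calc ∑ u : M, (∑ j ∈ G.neighborFinset u, v j) * (∑ j ∈ G.neighborFinset u, v j)
        ≤ ∑ u : M, ((n:ℝ)-1) * ∑ j ∈ G.neighborFinset u, (v j)^2 :=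
          Finset.sum_le_sum (fun u _ => hper u)
      _ = ((n:ℝ)-1) * ∑ u : M, ∑ j ∈ G.neighborFinset u, (v j)^2 := by rw [Finset.mul_sum]
      _ ≤ ((n:ℝ)-1) * (((n:ℝ)-1) * W) := by
          apply mul_le_mul_of_nonneg_left hlast (by linarith)
      _ = ((n:ℝ)-1)^2 * W := by ring
  -- variance bound per agent
  have hnm1 : 1 ≤ m := by
    by_contra h
    push_neg at h
    interval_cases m
    · -- M is empty, so W = 0, contradiction with hW
      have : W = 0 := by
        rw [hWdef]
        apply Finset.sum_eq_zero
        intro j _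
        exact absurd (Fintype.card_pos_iff.2 ⟨j⟩) (by omega)
      linarith
  have hvar : ∀ i : Fin n, ∑ a ∈ Q, (K a i - μ)^2 ≤ 2*(n:ℝ)^m*W/n := by
    intro i
    have hsumK : ∑ a ∈ Q, K a i = (n:ℝ)^m * μ := by
      simp only [hK]
      rw [Finset.sum_comm]
      calc ∑ j : M, ∑ a ∈ Q, v j * Y a i j
          = ∑ j : M, v j * ((n:ℝ)^m * q^((H j).card) / n) := by
            apply Finset.sum_congr rfl
            intro j _
            rw [← Finset.mul_sum, hE1 i j]
        _ = (n:ℝ)^m * μ := by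
            rw [hμ, ← mul_div_assoc, Finset.mul_sum, Finset.sum_div]
            apply Finset.sum_congr rfl
            intro j _
            ring
    have hsumK2 : ∑ a ∈ Q, (K a i)^2
        = ∑ j : M, ∑ w : M, (v j * v w) * ∑ a ∈ Q, Y a i j * Y a i w := by
      simp only [hK]
      have hexp : ∀ a : M → Fin n, (∑ j : M, v j * Y a i j)^2
          = ∑ j : M, ∑ w : M, (v j * v w) * (Y a i j * Y a i w) := by
        intro a
        rw [sq, Finset.sum_mul_sum]
        apply Finset.sum_congr rfl
        intro j _
        apply Finset.sum_congr rfl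
        intro w _
        ring
      rw [Finset.sum_congr rfl (fun a (_ : a ∈ Q) => hexp a)]
      rw [Finset.sum_comm]
      apply Finset.sum_congr rfl
      intro j _
      rw [Finset.sum_comm]
      apply Finset.sum_congr rfl
      intro w _
      rw [← Finset.mul_sum]
    have hQcardR : ((Q.card : ℕ) : ℝ) = (n:ℝ)^m := by
      rw [hQcard]
      push_cast
      ring
    have hdiff : ∑ a ∈ Q, (K a i - μ)^2
        = (∑ j : M, ∑ w : M, (v j * v w) * ∑ a ∈ Q, Y a i j * Y a i w) - (n:ℝ)^m * μ^2 := by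
      have hexp2 : ∀ a : M → Fin n, (K a i - μ)^2 = (K a i)^2 - 2*μ*(K a i) + μ^2 := by
        intro a
        ring
      rw [Finset.sum_congr rfl (fun a (_ : a ∈ Q) => hexp2 a)]
      rw [Finset.sum_add_distrib, Finset.sum_sub_distrib, Finset.sum_const, ← Finset.mul_sum,
        hsumK, hsumK2, nsmul_eq_mul, hQcardR]
      ring
    have hμ2 : (n:ℝ)^m * μ^2
        = ∑ j : M, ∑ w : M, (v j * v w) * ((n:ℝ)^m * (q^((H j).card) * q^((H w).card)) / (n:ℝ)^2) := by
      rw [hμ, div_pow]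
      rw [show ((∑ j : M, v j * q^((H j).card))^2)
          = ∑ j : M, ∑ w : M, (v j * q^((H j).card)) * (v w * q^((H w).card)) by
        rw [sq, Finset.sum_mul_sum]]
      rw [← mul_div_assoc, Finset.mul_sum, Finset.sum_div]
      apply Finset.sum_congr rfl
      intro j _
      rw [Finset.mul_sum, Finset.sum_div]
      apply Finset.sum_congr rfl
      intro w _
      ring
    -- per-pair bounds
    have hpow_le_one : ∀ k : ℕ, q^k ≤ 1 := fun k => pow_le_one₀ hq0 hq1
    have hnm_pos : (0:ℝ) < (n:ℝ)^m := by positivity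
    have hpair : ∀ j w : M,
        (v j * v w) * (∑ a ∈ Q, Y a i j * Y a i w)
          - (v j * v w) * ((n:ℝ)^m * (q^((H j).card) * q^((H w).card)) / (n:ℝ)^2)
        ≤ (if j = w then v j * ((n:ℝ)^m/n) else 0)
          + v j * v w * ((n:ℝ)^m/(n:ℝ)^3)
            * ((G.neighborFinset j ∩ G.neighborFinset w).card : ℝ) := by
      intro j w
      have hterm2 : 0 ≤ v j * v w * ((n:ℝ)^m/(n:ℝ)^3)
          * ((G.neighborFinset j ∩ G.neighborFinset w).card : ℝ) := by
        have := hv0 j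
        have := hv0 w
        positivity
      have hsub : 0 ≤ (v j * v w) * ((n:ℝ)^m * (q^((H j).card) * q^((H w).card)) / (n:ℝ)^2) := by
        have := hv0 j
        have := hv0 w
        have h8 : (0:ℝ) ≤ q^((H j).card) := pow_nonneg hq0 _
        have h9 : (0:ℝ) ≤ q^((H w).card) := pow_nonneg hq0 _
        positivity
      by_cases hjw : j = w
      · subst hjw
        rw [if_pos rfl]
        have hE2diag : ∑ a ∈ Q, Y a i j * Y a i j = (n:ℝ)^m * q^((H j).card) / n := by
          rw [Finset.sum_congr rfl (fun a _ => hYsq a i j), hE1 i j]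
        rw [hE2diag]
        have h10 : (v j * v j) * ((n:ℝ)^m * q^((H j).card) / n) ≤ v j * ((n:ℝ)^m/n) := by
          have hqh0 : (0:ℝ) ≤ q^((H j).card) := pow_nonneg hq0 _
          have hle : (n:ℝ)^m * q^((H j).card) / n ≤ (n:ℝ)^m / n := by
            apply (div_le_div_iff_of_pos_right hnpos).2
            calc (n:ℝ)^m * q^((H j).card) ≤ (n:ℝ)^m * 1 :=
                  mul_le_mul_of_nonneg_left (hpow_le_one _) (le_of_lt hnm_pos)
              _ = (n:ℝ)^m := mul_one _
          have hA0 : (0:ℝ) ≤ (n:ℝ)^m * q^((H j).card) / n := by positivity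
          have hvvj : v j * v j ≤ v j := by nlinarith [hv0 j, hv1 j]
          calc (v j * v j) * ((n:ℝ)^m * q^((H j).card) / n)
              ≤ v j * ((n:ℝ)^m * q^((H j).card) / n) :=
                mul_le_mul_of_nonneg_right hvvj hA0
            _ ≤ v j * ((n:ℝ)^m/n) := mul_le_mul_of_nonneg_left hle (hv0 j)
        linarith
      · by_cases hadj : G.Adj j w
        · have hE2adj : ∑ a ∈ Q, Y a i j * Y a i w = 0 :=
            Finset.sum_eq_zero (fun a _ => hadjzero a i j w hadj)
          rw [hE2adj, if_neg hjw]
          rw [mul_zero, zero_add]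
          linarith
        · rw [hE2 i j w hjw hadj, if_neg hjw, zero_add]
          set u : ℕ := (H j ∪ H w).card with hu
          set sc : ℕ := (H j ∩ H w).card with hsc
          have hus : u + sc = (H j).card + (H w).card := Finset.card_union_add_card_inter _ _
          have hqq : q^((H j).card) * q^((H w).card) = q^u * q^sc := by
            rw [← pow_add, ← pow_add, hus]
          have hber : 1 - q^sc ≤ (sc:ℝ) * (1/n) := by
            have := one_add_mul_le_pow (a := q - 1) (by linarith) sc
            have h13 : 1 + (sc:ℝ) * (q-1) ≤ q^sc := by
              calc 1 + (sc:ℝ)*(q-1) ≤ (1 + (q-1))^sc := this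
                _ = q^sc := by norm_num
            have h14 : q - 1 = -(1/(n:ℝ)) := by rw [hq]; ring
            rw [h14] at h13
            linarith
          have hsc_le : (sc:ℝ) ≤ ((G.neighborFinset j ∩ G.neighborFinset w).card : ℝ) := by
            have h15 : H j ∩ H w ⊆ G.neighborFinset j ∩ G.neighborFinset w :=
              Finset.inter_subset_inter (hHnbr j) (hHnbr w)
            exact_mod_cast Finset.card_le_card h15
          have hmain : (n:ℝ)^m * q^u / (n:ℝ)^2 - (n:ℝ)^m * (q^u * q^sc) / (n:ℝ)^2
              ≤ ((n:ℝ)^m/(n:ℝ)^3) * ((G.neighborFinset j ∩ G.neighborFinset w).card : ℝ) := by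
            have h16 : (n:ℝ)^m * q^u / (n:ℝ)^2 - (n:ℝ)^m * (q^u * q^sc) / (n:ℝ)^2
                = ((n:ℝ)^m/(n:ℝ)^2) * (q^u * (1 - q^sc)) := by ring
            rw [h16]
            have h17 : q^u * (1 - q^sc) ≤ (sc:ℝ)*(1/n) := by
              have h18 : q^u * (1 - q^sc) ≤ 1 * (1 - q^sc) := by
                apply mul_le_mul_of_nonneg_right (hpow_le_one u)
                have := hpow_le_one sc
                linarith
              calc q^u * (1 - q^sc) ≤ 1 * (1-q^sc) := h18
                _ = 1 - q^sc := by ring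
                _ ≤ (sc:ℝ)*(1/n) := hber
            calc ((n:ℝ)^m/(n:ℝ)^2) * (q^u * (1 - q^sc))
                ≤ ((n:ℝ)^m/(n:ℝ)^2) * ((sc:ℝ)*(1/n)) := by
                  apply mul_le_mul_of_nonneg_left h17 (by positivity)
              _ = ((n:ℝ)^m/(n:ℝ)^3) * (sc:ℝ) := by
                  ring
              _ ≤ ((n:ℝ)^m/(n:ℝ)^3) * ((G.neighborFinset j ∩ G.neighborFinset w).card : ℝ) := by
                  apply mul_le_mul_of_nonneg_left hsc_le (by positivity)
          have hvv : 0 ≤ v j * v w := mul_nonneg (hv0 j) (hv0 w)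
          have hvv1 : v j * v w ≤ 1 := by nlinarith [hv0 j, hv0 w, hv1 j, hv1 w]
          calc (v j * v w) * ((n:ℝ)^m * q^u / (n:ℝ)^2)
                - (v j * v w) * ((n:ℝ)^m * (q^((H j).card) * q^((H w).card)) / (n:ℝ)^2)
              = (v j * v w) * ((n:ℝ)^m * q^u / (n:ℝ)^2 - (n:ℝ)^m * (q^u * q^sc) / (n:ℝ)^2) := by
                rw [hqq]; ring
            _ ≤ (v j * v w) * (((n:ℝ)^m/(n:ℝ)^3)
                  * ((G.neighborFinset j ∩ G.neighborFinset w).card : ℝ)) := by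
                apply mul_le_mul_of_nonneg_left hmain hvv
            _ = v j * v w * ((n:ℝ)^m/(n:ℝ)^3)
                  * ((G.neighborFinset j ∩ G.neighborFinset w).card : ℝ) := by ring
    -- assemble variance bound
    rw [hdiff, hμ2]
    rw [← Finset.sum_sub_distrib]
    rw [Finset.sum_congr rfl (fun j (_ : j ∈ univ) => (Finset.sum_sub_distrib _ _).symm)]
    calc ∑ j : M, ∑ w : M,
          ((v j * v w) * (∑ a ∈ Q, Y a i j * Y a i w)
            - (v j * v w) * ((n:ℝ)^m * (q^((H j).card) * q^((H w).card)) / (n:ℝ)^2))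
        ≤ ∑ j : M, ∑ w : M,
            ((if j = w then v j * ((n:ℝ)^m/n) else 0)
              + v j * v w * ((n:ℝ)^m/(n:ℝ)^3)
                * ((G.neighborFinset j ∩ G.neighborFinset w).card : ℝ)) := by
          apply Finset.sum_le_sum
          intro j _
          apply Finset.sum_le_sum
          intro w _
          exact hpair j w
      _ = (∑ j : M, ∑ w : M, (if j = w then v j * ((n:ℝ)^m/n) else 0))
          + ∑ j : M, ∑ w : M, v j * v w * ((n:ℝ)^m/(n:ℝ)^3)
              * ((G.neighborFinset j ∩ G.neighborFinset w).card : ℝ) := by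
          rw [← Finset.sum_add_distrib]
          apply Finset.sum_congr rfl
          intro j _
          rw [← Finset.sum_add_distrib]
      _ ≤ (n:ℝ)^m*W/n + ((n:ℝ)^m/(n:ℝ)^3) * (((n:ℝ)-1)^2 * W) := by
          have hd1 : ∑ j : M, ∑ w : M, (if j = w then v j * ((n:ℝ)^m/n) else 0)
              = (n:ℝ)^m*W/n := by
            rw [Finset.sum_congr rfl (fun j (_ : j ∈ univ) => Finset.sum_ite_eq univ j
              (fun _ => v j * ((n:ℝ)^m/n)))]
            rw [Finset.sum_congr rfl (fun j (_ : j ∈ univ) => if_pos (mem_univ j))]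
            rw [← Finset.sum_mul, ← hWdef]
            ring
          have hd2 : ∑ j : M, ∑ w : M, v j * v w * ((n:ℝ)^m/(n:ℝ)^3)
              * ((G.neighborFinset j ∩ G.neighborFinset w).card : ℝ)
              ≤ ((n:ℝ)^m/(n:ℝ)^3) * (((n:ℝ)-1)^2 * W) := by
            have h20 : ∑ j : M, ∑ w : M, v j * v w * ((n:ℝ)^m/(n:ℝ)^3)
                * ((G.neighborFinset j ∩ G.neighborFinset w).card : ℝ)
                = ((n:ℝ)^m/(n:ℝ)^3) * ∑ j : M, ∑ w : M, v j * v w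
                  * ((G.neighborFinset j ∩ G.neighborFinset w).card : ℝ) := by
              rw [Finset.mul_sum]
              apply Finset.sum_congr rfl
              intro j _
              rw [Finset.mul_sum]
              apply Finset.sum_congr rfl
              intro w _
              ring
            rw [h20]
            apply mul_le_mul_of_nonneg_left hCS (by positivity)
          linarith
      _ ≤ 2*(n:ℝ)^m*W/n := by
          have h21 : ((n:ℝ)^m/(n:ℝ)^3) * (((n:ℝ)-1)^2 * W) ≤ (n:ℝ)^m*W/n := by
            rw [div_mul_eq_mul_div, div_le_div_iff₀ (by positivity) hnpos]
            have h22 : ((n:ℝ)-1)^2 ≤ (n:ℝ)^2 := by nlinarith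
            have hW0 : (0:ℝ) ≤ W := le_of_lt hW
            calc (n:ℝ)^m * (((n:ℝ)-1)^2 * W) * n
                ≤ (n:ℝ)^m * ((n:ℝ)^2 * W) * n := by
                  apply mul_le_mul_of_nonneg_right _ (le_of_lt hnpos)
                  apply mul_le_mul_of_nonneg_left _ (le_of_lt hnm_pos)
                  exact mul_le_mul_of_nonneg_right h22 hW0
              _ = (n:ℝ)^m * W * (n:ℝ)^3 := by ring
          have h23 : 2*(n:ℝ)^m*W/n = (n:ℝ)^m*W/n + (n:ℝ)^m*W/n := by ring
          linarith
  have hnm_pos : (0:ℝ) < (n:ℝ)^m := by positivity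
  have hQcardR : ((Q.card : ℕ) : ℝ) = (n:ℝ)^m := by
    rw [hQcard]; push_cast; ring
  have hgoal : ∀ (a : M → Fin n) (i : Fin n),
      (∑ j, v j * (if (a j = i ∧ ∀ w ∈ H j, a w ≠ i) then (1:ℝ) else 0)) = K a i := by
    intro a i
    simp only [hK, hY]
  by_contra hcon
  push_neg at hcon
  have hsq : ∀ a ∈ Q, 4*W ≤ ∑ i : Fin n, (K a i - μ)^2 := by
    intro a _
    obtain ⟨i, hi⟩ := hcon a
    rw [hgoal a i] at hi
    have h1 : 2*Real.sqrt W ≤ μ - K a i := by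
      rw [hμ] at hi ⊢
      linarith
    have h2 : (2*Real.sqrt W)^2 ≤ (μ - K a i)^2 := by
      apply pow_le_pow_left₀ (by positivity) h1 2
    have h3 : (μ - K a i)^2 = (K a i - μ)^2 := by ring
    have h4 : (2*Real.sqrt W)^2 = 4*W := by
      rw [mul_pow, Real.sq_sqrt (le_of_lt hW)]
      norm_num
    have h5 : (K a i - μ)^2 ≤ ∑ i' : Fin n, (K a i' - μ)^2 :=
      Finset.single_le_sum (f := fun i' => (K a i' - μ)^2)
        (fun i' _ => sq_nonneg _) (mem_univ i)
    linarith
  have htot : (n:ℝ)^m * (4*W) ≤ ∑ a ∈ Q, ∑ i : Fin n, (K a i - μ)^2 := by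
    calc (n:ℝ)^m * (4*W) = ∑ _a ∈ Q, 4*W := by
          rw [Finset.sum_const, nsmul_eq_mul, hQcardR]
      _ ≤ ∑ a ∈ Q, ∑ i : Fin n, (K a i - μ)^2 := Finset.sum_le_sum hsq
  have htot2 : ∑ a ∈ Q, ∑ i : Fin n, (K a i - μ)^2 ≤ (n:ℝ)^m * (2*W) := by
    rw [Finset.sum_comm]
    calc ∑ i : Fin n, ∑ a ∈ Q, (K a i - μ)^2
        ≤ ∑ _i : Fin n, 2*(n:ℝ)^m*W/n := Finset.sum_le_sum (fun i _ => hvar i)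
      _ = (n:ℝ) * (2*(n:ℝ)^m*W/n) := by
          rw [Finset.sum_const, Finset.card_univ, Fintype.card_fin, nsmul_eq_mul]
      _ = (n:ℝ)^m * (2*W) := by
          field_simp
  nlinarith [htot, htot2, hnm_pos, hW]

end AuxMain

/-- If `n > Δ(G)` agents share an identical valuation `v : M → [0,1]` with
total value `W = v(M)`, then for any `c > √8` there is a feasible allocation in
which every agent receives a bundle of value at least
`(1 − 1/e)·(W/n) − c·√(W·ln n)`. -/
theorem approx_proportional_exists {M : Type*} [Fintype M] [DecidableEq M]
    (G : SimpleGraph M) [DecidableRel G.Adj] (n : ℕ) (hΔ : G.maxDegree < n)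
    (v : M → ℝ) (hv : ∀ j, v j ∈ Set.Icc (0 : ℝ) 1)
    (c : ℝ) (hc : Real.sqrt 8 < c) :
    ∃ A : Fin n → Finset M, IsAllocation A ∧ FeasibleAlloc G A ∧
      ∀ i : Fin n,
        (1 - 1 / Real.exp 1) * ((∑ j : M, v j) / n) -
            c * Real.sqrt ((∑ j : M, v j) * Real.log n) ≤
          ∑ j ∈ A i, v j := by
  classical
  have hv0 : ∀ j, 0 ≤ v j := fun j => (hv j).1
  have hv1 : ∀ j, v j ≤ 1 := fun j => (hv j).2
  have hn1 : 1 ≤ n := by omega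
  have hW0 : (0:ℝ) ≤ ∑ j : M, v j := Finset.sum_nonneg (fun j _ => hv0 j)
  have he1 : (0:ℝ) < 1 - 1/Real.exp 1 := by
    have h1 : (1:ℝ) < Real.exp 1 := by
      have := Real.add_one_le_exp 1
      linarith
    have h2 : 1/Real.exp 1 < 1 := by
      rw [div_lt_one (Real.exp_pos 1)]
      exact h1
    linarith
  have hc0 : 0 ≤ c := le_trans (Real.sqrt_nonneg 8) (le_of_lt hc)
  -- builder for allocations from proper colourings
  have builder : ∀ f : M → Fin n, (∀ j w, G.Adj j w → f j ≠ f w) →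
      IsAllocation (fun i : Fin n => univ.filter (fun j => f j = i)) ∧
      FeasibleAlloc G (fun i : Fin n => univ.filter (fun j => f j = i)) := by
    intro f hf
    refine ⟨⟨?_, ?_⟩, ?_⟩
    · intro i i' hne
      rw [Finset.disjoint_left]
      intro j hj hj'
      rw [Finset.mem_filter] at hj hj'
      exact hne (hj.2 ▸ hj'.2 ▸ rfl)
    · apply Finset.eq_univ_of_forall
      intro j
      rw [Finset.mem_biUnion]
      exact ⟨f j, mem_univ _, Finset.mem_filter.2 ⟨mem_univ _, rfl⟩⟩
    · intro i j hj w hw hadj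
      rw [Finset.mem_filter] at hj hw
      exact hf j w hadj (by rw [hj.2, hw.2])
  by_cases hn2 : n = 1
  · -- one agent: everything goes to it
    subst hn2
    obtain ⟨f, _, hf⟩ := extend_coloring G 1 hΔ univ (fun _ => 0)
      (fun j hj => absurd (mem_univ j) hj)
    obtain ⟨hA1, hA2⟩ := builder f hf
    refine ⟨_, hA1, hA2, ?_⟩
    intro i
    have hfull : (univ.filter (fun j => f j = i)) = univ := by
      apply Finset.filter_true_of_mem
      intro j _
      exact Subsingleton.elim _ _
    rw [hfull]
    have hlog : Real.log ((1:ℕ):ℝ) = 0 := by norm_num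
    rw [Nat.cast_one, div_one]
    rw [show Real.log 1 = 0 from Real.log_one, mul_zero, Real.sqrt_zero, mul_zero, sub_zero]
    calc (1 - 1/Real.exp 1) * (∑ j : M, v j) ≤ 1 * (∑ j : M, v j) := by
          apply mul_le_mul_of_nonneg_right _ hW0
          have := Real.exp_pos 1
          have : 0 < 1/Real.exp 1 := by positivity
          linarith
      _ = ∑ j : M, v j := one_mul _
  · have hn : 2 ≤ n := by omega
    have hnR : (2:ℝ) ≤ (n:ℝ) := by exact_mod_cast hn
    have hnpos : (0:ℝ) < (n:ℝ) := by linarith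
    by_cases hWpos : 0 < ∑ j : M, v j
    · -- main case
      set em : M ≃ Fin (Fintype.card M) := Fintype.equivFin M with hem
      obtain ⟨ρ, hρ⟩ := stepA G n em hn hΔ v hv0
      set H : M → Finset M := HsetX G em ρ with hH
      have hHnbr : ∀ j, H j ⊆ G.neighborFinset j := by
        intro j
        rw [hH]
        exact Finset.filter_subset _ _
      have htri : ∀ j w, G.Adj j w → w ∈ H j ∨ j ∈ H w := by
        intro j w hadj
        have hjw : j ≠ w := G.ne_of_adj hadj
        have hwj : w ∈ G.neighborFinset j := (SimpleGraph.mem_neighborFinset G j w).2 hadj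
        have hjw' : j ∈ G.neighborFinset w := (SimpleGraph.mem_neighborFinset G w j).2 (G.adj_symm hadj)
        rw [hH]
        simp only [HsetX, Finset.mem_filter]
        rcases lt_trichotomy (ρ j) (ρ w) with h | h | h
        · left; exact ⟨hwj, Or.inl h⟩
        · rcases lt_trichotomy (em j) (em w) with h2 | h2 | h2
          · left; exact ⟨hwj, Or.inr ⟨h, h2⟩⟩
          · exact absurd (em.injective h2) hjw
          · right; exact ⟨hjw', Or.inr ⟨h.symm, h2⟩⟩
        · right; exact ⟨hjw', Or.inl h⟩
      obtain ⟨a, ha⟩ := stepB G n hn hΔ v hv0 hv1 hWpos H hHnbr htri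
      set S : Finset M := univ.filter (fun j => ¬ (∀ w ∈ H j, a w ≠ a j)) with hS
      have hkept : ∀ j, j ∉ S ↔ (∀ w ∈ H j, a w ≠ a j) := by
        intro j
        rw [hS, Finset.mem_filter]
        simp
      have h₀ : ∀ j ∉ S, ∀ w ∉ S, G.Adj j w → a j ≠ a w := by
        intro j hj w hw hadj
        rcases htri j w hadj with hcase | hcase
        · exact fun h => ((hkept j).1 hj w hcase) (h.symm)
        · exact fun h => (((hkept w).1 hw j hcase) h).elim
      obtain ⟨f, hf1, hf2⟩ := extend_coloring G n hΔ S a h₀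
      obtain ⟨hA1, hA2⟩ := builder f hf2
      refine ⟨_, hA1, hA2, ?_⟩
      intro i
      -- value chain
      have t1 : ∑ j, v j * (if (a j = i ∧ ∀ w ∈ H j, a w ≠ i) then (1:ℝ) else 0)
          ≤ ∑ j ∈ univ.filter (fun j => f j = i), v j := by
        have hre : ∑ j, v j * (if (a j = i ∧ ∀ w ∈ H j, a w ≠ i) then (1:ℝ) else 0)
            = ∑ j ∈ univ.filter (fun j => a j = i ∧ ∀ w ∈ H j, a w ≠ i), v j := by
          rw [Finset.sum_filter]
          apply Finset.sum_congr rfl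
          intro j _
          by_cases h : (a j = i ∧ ∀ w ∈ H j, a w ≠ i)
          · simp [h]
          · simp [h]
        rw [hre]
        apply Finset.sum_le_sum_of_subset_of_nonneg
        · intro j hj
          rw [Finset.mem_filter] at hj ⊢
          obtain ⟨_, hji, hjk⟩ := hj
          refine ⟨mem_univ _, ?_⟩
          have hjS : j ∉ S := by
            rw [hkept j]
            intro w hw
            rw [hji]
            exact hjk w hw
          rw [hf1 j hjS, hji]
        · intro j _ _
          exact hv0 j
      have t2 := ha i
      have t3 : (1 - 1/Real.exp 1) * ((∑ j : M, v j) / n)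
          ≤ (∑ j, v j * (1 - 1/(n:ℝ))^((H j).card))/n := by
        calc (1 - 1/Real.exp 1) * ((∑ j : M, v j) / n)
            = ((1 - 1/Real.exp 1) * (∑ j : M, v j))/n := by ring
          _ ≤ (∑ j, v j * (1 - 1/(n:ℝ))^((H j).card))/n := by
              exact (div_le_div_iff_of_pos_right hnpos).2 hρ
      have t4 : 2*Real.sqrt (∑ j : M, v j) ≤ c * Real.sqrt ((∑ j : M, v j) * Real.log n) := by
        have hlog2 : (1:ℝ)/2 ≤ Real.log 2 := by
          have := Real.log_two_gt_d9
          linarith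
        have hlogn : Real.log 2 ≤ Real.log n := by
          apply Real.log_le_log (by norm_num) hnR
        have hlogn0 : 0 ≤ Real.log n := by linarith
        rw [Real.sqrt_mul hW0]
        have h8 : (2:ℝ) ≤ Real.sqrt 8 * Real.sqrt (Real.log n) := by
          rw [← Real.sqrt_mul (by norm_num : (0:ℝ) ≤ 8)]
          have h4 : (4:ℝ) ≤ 8 * Real.log n := by linarith
          calc (2:ℝ) = Real.sqrt 4 := by
                rw [show (4:ℝ) = 2^2 by norm_num, Real.sqrt_sq (by norm_num : (0:ℝ) ≤ 2)]
            _ ≤ Real.sqrt (8 * Real.log n) := Real.sqrt_le_sqrt h4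
        have h9 : Real.sqrt 8 * Real.sqrt (Real.log n) ≤ c * Real.sqrt (Real.log n) := by
          apply mul_le_mul_of_nonneg_right (le_of_lt hc) (Real.sqrt_nonneg _)
        calc 2*Real.sqrt (∑ j : M, v j)
            ≤ (Real.sqrt 8 * Real.sqrt (Real.log n)) * Real.sqrt (∑ j : M, v j) := by
              apply mul_le_mul_of_nonneg_right h8 (Real.sqrt_nonneg _)
          _ ≤ (c * Real.sqrt (Real.log n)) * Real.sqrt (∑ j : M, v j) := by
              apply mul_le_mul_of_nonneg_right h9 (Real.sqrt_nonneg _)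
          _ = c * (Real.sqrt (∑ j : M, v j) * Real.sqrt (Real.log n)) := by ring
      calc (1 - 1 / Real.exp 1) * ((∑ j : M, v j) / n) -
            c * Real.sqrt ((∑ j : M, v j) * Real.log n)
          ≤ (∑ j, v j * (1 - 1/(n:ℝ))^((H j).card))/n - 2*Real.sqrt (∑ j : M, v j) := by
            have := t3
            have := t4
            linarith
        _ ≤ ∑ j, v j * (if (a j = i ∧ ∀ w ∈ H j, a w ≠ i) then (1:ℝ) else 0) := t2
        _ ≤ ∑ j ∈ univ.filter (fun j => f j = i), v j := t1
    · -- W = 0 : any feasible allocation works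
      have hWeq : (∑ j : M, v j) = 0 := le_antisymm (not_lt.1 hWpos) hW0
      obtain ⟨f, _, hf⟩ := extend_coloring G n hΔ univ (fun _ => ⟨0, by omega⟩)
        (fun j hj => absurd (mem_univ j) hj)
      obtain ⟨hA1, hA2⟩ := builder f hf
      refine ⟨_, hA1, hA2, ?_⟩
      intro i
      rw [hWeq]
      rw [zero_div, mul_zero, zero_mul, Real.sqrt_zero, mul_zero, sub_zero]
      apply Finset.sum_nonneg
      intro j _
      exact hv0 j
end

section
/- Let (N, M, V, G) be a problem instance, N' ⊆ N a subset of agents, and A = ⟨A_1, ..., A_ℓ⟩ (ℓ ≥ 1) a partition of a subset M' ⊆ M into ℓ bundles, each of which is an independent set of G. Suppose that for each i ∈ N' there is a limit x_i > 0 such that v_i(j) ≤ x_i for all j ∈ M' and x_i ≤ v_i(M')/(ℓ + 2(|N'| − 1)). Then there exist pairwise disjoint bundles (B_i)_{i ∈ N'} with B_i ⊆ M', each B_i contained in a single set A_k of the partition (hence each B_i is an independent set of G), such that v_i(B_i) ≥ x_i for every i ∈ N'; moreover, the allocated items are taken from at most min(ℓ, |N'|) of the sets A_1, ..., A_ℓ.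 -/
open Finset

lemma bag_filling_aux {ι M : Type*} [Fintype ι] [DecidableEq ι]
    [Fintype M] [DecidableEq M]
    (ℓ : ℕ) (hℓ : 1 ≤ ℓ) (v : ι → M → ℝ) (hv : ∀ i j, 0 ≤ v i j)
    (x : ι → ℝ) :
    ∀ (n : ℕ) (N' : Finset ι), N'.card = n →
    ∀ (M' : Finset M) (A : Fin ℓ → Finset M),
      (∀ k k' : Fin ℓ, k ≠ k' → Disjoint (A k) (A k')) →
      Finset.univ.biUnion A = M' →
      (∀ i ∈ N', 0 < x i) →
      (∀ i ∈ N', ∀ j ∈ M', v i j ≤ x i) →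
      (∀ i ∈ N', x i ≤ (∑ j ∈ M', v i j) / ((ℓ : ℝ) + 2 * ((N'.card : ℝ) - 1))) →
      ∃ B : ι → Finset M,
        (∀ i ∈ N', B i ⊆ M') ∧
        (∀ i ∈ N', ∀ i' ∈ N', i ≠ i' → Disjoint (B i) (B i')) ∧
        (∀ i ∈ N', ∃ k : Fin ℓ, B i ⊆ A k) ∧
        (∀ i ∈ N', x i ≤ ∑ j ∈ B i, v i j) := by
  classical
  intro n
  induction n with
  | zero =>
    intro N' hcard M' A hdisj hcover hx hxv hxb
    have hN : N' = ∅ := Finset.card_eq_zero.mp hcard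
    subst hN
    exact ⟨fun _ => ∅, by simp, by simp, by simp, by simp⟩
  | succ n IH =>
    intro N' hcard M' A hdisj hcover hx hxv hxb
    have hNne : N'.Nonempty := Finset.card_pos.mp (by omega)
    haveI : Nonempty (Fin ℓ) := ⟨⟨0, hℓ⟩⟩
    have hAsub : ∀ k, A k ⊆ M' := by
      intro k
      rw [← hcover]
      exact Finset.subset_biUnion_of_mem A (Finset.mem_univ k)
    -- the family of candidate bundles
    set F : Finset (Finset M) :=
      M'.powerset.filter
        (fun S => (∃ k, S ⊆ A k) ∧ ∃ i ∈ N', x i ≤ ∑ j ∈ S, v i j) with hF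
    -- F is nonempty
    obtain ⟨i₁, hi₁⟩ := hNne
    have hd1 : (0:ℝ) < (ℓ : ℝ) + 2 * ((N'.card : ℝ) - 1) := by
      have : (1:ℝ) ≤ (N'.card : ℝ) := by
        exact_mod_cast Nat.one_le_iff_ne_zero.mpr (by omega)
      have hl : (1:ℝ) ≤ (ℓ:ℝ) := by exact_mod_cast hℓ
      linarith
    have hM'big : x i₁ * ((ℓ : ℝ) + 2 * ((N'.card : ℝ) - 1)) ≤ ∑ j ∈ M', v i₁ j := by
      have := hxb i₁ hi₁
      rw [le_div_iff₀ hd1] at this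
      exact this
    have hexk : ∃ k : Fin ℓ, x i₁ ≤ ∑ j ∈ A k, v i₁ j := by
      by_contra hcon
      push_neg at hcon
      have hsum : ∑ j ∈ M', v i₁ j = ∑ k : Fin ℓ, ∑ j ∈ A k, v i₁ j := by
        rw [← hcover]
        exact Finset.sum_biUnion (fun a _ b _ hab => hdisj a b hab)
      have hlt : ∑ k : Fin ℓ, ∑ j ∈ A k, v i₁ j < ∑ k : Fin ℓ, x i₁ :=
        Finset.sum_lt_sum_of_nonempty Finset.univ_nonempty (fun k _ => hcon k)
      have : ∑ k : Fin ℓ, x i₁ = (ℓ:ℝ) * x i₁ := by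
        simp [Finset.sum_const, mul_comm]
      rw [this] at hlt
      have hx1 : 0 < x i₁ := hx i₁ hi₁
      have h1 : (1:ℝ) ≤ (N'.card : ℝ) := by
        exact_mod_cast Nat.one_le_iff_ne_zero.mpr (by omega)
      nlinarith
    obtain ⟨k₁, hk₁⟩ := hexk
    have hFne : F.Nonempty := by
      refine ⟨A k₁, ?_⟩
      rw [hF, Finset.mem_filter, Finset.mem_powerset]
      exact ⟨hAsub k₁, ⟨k₁, le_refl _⟩, i₁, hi₁, hk₁⟩
    obtain ⟨S, hSF, hSmin⟩ := Finset.exists_min_image F Finset.card hFne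
    rw [hF, Finset.mem_filter, Finset.mem_powerset] at hSF
    obtain ⟨hSM', ⟨k₀, hSk₀⟩, i₀, hi₀, hxS⟩ := hSF
    have hSne : S.Nonempty := by
      rcases Finset.eq_empty_or_nonempty S with h | h
      · exfalso; rw [h] at hxS; simp at hxS
        exact absurd hxS (not_le.mpr (hx i₀ hi₀))
      · exact h
    obtain ⟨j₀, hj₀⟩ := hSne
    -- S is small for every agent
    have hsmall : ∀ i' ∈ N', ∑ j ∈ S, v i' j < 2 * x i' := by
      intro i' hi'
      have herase : ∑ j ∈ S.erase j₀, v i' j < x i' := by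
        by_contra h
        push_neg at h
        have hmem : S.erase j₀ ∈ F := by
          rw [hF, Finset.mem_filter, Finset.mem_powerset]
          exact ⟨(Finset.erase_subset _ _).trans hSM',
            ⟨k₀, (Finset.erase_subset _ _).trans hSk₀⟩, i', hi', h⟩
        have := hSmin _ hmem
        have hlt : (S.erase j₀).card < S.card := Finset.card_erase_lt_of_mem hj₀
        omega
      have hvj : v i' j₀ ≤ x i' := hxv i' hi' j₀ (hSM' hj₀)
      have hsplit : ∑ j ∈ S.erase j₀, v i' j + v i' j₀ = ∑ j ∈ S, v i' j :=
        Finset.sum_erase_add S _ hj₀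
      linarith
    -- set up the recursion
    set N'' := N'.erase i₀ with hN''
    have hcard'' : N''.card = n := by
      rw [hN'', Finset.card_erase_of_mem hi₀, hcard]
      omega
    set M'' := M' \ S with hM''
    set A' : Fin ℓ → Finset M := fun k => A k \ S with hA'
    have hdisj' : ∀ k k' : Fin ℓ, k ≠ k' → Disjoint (A' k) (A' k') := by
      intro k k' hkk'
      exact (hdisj k k' hkk').mono (Finset.sdiff_subset) (Finset.sdiff_subset)
    have hcover' : Finset.univ.biUnion A' = M'' := by
      rw [hA', hM'', ← hcover]
      ext j
      simp only [Finset.mem_biUnion, Finset.mem_sdiff, Finset.mem_univ, true_and]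
      constructor
      · rintro ⟨k, hk, hns⟩; exact ⟨⟨k, hk⟩, hns⟩
      · rintro ⟨⟨k, hk⟩, hns⟩; exact ⟨k, hk, hns⟩
    have hsub'' : M'' ⊆ M' := Finset.sdiff_subset
    have hmem'' : ∀ i ∈ N'', i ∈ N' := fun i hi => Finset.mem_of_mem_erase hi
    have hxb'' : ∀ i ∈ N'', x i ≤ (∑ j ∈ M'', v i j) /
        ((ℓ : ℝ) + 2 * ((N''.card : ℝ) - 1)) := by
      intro i' hi'
      have hi'N : i' ∈ N' := hmem'' i' hi'
      have hn1 : 1 ≤ n := by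
        have : N''.Nonempty := ⟨i', hi'⟩
        have := Finset.card_pos.mpr this
        omega
      have hd' : (0:ℝ) < (ℓ : ℝ) + 2 * ((N''.card : ℝ) - 1) := by
        rw [hcard'']
        have : (1:ℝ) ≤ (n : ℝ) := by exact_mod_cast hn1
        have hl : (1:ℝ) ≤ (ℓ:ℝ) := by exact_mod_cast hℓ
        linarith
      rw [le_div_iff₀ hd']
      have hsplit : ∑ j ∈ M'', v i' j = ∑ j ∈ M', v i' j - ∑ j ∈ S, v i' j := by
        rw [hM'']
        exact Finset.sum_sdiff_eq_sub hSM'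
      have hbig : x i' * ((ℓ : ℝ) + 2 * ((N'.card : ℝ) - 1)) ≤ ∑ j ∈ M', v i' j := by
        have := hxb i' hi'N
        rwa [le_div_iff₀ hd1] at this
      have hS2 : ∑ j ∈ S, v i' j < 2 * x i' := hsmall i' hi'N
      have hcast : (N'.card : ℝ) = (N''.card : ℝ) + 1 := by
        rw [hcard, hcard'']
        push_cast
        ring
      have hx' : 0 < x i' := hx i' hi'N
      rw [hsplit]
      nlinarith [hbig, hS2, hx', hcast]
    obtain ⟨B', hB'sub, hB'disj, hB'k, hB'val⟩ :=
      IH N'' hcard'' M'' A' hdisj' hcover'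
        (fun i hi => hx i (hmem'' i hi))
        (fun i hi j hj => hxv i (hmem'' i hi) j (hsub'' hj))
        hxb''
    refine ⟨fun i => if i = i₀ then S else B' i, ?_, ?_, ?_, ?_⟩
    · intro i hi
      by_cases h : i = i₀
      · simp only [h, if_pos rfl]; exact hSM'
      · simp only [if_neg h]
        exact (hB'sub i (Finset.mem_erase.mpr ⟨h, hi⟩)).trans hsub''
    · intro i hi i' hi' hne
      by_cases h : i = i₀
      · have h' : i' ≠ i₀ := fun hc => hne (h.trans hc.symm)
        simp only [h, if_pos rfl, if_neg h']
        exact Finset.disjoint_sdiff.mono_right (hB'sub i' (Finset.mem_erase.mpr ⟨h', hi'⟩))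
      · by_cases h' : i' = i₀
        · simp only [if_neg h, h', if_pos rfl]
          exact (Finset.disjoint_sdiff.mono_right
            (hB'sub i (Finset.mem_erase.mpr ⟨h, hi⟩))).symm
        · simp only [if_neg h, if_neg h']
          exact hB'disj i (Finset.mem_erase.mpr ⟨h, hi⟩) i'
            (Finset.mem_erase.mpr ⟨h', hi'⟩) hne
    · intro i hi
      by_cases h : i = i₀
      · simp only [h, if_pos rfl]; exact ⟨k₀, hSk₀⟩
      · simp only [if_neg h]
        obtain ⟨k, hk⟩ := hB'k i (Finset.mem_erase.mpr ⟨h, hi⟩)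
        exact ⟨k, hk.trans Finset.sdiff_subset⟩
    · intro i hi
      by_cases h : i = i₀
      · simp only [h, if_pos rfl]; exact h ▸ hxS
      · simp only [if_neg h]
        exact hB'val i (Finset.mem_erase.mpr ⟨h, hi⟩)

/-- Bag filling (Lemma on `alg:bag-filling`): given a partition
`A = ⟨A_1, …, A_ℓ⟩` (`ℓ ≥ 1`) of a set `M' ⊆ M` of items into bundles that are
each independent in the conflict graph `G`, a finite set `N'` of agents with
nonnegative additive valuations, and limits `x i > 0` such that every single
item of `M'` is worth at most `x i` to agent `i` and
`x i ≤ v_i(M') / (ℓ + 2(|N'| − 1))`, there are pairwise disjoint bundles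
`B i ⊆ M'`, each contained in a single part `A k` (hence independent in `G`),
with `v_i(B i) ≥ x i` for every `i ∈ N'`; moreover the allocated items are
taken from at most `min ℓ |N'|` of the parts. -/
theorem bag_filling {ι M : Type*} [Fintype ι] [DecidableEq ι]
    [Fintype M] [DecidableEq M] (G : SimpleGraph M)
    (ℓ : ℕ) (hℓ : 1 ≤ ℓ) (M' : Finset M) (A : Fin ℓ → Finset M)
    (hdisj : ∀ k k' : Fin ℓ, k ≠ k' → Disjoint (A k) (A k'))
    (hcover : Finset.univ.biUnion A = M')
    (hind : ∀ k : Fin ℓ, ∀ j ∈ A k, ∀ j' ∈ A k, ¬ G.Adj j j')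
    (N' : Finset ι) (v : ι → M → ℝ) (hv : ∀ i j, 0 ≤ v i j)
    (x : ι → ℝ) (hx : ∀ i ∈ N', 0 < x i)
    (hxv : ∀ i ∈ N', ∀ j ∈ M', v i j ≤ x i)
    (hxb : ∀ i ∈ N',
      x i ≤ (∑ j ∈ M', v i j) / ((ℓ : ℝ) + 2 * ((N'.card : ℝ) - 1))) :
    ∃ B : ι → Finset M,
      (∀ i ∈ N', ∀ i' ∈ N', i ≠ i' → Disjoint (B i) (B i')) ∧
      (∀ i ∈ N', ∃ k : Fin ℓ, B i ⊆ A k) ∧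
      (∀ i ∈ N', x i ≤ ∑ j ∈ B i, v i j) ∧
      {k : Fin ℓ | ∃ i ∈ N', (B i ∩ A k).Nonempty}.ncard ≤ min ℓ N'.card := by
  classical
  obtain ⟨B, hBsub, hBdisj, hBk, hBval⟩ :=
    bag_filling_aux ℓ hℓ v hv x N'.card N' rfl M' A hdisj hcover hx hxv hxb
  refine ⟨B, hBdisj, hBk, hBval, ?_⟩
  set f : ι → Fin ℓ := fun i =>
    if h : i ∈ N' then (hBk i h).choose else ⟨0, hℓ⟩ with hf
  have hsubset : {k : Fin ℓ | ∃ i ∈ N', (B i ∩ A k).Nonempty} ⊆ ↑(N'.image f) := by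
    intro k hk
    obtain ⟨i, hi, j, hj⟩ := hk
    rw [Finset.mem_inter] at hj
    have hBi : B i ⊆ A ((hBk i hi).choose) := (hBk i hi).choose_spec
    have hkk : k = (hBk i hi).choose := by
      by_contra hne
      exact Finset.disjoint_left.mp (hdisj _ _ hne) hj.2 (hBi hj.1)
    simp only [Finset.coe_image, Set.mem_image, Finset.mem_coe]
    exact ⟨i, hi, by rw [hf]; simp only [dif_pos hi]; exact hkk.symm⟩
  have h1 : {k : Fin ℓ | ∃ i ∈ N', (B i ∩ A k).Nonempty}.ncard ≤ (N'.image f).card := by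
    have := Set.ncard_le_ncard hsubset (Finset.finite_toSet _)
    rwa [Set.ncard_coe_finset] at this
  have h2 : {k : Fin ℓ | ∃ i ∈ N', (B i ∩ A k).Nonempty}.ncard ≤ ℓ := by
    have := Set.ncard_le_ncard (Set.subset_univ
      {k : Fin ℓ | ∃ i ∈ N', (B i ∩ A k).Nonempty}) Set.finite_univ
    rwa [Set.ncard_univ, Nat.card_eq_fintype_card, Fintype.card_fin] at this
  exact le_min h2 (h1.trans (Finset.card_image_le))
end
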